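/- arXiv:2510.10882 — 10 statements merged into one kernel-verified Lean document; each statement's English description precedes it below -/
import Mathlib

section
/- Let Γ be a countable group, let a be a Γ-flow on a nonempty compact Hausdorff space X, and let b be a free Γ-flow on a nonempty compact Hausdorff space Y. If a weakly contains b, then a is free. -/
/-- The `W`-local pattern of a finite family of sets `C = (C_1, …, C_k)` with respect to an
action `a : Γ → X → X`: the collection of sets `σ ⊆ {1,…,k} × W` such that
`⋂_{(i,γ) ∈ σ} γ·C_i ≠ ∅`. -/
def localPattern {Γ : Type*} {X : Type*} (a : Γ → X → X) (W : Finset Γ) {k : ℕ}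
    (C : Fin k → Set X) : Set (Set (Fin k × Γ)) :=
  {σ | (∀ p ∈ σ, p.2 ∈ W) ∧ (⋂ p ∈ σ, a p.2 '' C p.1).Nonempty}

/-- `𝒫_{W,k}(a)`: the set of all `W`-local patterns of closed covers of `X` by `k` closed
sets. -/
def coverPatterns {Γ : Type*} {X : Type*} [TopologicalSpace X] (a : Γ → X → X) (W : Finset Γ)
    (k : ℕ) : Set (Set (Set (Fin k × Γ))) :=
  {P | ∃ C : Fin k → Set X, (∀ i, IsClosed (C i)) ∧ (⋃ i, C i) = Set.univ ∧
    localPattern a W C = P}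

/-- `a` weakly contains `b`: every local pattern of a closed cover for `b` is the local
pattern of some closed cover for `a`. -/
def WeaklyContains {Γ : Type*} {X Y : Type*} [TopologicalSpace X] [TopologicalSpace Y]
    (a : Γ → X → X) (b : Γ → Y → Y) : Prop :=
  ∀ (W : Finset Γ) (k : ℕ), coverPatterns b W k ⊆ coverPatterns a W k

/-- If a Γ-flow `a` weakly contains a free Γ-flow `b`, then `a` is free. -/
theorem stmt0 {Γ : Type*} [Group Γ] [Countable Γ]
    {X Y : Type*} [TopologicalSpace X] [CompactSpace X] [T2Space X] [Nonempty X]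
    [TopologicalSpace Y] [CompactSpace Y] [T2Space Y] [Nonempty Y]
    (a : Γ → X → X) (b : Γ → Y → Y)
    (ha_one : ∀ x, a 1 x = x) (ha_mul : ∀ γ δ x, a (γ * δ) x = a γ (a δ x))
    (ha_cont : ∀ γ, Continuous (a γ))
    (hb_one : ∀ y, b 1 y = y) (hb_mul : ∀ γ δ y, b (γ * δ) y = b γ (b δ y))
    (hb_cont : ∀ γ, Continuous (b γ))
    (hb_free : ∀ (γ : Γ) (y : Y), b γ y = y → γ = 1)
    (hwc : WeaklyContains a b) :
    ∀ (γ : Γ) (x : X), a γ x = x → γ = 1 := by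
  classical
  intro γ x hfix
  by_contra hγ
  -- Construct a closed cover of Y with γ·C_i ∩ C_i = ∅
  have key : ∀ y : Y, ∃ K : Set Y, IsClosed K ∧ K ∈ nhds y ∧ ∀ z ∈ K, b γ z ∉ K := by
    intro y
    have hne : b γ y ≠ y := fun h => hγ (hb_free γ y h)
    obtain ⟨V', V, hV'o, hVo, hyV', hyV, hd⟩ := t2_separation hne
    have hU : (V ∩ (b γ) ⁻¹' V') ∈ nhds y :=
      (hVo.inter ((hb_cont γ).isOpen_preimage V' hV'o)).mem_nhds ⟨hyV, hyV'⟩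
    obtain ⟨K, ⟨hKn, hKc⟩, hKU⟩ := (closed_nhds_basis y).mem_iff.mp hU
    refine ⟨K, hKc, hKn, fun z hz hz' => ?_⟩
    have h1 : z ∈ (b γ) ⁻¹' V' := (hKU hz).2
    have h2 : b γ z ∈ V := (hKU hz').1
    exact Set.disjoint_left.mp hd h1 h2
  choose K hKc hKn hKd using key
  obtain ⟨t, ht⟩ := isCompact_univ.elim_nhds_subcover K (fun y _ => hKn y)
  set k : ℕ := t.card with hk
  set C : Fin k → Set Y := fun i => K (t.equivFin.symm i) with hC
  have hcov : (⋃ i, C i) = Set.univ := by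
    apply Set.eq_univ_of_forall
    intro z
    have := ht.2 (Set.mem_univ z)
    simp only [Set.mem_iUnion] at this ⊢
    obtain ⟨y, hy, hz⟩ := this
    exact ⟨t.equivFin ⟨y, hy⟩, by simpa [hC] using hz⟩
  set W : Finset Γ := {1, γ} with hW
  have hP : localPattern b W C ∈ coverPatterns b W k :=
    ⟨C, fun i => hKc _, hcov, rfl⟩
  obtain ⟨D, hDc, hDcov, hDpat⟩ := hwc W k hP
  obtain ⟨i, hxD⟩ : ∃ i, x ∈ D i := by
    have := hDcov ▸ Set.mem_univ x
    simpa [Set.mem_iUnion] using (hDcov.symm ▸ Set.mem_univ x : x ∈ ⋃ i, D i)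
  set σ : Set (Fin k × Γ) := {(i, 1), (i, γ)} with hσ
  have hσa : σ ∈ localPattern a W D := by
    constructor
    · intro p hp
      rcases hp with hp | hp <;> subst hp <;> simp [hW]
    · refine ⟨x, Set.mem_iInter₂.mpr fun p hp => ?_⟩
      rcases hp with hp | hp <;> subst hp
      · exact ⟨x, hxD, ha_one x⟩
      · exact ⟨x, hxD, hfix⟩
  rw [hDpat] at hσa
  obtain ⟨-, y0, hy0⟩ := hσa
  have h1 : y0 ∈ b 1 '' C i := Set.mem_iInter₂.mp hy0 (i, 1) (Or.inl rfl)
  have h2 : y0 ∈ b γ '' C i := Set.mem_iInter₂.mp hy0 (i, γ) (Or.inr rfl)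
  obtain ⟨c, hc, hc'⟩ := h1
  obtain ⟨c2, hc2, hc2'⟩ := h2
  rw [hb_one] at hc'
  subst hc'
  exact hKd _ c2 hc2 (hc2' ▸ hc)
end

section
/- Let X be a nonempty compact Hausdorff space of covering dimension at most n, and let ρ : X → X be a homeomorphism with no fixed points. Then there exist closed sets E_1, …, E_{2n+3} ⊆ X with X = E_1 ∪ … ∪ E_{2n+3} and ρ(E_i) ∩ E_i = ∅ for each i ∈ {1,…,2n+3}. -/
open Set

/-- A topological space `X` has covering dimension at most `n` if every finite open cover of
`X` admits a finite open refinement covering `X` in which every point lies in at most `n + 1`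
of the sets. -/
def CovDimLE (X : Type*) [TopologicalSpace X] (n : ℕ) : Prop :=
  ∀ (ι : Type) (_ : Finite ι) (U : ι → Set X), (∀ i, IsOpen (U i)) → (⋃ i, U i) = Set.univ →
    ∃ (κ : Type) (_ : Finite κ) (V : κ → Set X),
      (∀ j, IsOpen (V j)) ∧ (⋃ j, V j) = Set.univ ∧
      (∀ j, ∃ i, V j ⊆ U i) ∧
      (∀ x : X, Set.ncard {j | x ∈ V j} ≤ n + 1)

section AuxSection
variable {X : Type*} [TopologicalSpace X] [CompactSpace X] [T2Space X]

/-- Refine any finite open cover to one whose *closures* have order at most `n+1`. -/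
lemma refineShrink {n : ℕ} (hdim : CovDimLE X n) {p : ℕ} (G : Fin p → Set X)
    (hGo : ∀ a, IsOpen (G a)) (hGc : (⋃ a, G a) = Set.univ) :
    ∃ (m : ℕ) (W : Fin m → Set X),
      (∀ j, IsOpen (W j)) ∧ (⋃ j, W j) = Set.univ ∧
      (∀ y : X, Set.ncard {j | y ∈ closure (W j)} ≤ n + 1) ∧
      (∀ j, ∃ a, closure (W j) ⊆ G a) := by
  obtain ⟨κ, hκ, V, hVo, hVc, hVref, hVord⟩ := hdim (Fin p) inferInstance G hGo hGc
  haveI := hκ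
  haveI : Fintype κ := Fintype.ofFinite κ
  set e := Fintype.equivFin κ with he
  set m := Fintype.card κ with hm
  set V' : Fin m → Set X := fun j => V (e.symm j) with hV'
  have hV'o : ∀ j, IsOpen (V' j) := fun j => hVo _
  have hV'c : (⋃ j, V' j) = univ := by
    rw [← hVc]
    exact e.symm.surjective.iUnion_comp V
  obtain ⟨W, hWcov, hWo, hWcl⟩ := exists_subset_iUnion_closure_subset isClosed_univ hV'o
      (fun x _ => Set.toFinite _) (by rw [hV'c])
  refine ⟨m, W, hWo, univ_subset_iff.mp hWcov, ?_, ?_⟩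
  · intro y
    have hsub : {j | y ∈ closure (W j)} ⊆ {j | y ∈ V' j} := fun j hj => hWcl j hj
    have h1 : {j | y ∈ V' j} = e '' {i | y ∈ V i} := by
      ext j
      simp only [mem_setOf_eq, mem_image, hV']
      constructor
      · intro h; exact ⟨e.symm j, h, by simp⟩
      · rintro ⟨i, hi, rfl⟩; simpa using hi
    calc Set.ncard {j | y ∈ closure (W j)} ≤ Set.ncard {j | y ∈ V' j} :=
          Set.ncard_le_ncard hsub (Set.toFinite _)
      _ = Set.ncard (e '' {i | y ∈ V i}) := by rw [h1]
      _ ≤ Set.ncard {i | y ∈ V i} := Set.ncard_image_le (Set.toFinite _)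
      _ ≤ n + 1 := hVord y
  · intro j
    obtain ⟨a, ha⟩ := hVref (e.symm j)
    exact ⟨a, (hWcl j).trans ha⟩
/-- The descent step: an open cover by `M+1` sets whose closures have order `≤ n+1` and are
`ρ`-free can be replaced by one with `M` sets, provided `M ≥ 2n+3`. -/
lemma stepDown {n : ℕ} (hdim : CovDimLE X n) (ρ : X ≃ₜ X) {M : ℕ} (hM : 2 * n + 3 ≤ M)
    (W : Fin (M + 1) → Set X)
    (hWo : ∀ i, IsOpen (W i)) (hWc : (⋃ i, W i) = Set.univ)
    (hord : ∀ y : X, Set.ncard {i | y ∈ closure (W i)} ≤ n + 1)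
    (hfree : ∀ i, ∀ z ∈ closure (W i), ρ z ∉ closure (W i)) :
    ∃ W' : Fin M → Set X,
      (∀ i, IsOpen (W' i)) ∧ (⋃ i, W' i) = Set.univ ∧
      (∀ y : X, Set.ncard {i | y ∈ closure (W' i)} ≤ n + 1) ∧
      (∀ i, ∀ z ∈ closure (W' i), ρ z ∉ closure (W' i)) := by
  classical
  set D : Fin (M + 1) → Set X := fun i => closure (W i) with hD
  have hcov : ∀ x : X, ∃ i, x ∈ W i := by
    intro x
    have : x ∈ ⋃ i, W i := by rw [hWc]; trivial
    exact mem_iUnion.mp this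
  set J : X → Set (Fin (M + 1)) := fun x => {i | ρ x ∈ D i} with hJ
  set K : X → Set (Fin (M + 1)) := fun x => {i | ρ.symm x ∈ D i} with hK
  have hJK : ∀ x : X, ∃ i : Fin M, i.castSucc ∉ J x ∪ K x := by
    intro x
    by_contra h
    push_neg at h
    have hsub : Set.range (Fin.castSucc : Fin M → Fin (M + 1)) ⊆ J x ∪ K x := by
      rintro _ ⟨i, rfl⟩; exact h i
    have h1 : (Set.range (Fin.castSucc : Fin M → Fin (M + 1))).ncard = M := by
      rw [← Set.image_univ, Set.ncard_image_of_injective _ (Fin.castSucc_injective M),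
        Set.ncard_univ, Nat.card_eq_fintype_card, Fintype.card_fin]
    have h2 : (J x ∪ K x).ncard ≤ (J x).ncard + (K x).ncard := Set.ncard_union_le _ _
    have h3 : (J x).ncard ≤ n + 1 := hord (ρ x)
    have h4 : (K x).ncard ≤ n + 1 := hord (ρ.symm x)
    have h5 := Set.ncard_le_ncard hsub (Set.toFinite (J x ∪ K x))
    rw [h1] at h5
    omega
  set tgt : X → Fin M := fun x =>
    if h : ∃ i, i ≠ Fin.last M ∧ x ∈ W i then
      (Classical.choose h).castPred (Classical.choose_spec h).1
    else Classical.choose (hJK x) with htgt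
  have htgt1 : ∀ x (h : ∃ i, i ≠ Fin.last M ∧ x ∈ W i), x ∈ W (Fin.castSucc (tgt x)) := by
    intro x h
    have := Classical.choose_spec h
    simp only [htgt, dif_pos h, Fin.castSucc_castPred]
    exact this.2
  have htgt2 : ∀ x, (¬∃ i, i ≠ Fin.last M ∧ x ∈ W i) → Fin.castSucc (tgt x) ∉ J x ∪ K x := by
    intro x h
    simp only [htgt, dif_neg h]
    exact Classical.choose_spec (hJK x)
  have hlast : ∀ x, (¬∃ i, i ≠ Fin.last M ∧ x ∈ W i) → x ∈ W (Fin.last M) := by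
    intro x h
    push_neg at h
    obtain ⟨i, hi⟩ := hcov x
    by_cases hil : i = Fin.last M
    · rwa [hil] at hi
    · exact absurd hi (h i hil)
  set O : X → Set X := fun x =>
    (⋂ i ∈ {i | x ∈ W i}, W i) ∩ (ρ ⁻¹' (⋃ i ∈ (J x)ᶜ, D i))ᶜ ∩
      (ρ.symm ⁻¹' (⋃ i ∈ (K x)ᶜ, D i))ᶜ with hO
  have hOopen : ∀ x, IsOpen (O x) := by
    intro x
    refine (((Set.toFinite _).isOpen_biInter fun i _ => hWo i).inter ?_).inter ?_
    · exact (((Set.toFinite _).isClosed_biUnion fun i _ => isClosed_closure).preimage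
        ρ.continuous).isOpen_compl
    · exact (((Set.toFinite _).isClosed_biUnion fun i _ => isClosed_closure).preimage
        ρ.symm.continuous).isOpen_compl
  have hxO : ∀ x, x ∈ O x := by
    intro x
    refine ⟨⟨?_, ?_⟩, ?_⟩
    · exact mem_biInter fun i hi => hi
    · intro hx
      simp only [mem_preimage, mem_iUnion, exists_prop] at hx
      obtain ⟨i, hiJ, hiD⟩ := hx
      exact hiJ hiD
    · intro hx
      simp only [mem_preimage, mem_iUnion, exists_prop] at hx
      obtain ⟨i, hiK, hiD⟩ := hx
      exact hiK hiD
  have hO1 : ∀ x z, z ∈ O x → ∀ i, x ∈ W i → z ∈ W i := by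
    intro x z hz i hi
    exact mem_iInter₂.mp hz.1.1 i hi
  have hO2 : ∀ x z, z ∈ O x → ∀ i, ρ z ∈ D i → ρ x ∈ D i := by
    intro x z hz i hi
    by_contra hxi
    exact hz.1.2 (mem_preimage.mpr (mem_biUnion hxi hi))
  have hO3 : ∀ x z, z ∈ O x → ∀ i, ρ.symm z ∈ D i → ρ.symm x ∈ D i := by
    intro x z hz i hi
    by_contra hxi
    exact hz.2 (mem_preimage.mpr (mem_biUnion hxi hi))
  -- finite subcover of the `O x`
  obtain ⟨s, hs⟩ := isCompact_univ.elim_finite_subcover O hOopen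
    (fun x _ => mem_iUnion.mpr ⟨x, hxO x⟩)
  set p := s.card with hp
  set eqv := s.equivFin with heqv
  set G : Fin p → Set X := fun a => O ((eqv.symm a : { x // x ∈ s }) : X) with hG
  have hGo : ∀ a, IsOpen (G a) := fun a => hOopen _
  have hGc : (⋃ a, G a) = univ := by
    apply univ_subset_iff.mp
    intro x _
    obtain ⟨y, hys, hxy⟩ := by
      have := hs (mem_univ x)
      simpa using this
    exact mem_iUnion.mpr ⟨eqv ⟨y, hys⟩, by simpa [hG] using hxy⟩
  obtain ⟨m', R, hRo, hRc, hRord, hRref⟩ := refineShrink hdim G hGo hGc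
  -- centers
  have hcenter : ∀ j, ∃ x : X, closure (R j) ⊆ O x := by
    intro j
    obtain ⟨a, ha⟩ := hRref j
    exact ⟨_, ha⟩
  choose c hc using hcenter
  set W' : Fin M → Set X := fun i => ⋃ j ∈ {j | tgt (c j) = i}, R j with hW'
  have hclW' : ∀ i, closure (W' i) = ⋃ j ∈ {j | tgt (c j) = i}, closure (R j) :=
    fun i => (Set.toFinite _).closure_biUnion _
  refine ⟨W', fun i => isOpen_biUnion fun j _ => hRo j, ?_, ?_, ?_⟩
  · apply univ_subset_iff.mp
    intro x _
    have : x ∈ ⋃ j, R j := by rw [hRc]; trivial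
    obtain ⟨j, hj⟩ := mem_iUnion.mp this
    exact mem_iUnion.mpr ⟨tgt (c j), mem_biUnion rfl hj⟩
  · intro y
    have hsub : {i | y ∈ closure (W' i)} ⊆ (fun j => tgt (c j)) '' {j | y ∈ closure (R j)} := by
      intro i hi
      rw [mem_setOf_eq, hclW'] at hi
      obtain ⟨j, hj1, hj2⟩ := mem_iUnion₂.mp hi
      exact ⟨j, hj2, hj1⟩
    calc Set.ncard {i | y ∈ closure (W' i)}
        ≤ Set.ncard ((fun j => tgt (c j)) '' {j | y ∈ closure (R j)}) :=
          Set.ncard_le_ncard hsub (Set.toFinite _)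
      _ ≤ Set.ncard {j | y ∈ closure (R j)} := Set.ncard_image_le (Set.toFinite _)
      _ ≤ n + 1 := hRord y
  · -- freeness
    intro i z hz hρz
    rw [hclW'] at hz hρz
    obtain ⟨l, hl, hzl⟩ := mem_iUnion₂.mp hz
    obtain ⟨l', hl', hzl'⟩ := mem_iUnion₂.mp hρz
    rw [mem_setOf_eq] at hl hl'
    have zO : z ∈ O (c l) := hc l hzl
    have wO : ρ z ∈ O (c l') := hc l' hzl'
    by_cases h1 : ∃ i0, i0 ≠ Fin.last M ∧ (c l) ∈ W i0 <;>
      by_cases h2 : ∃ i0, i0 ≠ Fin.last M ∧ (c l') ∈ W i0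
    · -- both first kind
      have hz1 : z ∈ W (Fin.castSucc i) := by
        have := hO1 _ _ zO _ (htgt1 _ h1); rwa [hl] at this
      have hz2 : ρ z ∈ W (Fin.castSucc i) := by
        have := hO1 _ _ wO _ (htgt1 _ h2); rwa [hl'] at this
      exact hfree _ z (subset_closure hz1) (subset_closure hz2)
    · -- l first kind, l' second kind
      have hz1 : z ∈ W (Fin.castSucc i) := by
        have := hO1 _ _ zO _ (htgt1 _ h1); rwa [hl] at this
      have hKn : Fin.castSucc i ∉ K (c l') := by
        have := htgt2 _ h2; rw [hl'] at this
        exact fun hk => this (Or.inr hk)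
      apply hKn
      have : ρ.symm (ρ z) ∈ D (Fin.castSucc i) := by
        rw [ρ.symm_apply_apply]
        exact subset_closure hz1
      exact hO3 _ _ wO _ this
    · -- l second kind, l' first kind
      have hz2 : ρ z ∈ W (Fin.castSucc i) := by
        have := hO1 _ _ wO _ (htgt1 _ h2); rwa [hl'] at this
      have hJn : Fin.castSucc i ∉ J (c l) := by
        have := htgt2 _ h1; rw [hl] at this
        exact fun hk => this (Or.inl hk)
      exact hJn (hO2 _ _ zO _ (subset_closure hz2))
    · -- both second kind
      have hz1 : z ∈ W (Fin.last M) := hO1 _ _ zO _ (hlast _ h1)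
      have hz2 : ρ z ∈ W (Fin.last M) := hO1 _ _ wO _ (hlast _ h2)
      exact hfree _ z (subset_closure hz1) (subset_closure hz2)


end AuxSection

/-- If `X` is a nonempty compact Hausdorff space of covering dimension at most `n` and
`ρ : X → X` is a fixed-point-free homeomorphism, then `X` is covered by `2n + 3` closed sets
`E_i` with `ρ(E_i) ∩ E_i = ∅` for each `i`. -/
theorem stmt2 {X : Type*} [TopologicalSpace X] [CompactSpace X] [T2Space X] [Nonempty X]
    (n : ℕ) (hdim : CovDimLE X n) (ρ : X ≃ₜ X) (hρ : ∀ x, ρ x ≠ x) :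
    ∃ E : Fin (2 * n + 3) → Set X,
      (∀ i, IsClosed (E i)) ∧ (⋃ i, E i) = Set.univ ∧
      ∀ i, (ρ '' E i) ∩ E i = ∅ := by
  classical
  -- basic free open neighborhoods
  have hbasic : ∀ x : X, ∃ U : Set X, IsOpen U ∧ x ∈ U ∧ ∀ z ∈ U, ρ z ∉ U := by
    intro x
    obtain ⟨u, v, hu, hv, hρxu, hxv, huv⟩ := t2_separation (hρ x)
    refine ⟨v ∩ ρ ⁻¹' u, hv.inter (hu.preimage ρ.continuous), ⟨hxv, hρxu⟩, ?_⟩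
    rintro z ⟨_, hz2⟩ ⟨hρz1, _⟩
    exact Set.disjoint_left.mp huv (Set.mem_preimage.mp hz2) hρz1
  choose U hUo hUx hUfree using hbasic
  obtain ⟨s, hs⟩ := isCompact_univ.elim_finite_subcover U hUo
    (fun x _ => Set.mem_iUnion.mpr ⟨x, hUx x⟩)
  set p := s.card with hp
  set eqv := s.equivFin with heqv
  set G : Fin p → Set X := fun a => U ((eqv.symm a : { x // x ∈ s }) : X) with hG
  have hGo : ∀ a, IsOpen (G a) := fun a => hUo _
  have hGc : (⋃ a, G a) = Set.univ := by
    apply Set.univ_subset_iff.mp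
    intro x _
    obtain ⟨y, hys, hxy⟩ := by
      have := hs (Set.mem_univ x)
      simpa using this
    exact Set.mem_iUnion.mpr ⟨eqv ⟨y, hys⟩, by simpa [hG] using hxy⟩
  obtain ⟨m, W, hWo, hWc, hWord, hWref⟩ := refineShrink hdim G hGo hGc
  have hWfree : ∀ j, ∀ z ∈ closure (W j), ρ z ∉ closure (W j) := by
    intro j z hz hρz
    obtain ⟨a, ha⟩ := hWref j
    exact hUfree _ z (ha hz) (ha hρz)
  clear hWref hGc hGo hG heqv hp hs hUfree hUx hUo
  -- descent
  induction m using Nat.strong_induction_on with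
  | _ m IH =>
    by_cases hm : m ≤ 2 * n + 3
    · refine ⟨fun i => if h : (i : ℕ) < m then closure (W ⟨i, h⟩) else ∅, ?_, ?_, ?_⟩
      · intro i
        by_cases h : (i : ℕ) < m
        · simp only [dif_pos h]; exact isClosed_closure
        · simp only [dif_neg h]; exact isClosed_empty
      · apply Set.univ_subset_iff.mp
        intro x _
        have : x ∈ ⋃ j, W j := by rw [hWc]; trivial
        obtain ⟨j, hj⟩ := Set.mem_iUnion.mp this
        have hjlt : (j : ℕ) < 2 * n + 3 := lt_of_lt_of_le j.2 hm
        refine Set.mem_iUnion.mpr ⟨⟨j, hjlt⟩, ?_⟩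
        have h : ((⟨j, hjlt⟩ : Fin (2 * n + 3)) : ℕ) < m := j.2
        simp only [dif_pos h]
        exact subset_closure (by simpa using hj)
      · intro i
        by_cases h : (i : ℕ) < m
        · simp only [dif_pos h]
          apply Set.eq_empty_iff_forall_notMem.mpr
          rintro z ⟨⟨w, hw, rfl⟩, hz⟩
          exact hWfree _ w hw hz
        · simp only [dif_neg h, Set.image_empty, Set.empty_inter]
    · -- m ≥ 2n+4
      obtain ⟨M, rfl⟩ : ∃ M, m = M + 1 := ⟨m - 1, by omega⟩
      obtain ⟨W', hW'o, hW'c, hW'ord, hW'free⟩ :=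
        stepDown hdim ρ (by omega : 2 * n + 3 ≤ M) W hWo hWc hWord hWfree
      exact IH M (by omega) W' hW'o hW'c hW'ord hW'free
end

section
/- Let σ : [0,1] → [0,1] be σ(x) = 1 − x. (a) The tent map f : [0,1] → [0,1], defined by f(x) = 2x for x ≤ 1/2 and f(x) = 2 − 2x for x ≥ 1/2, is a continuous surjection satisfying f ∘ σ = f; hence the ℤ-flow n ↦ σ^n on [0,1] factors onto the trivial ℤ-flow on [0,1]. (b) For every homeomorphism ρ of [0,1] there exists x ∈ [0,1] with |ρ(σ(ρ⁻¹(x))) − x| = 1; hence the trivial ℤ-flow on [0,1] is not in the closure (in the topology of uniform convergence) of the conjugacy class of the flow generated by σ. -/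
open unitInterval


lemma tent_mem (x : I) : 1 - |2 * (x : ℝ) - 1| ∈ I := by
  have h0 := x.2.1; have h1 := x.2.2
  constructor
  · rw [sub_nonneg, abs_le]; constructor <;> nlinarith
  · have := abs_nonneg (2 * (x : ℝ) - 1); linarith

noncomputable def tent (x : I) : I := ⟨1 - |2 * (x : ℝ) - 1|, tent_mem x⟩

lemma endpoints (ρ : I ≃ₜ I) : |(↑(ρ 0) : ℝ) - ↑(ρ 1)| = 1 := by
  haveI : Fact ((0:ℝ) ≤ 1) := ⟨zero_le_one⟩
  haveI : Inhabited I := ⟨0⟩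
  have hmono : StrictMono ρ ∨ StrictAnti ρ :=
    ρ.continuous.strictMono_of_inj_boundedOrder' ρ.injective
  have hbot : (⊥ : I) = 0 := rfl
  have htop : (⊤ : I) = 1 := rfl
  rcases hmono with h | h
  · have h0 : ρ 0 = 0 := by
      have : ρ 0 ≤ ρ (ρ.symm 0) := h.monotone bot_le
      rw [ρ.apply_symm_apply] at this
      exact le_antisymm this bot_le
    have h1 : ρ 1 = 1 := by
      have : ρ (ρ.symm 1) ≤ ρ 1 := h.monotone le_top
      rw [ρ.apply_symm_apply] at this
      exact le_antisymm le_top this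
    rw [h0, h1]; norm_num
  · have h0 : ρ 0 = 1 := by
      have : ρ (ρ.symm 1) ≤ ρ 0 := h.antitone bot_le
      rw [ρ.apply_symm_apply] at this
      exact le_antisymm le_top this
    have h1 : ρ 1 = 0 := by
      have : ρ 1 ≤ ρ (ρ.symm 0) := h.antitone le_top
      rw [ρ.apply_symm_apply] at this
      exact le_antisymm this bot_le
    rw [h0, h1]; norm_num

/-- Let `σ : [0,1] → [0,1]` be `σ(x) = 1 − x` (this is `unitInterval.symm`).
(a) The tent map `f` (given by `f(x) = 2x` for `x ≤ 1/2` and `f(x) = 2 − 2x` for `x ≥ 1/2`)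
is a continuous surjection of `[0,1]` with `f ∘ σ = f`; hence the ℤ-flow generated by `σ`
factors onto the trivial ℤ-flow on `[0,1]`.
(b) For every homeomorphism `ρ` of `[0,1]` there is `x` with `|ρ(σ(ρ⁻¹(x))) − x| = 1`; hence
the trivial ℤ-flow is not in the uniform closure of the conjugacy class of the flow
generated by `σ`. -/
theorem stmt4 :
    (∃ f : I → I, Continuous f ∧ Function.Surjective f ∧
      (∀ x : I, (x : ℝ) ≤ 1 / 2 → (f x : ℝ) = 2 * (x : ℝ)) ∧
      (∀ x : I, 1 / 2 ≤ (x : ℝ) → (f x : ℝ) = 2 - 2 * (x : ℝ)) ∧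
      (∀ x : I, f (unitInterval.symm x) = f x)) ∧
    (∀ ρ : I ≃ₜ I, ∃ x : I,
      |(↑(ρ (unitInterval.symm (ρ.symm x))) : ℝ) - (x : ℝ)| = 1) ∧
    ¬ (∀ ε > (0 : ℝ), ∃ ρ : I ≃ₜ I, ∀ x : I,
      |(↑(ρ (unitInterval.symm (ρ.symm x))) : ℝ) - (x : ℝ)| < ε) := by
  have key : ∀ ρ : I ≃ₜ I, ∃ x : I,
      |(↑(ρ (unitInterval.symm (ρ.symm x))) : ℝ) - (x : ℝ)| = 1 := by
    intro ρ
    refine ⟨ρ 1, ?_⟩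
    rw [ρ.symm_apply_apply, symm_one]
    exact endpoints ρ
  refine ⟨⟨tent, ?_, ?_, ?_, ?_, ?_⟩, key, ?_⟩
  · apply Continuous.subtype_mk
    fun_prop
  · intro y
    have hy0 := y.2.1; have hy1 := y.2.2
    refine ⟨⟨(y : ℝ) / 2, by linarith, by linarith⟩, ?_⟩
    ext
    show 1 - |2 * ((y:ℝ)/2) - 1| = y
    rw [abs_of_nonpos (by linarith)]; ring
  · intro x hx
    show 1 - |2 * (x:ℝ) - 1| = 2 * x
    rw [abs_of_nonpos (by linarith)]; ring
  · intro x hx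
    show 1 - |2 * (x:ℝ) - 1| = 2 - 2 * x
    rw [abs_of_nonneg (by linarith)]; ring
  · intro x
    ext
    show 1 - |2 * ((σ x : ℝ)) - 1| = 1 - |2 * (x:ℝ) - 1|
    rw [coe_symm_eq, ← abs_neg]
    ring_nf
  · intro h
    obtain ⟨ρ, hρ⟩ := h 1 one_pos
    obtain ⟨x, hx⟩ := key ρ
    exact absurd hx (ne_of_lt (hρ x))
end

section
/- Let Γ be a countable group, let X be a nonempty compact metric space, and let a, b be actions of Γ on X by homeomorphisms. Suppose b lies in the closure of the conjugacy class of a in the uniform topology; that is, for every finite W ⊆ Γ and every ε > 0 there exists a homeomorphism ρ of X such that d(ρ(a(γ)(ρ⁻¹(x))), b(γ)(x)) < ε for all γ ∈ W and all x ∈ X. Then a weakly contains b. -/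
/-- In a compact metric space, a finite (here: arbitrary) family of closed sets with empty
intersection has empty intersection of `η`-cthickenings for some `η > 0`. -/
lemma aux_thick_empty {X : Type*} [MetricSpace X] [CompactSpace X] {ι : Type*} {s : Set ι}
    (F : ι → Set X) (hF : ∀ j ∈ s, IsClosed (F j)) (h : (⋂ j ∈ s, F j) = ∅) :
    ∃ η > (0 : ℝ), (⋂ j ∈ s, Metric.cthickening η (F j)) = ∅ := by
  by_contra hcon
  push_neg at hcon
  set G : ℕ → Set X := fun n => ⋂ j ∈ s, Metric.cthickening (1 / (n + 1)) (F j) with hG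
  have hGn : ∀ n, (G n).Nonempty := fun n => hcon _ (by positivity)
  have hGd : ∀ n, G (n + 1) ⊆ G n := by
    intro n
    refine Set.iInter₂_mono fun j _ => Metric.cthickening_mono ?_ _
    refine one_div_le_one_div_of_le (by positivity) ?_
    push_cast
    linarith
  have hGcl : ∀ n, IsClosed (G n) := fun n =>
    isClosed_biInter fun j _ => Metric.isClosed_cthickening
  obtain ⟨x, hx⟩ := IsCompact.nonempty_iInter_of_sequence_nonempty_isCompact_isClosed G hGd hGn
    (hGcl 0).isCompact hGcl
  have hxF : ∀ j ∈ s, x ∈ F j := by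
    intro j hj
    have hxc : x ∈ closure (F j) := by
      rw [Metric.closure_eq_iInter_cthickening]
      refine Set.mem_iInter₂.2 fun δ hδ => ?_
      obtain ⟨n, hn⟩ := exists_nat_one_div_lt hδ
      have hxn : x ∈ G n := Set.mem_iInter.1 hx n
      have := Set.mem_iInter₂.1 hxn j hj
      exact Metric.cthickening_mono hn.le _ this
    rwa [(hF j hj).closure_eq] at hxc
  have : x ∈ ⋂ j ∈ s, F j := Set.mem_iInter₂.2 hxF
  rw [h] at this
  exact this

lemma aux_mem_cthickening {X : Type*} [MetricSpace X] [CompactSpace X] {E : Set X}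
    (hE : IsClosed E) {δ : ℝ} (hδ : 0 ≤ δ) {w : X} (hw : w ∈ Metric.cthickening δ E) :
    ∃ y ∈ E, dist w y ≤ δ := by
  rw [hE.cthickening_eq_biUnion_closedBall hδ] at hw
  obtain ⟨y, hy, hwy⟩ := Set.mem_iUnion₂.1 hw
  exact ⟨y, hy, Metric.mem_closedBall.1 hwy⟩

/-- If `b` lies in the uniform closure of the conjugacy class of `a` (actions of a countable
group `Γ` on a nonempty compact metric space `X` by homeomorphisms), then `a` weakly
contains `b`. -/
theorem stmt5 {Γ : Type*} [Group Γ] [Countable Γ]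
    {X : Type*} [MetricSpace X] [CompactSpace X] [Nonempty X]
    (a b : Γ → X → X)
    (ha_one : ∀ x, a 1 x = x) (ha_mul : ∀ γ δ x, a (γ * δ) x = a γ (a δ x))
    (ha_cont : ∀ γ, Continuous (a γ))
    (hb_one : ∀ x, b 1 x = x) (hb_mul : ∀ γ δ x, b (γ * δ) x = b γ (b δ x))
    (hb_cont : ∀ γ, Continuous (b γ))
    (hclose : ∀ W : Finset Γ, ∀ ε > (0 : ℝ), ∃ ρ : X ≃ₜ X,
      ∀ γ ∈ W, ∀ x : X, dist (ρ (a γ (ρ.symm x))) (b γ x) < ε) :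
    WeaklyContains a b := by
  classical
  intro W k P hP
  obtain ⟨C, hCcl, hCcov, hCP⟩ := hP
  -- the images b γ '' C i are closed
  have hbimg_cl : ∀ (i : Fin k) (γ : Γ), IsClosed (b γ '' C i) := fun i γ =>
    (((hCcl i).isCompact).image (hb_cont γ)).isClosed
  -- Step 1: a uniform η > 0 such that for all "bad" patterns σ the η-thickenings of the
  -- corresponding images still have empty intersection.
  have key : ∃ η > (0 : ℝ), ∀ σ : Set (Fin k × Γ), (∀ p ∈ σ, p.2 ∈ W) →
      (⋂ p ∈ σ, b p.2 '' C p.1) = ∅ →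
      (⋂ p ∈ σ, Metric.cthickening η (b p.2 '' C p.1)) = ∅ := by
    set g : Finset (Fin k × Γ) → ℝ := fun τ =>
      if hτ : (⋂ p ∈ (τ : Set (Fin k × Γ)), b p.2 '' C p.1) = ∅ then
        (aux_thick_empty (fun p : Fin k × Γ => b p.2 '' C p.1)
          (fun p _ => hbimg_cl p.1 p.2) hτ).choose
      else 1 with hg
    have hgpos : ∀ τ, 0 < g τ := by
      intro τ
      rw [hg]
      dsimp only
      split
      · next hτ =>
        exact (aux_thick_empty (fun p : Fin k × Γ => b p.2 '' C p.1)
          (fun p _ => hbimg_cl p.1 p.2) hτ).choose_spec.1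
      · exact one_pos
    have hgspec : ∀ τ : Finset (Fin k × Γ),
        (⋂ p ∈ (τ : Set (Fin k × Γ)), b p.2 '' C p.1) = ∅ →
        (⋂ p ∈ (τ : Set (Fin k × Γ)), Metric.cthickening (g τ) (b p.2 '' C p.1)) = ∅ := by
      intro τ hτ
      have h2 := (aux_thick_empty (fun p : Fin k × Γ => b p.2 '' C p.1)
          (fun p _ => hbimg_cl p.1 p.2) hτ).choose_spec.2
      have hgτ : g τ = (aux_thick_empty (fun p : Fin k × Γ => b p.2 '' C p.1)
          (fun p _ => hbimg_cl p.1 p.2) hτ).choose := by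
        rw [hg]
        exact dif_pos hτ
      rw [hgτ]
      exact h2
    set S : Finset (Finset (Fin k × Γ)) :=
      ((Finset.univ : Finset (Fin k)) ×ˢ W).powerset with hS
    have hSne : (insert (1 : ℝ) (S.image g)).Nonempty := ⟨1, Finset.mem_insert_self _ _⟩
    refine ⟨(insert (1 : ℝ) (S.image g)).min' hSne, ?_, ?_⟩
    · have hmem := (insert (1 : ℝ) (S.image g)).min'_mem hSne
      rcases Finset.mem_insert.1 hmem with h | h
      · rw [h]; exact one_pos
      · obtain ⟨τ, _, hτ⟩ := Finset.mem_image.1 h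
        rw [← hτ]; exact hgpos τ
    · intro σ h1 hσ
      have hfin : σ.Finite := by
        refine Set.Finite.subset (Set.finite_univ.prod W.finite_toSet) ?_
        intro p hp
        exact ⟨Set.mem_univ _, h1 p hp⟩
      set τ := hfin.toFinset with hτdef
      have hτcoe : (τ : Set (Fin k × Γ)) = σ := hfin.coe_toFinset
      have hτS : τ ∈ S := by
        rw [hS, Finset.mem_powerset]
        intro p hp
        rw [Finset.mem_product]
        refine ⟨Finset.mem_univ _, h1 p ?_⟩
        rw [← hτcoe]
        exact_mod_cast hp
      have hle : (insert (1 : ℝ) (S.image g)).min' hSne ≤ g τ :=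
        Finset.min'_le _ _ (Finset.mem_insert_of_mem (Finset.mem_image_of_mem g hτS))
      have hemp : (⋂ p ∈ (τ : Set (Fin k × Γ)),
          Metric.cthickening (g τ) (b p.2 '' C p.1)) = ∅ := by
        apply hgspec
        rw [hτcoe]; exact hσ
      rw [hτcoe] at hemp
      rw [← Set.subset_empty_iff, ← hemp]
      exact Set.iInter₂_mono fun p _ => Metric.cthickening_mono hle _
  obtain ⟨η, hηpos, hηspec⟩ := key
  -- Step 2: uniform continuity modulus δ for all b γ, γ ∈ W
  have hub : ∀ γ : Γ, ∃ d : ℝ, 0 < d ∧ ∀ x y : X, dist x y ≤ d →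
      dist (b γ x) (b γ y) ≤ η / 2 := by
    intro γ
    have huc := CompactSpace.uniformContinuous_of_continuous (hb_cont γ)
    rw [Metric.uniformContinuous_iff] at huc
    obtain ⟨d, hd, hdd⟩ := huc (η / 2) (by positivity)
    exact ⟨d / 2, by positivity, fun x y hxy =>
      le_of_lt (hdd (lt_of_le_of_lt hxy (by linarith)))⟩
  choose df hdf using hub
  have hFne : (insert (1 : ℝ) (W.image df)).Nonempty := ⟨1, Finset.mem_insert_self _ _⟩
  set δ : ℝ := (insert (1 : ℝ) (W.image df)).min' hFne with hδdef
  have hδpos : 0 < δ := by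
    have hmem := (insert (1 : ℝ) (W.image df)).min'_mem hFne
    rcases Finset.mem_insert.1 hmem with h | h
    · rw [hδdef, h]; exact one_pos
    · obtain ⟨γ, _, hγ⟩ := Finset.mem_image.1 h
      rw [hδdef, ← hγ]; exact (hdf γ).1
  have hδle : ∀ γ ∈ W, δ ≤ df γ := fun γ hγ =>
    Finset.min'_le _ _ (Finset.mem_insert_of_mem (Finset.mem_image_of_mem df hγ))
  -- Step 3: the approximating conjugate
  set ε : ℝ := min δ (η / 2) with hεdef
  have hεpos : 0 < ε := lt_min hδpos (by positivity)
  have hεδ : ε ≤ δ := min_le_left _ _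
  have hεη : ε ≤ η / 2 := min_le_right _ _
  set W' : Finset Γ := W ∪ W.image (·⁻¹) with hW'
  obtain ⟨ρ, hρ⟩ := hclose W' ε hεpos
  set f : Γ → X → X := fun γ x => ρ (a γ (ρ.symm x)) with hf
  have hfinv : ∀ γ x, f γ⁻¹ (f γ x) = x := by
    intro γ x
    simp only [hf, Homeomorph.symm_apply_apply, ← ha_mul, inv_mul_cancel, ha_one,
      Homeomorph.apply_symm_apply]
  have hmemW' : ∀ γ ∈ W, γ ∈ W' := fun γ hγ => Finset.mem_union_left _ hγ
  have hmemW'inv : ∀ γ ∈ W, γ⁻¹ ∈ W' := fun γ hγ =>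
    Finset.mem_union_right _ (Finset.mem_image_of_mem _ hγ)
  -- Step 4: the cover D
  set E : Fin k → Set X := fun i => Metric.cthickening δ (C i) with hE
  have hEcl : ∀ i, IsClosed (E i) := fun _ => Metric.isClosed_cthickening
  set D : Fin k → Set X := fun i => ⇑ρ.symm '' E i with hD
  refine ⟨D, ?_, ?_, ?_⟩
  · exact fun i => (((hEcl i).isCompact).image ρ.symm.continuous).isClosed
  · rw [hD]
    simp only [← Set.image_iUnion]
    have hEu : (⋃ i, E i) = Set.univ := by
      apply Set.eq_univ_of_univ_subset
      rw [← hCcov]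
      exact Set.iUnion_mono fun i => Metric.self_subset_cthickening _
    rw [hEu, Set.image_univ, ρ.symm.surjective.range_eq]
  · rw [← hCP]
    ext σ
    simp only [localPattern, Set.mem_setOf_eq]
    refine and_congr_right fun h1 => ?_
    -- rewrite the a-side intersection
    have himg : ∀ p : Fin k × Γ, a p.2 '' D p.1 = ⇑ρ.symm '' (f p.2 '' E p.1) := by
      intro p
      rw [hD]
      dsimp only
      rw [← Set.image_comp, ← Set.image_comp]
      apply Set.image_congr'
      intro x
      simp [hf, Function.comp]
    have hInter : (⋂ p ∈ σ, a p.2 '' D p.1) = ⇑ρ.symm '' ⋂ p ∈ σ, f p.2 '' E p.1 := by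
      rw [Set.image_iInter₂ ρ.symm.bijective]
      exact Set.iInter₂_congr fun p _ => himg p
    rw [hInter, Set.image_nonempty]
    constructor
    · rintro ⟨z, hz⟩
      by_contra h2
      rw [Set.not_nonempty_iff_eq_empty] at h2
      have hemp := hηspec σ h1 h2
      have hzmem : z ∈ ⋂ p ∈ σ, Metric.cthickening η (b p.2 '' C p.1) := by
        refine Set.mem_iInter₂.2 fun p hp => ?_
        obtain ⟨w, hw, hfw⟩ := Set.mem_iInter₂.1 hz p hp
        obtain ⟨y, hy, hwy⟩ := aux_mem_cthickening (hCcl p.1) hδpos.le hw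
        have hd1 : dist z (b p.2 w) < ε := by
          rw [← hfw]
          exact hρ p.2 (hmemW' p.2 (h1 p hp)) w
        have hd2 : dist (b p.2 w) (b p.2 y) ≤ η / 2 :=
          (hdf p.2).2 w y (le_trans hwy (hδle p.2 (h1 p hp)))
        have hd3 : dist z (b p.2 y) ≤ η := by
          calc dist z (b p.2 y) ≤ dist z (b p.2 w) + dist (b p.2 w) (b p.2 y) :=
                dist_triangle _ _ _
            _ ≤ ε + η / 2 := add_le_add hd1.le hd2
            _ ≤ η / 2 + η / 2 := add_le_add_left hεη _
            _ = η := by ring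
        exact Metric.mem_cthickening_of_dist_le z (b p.2 y) η _ ⟨y, hy, rfl⟩ hd3
      rw [hemp] at hzmem
      exact hzmem
    · rintro ⟨x, hx⟩
      refine ⟨x, Set.mem_iInter₂.2 fun p hp => ?_⟩
      obtain ⟨y, hy, hby⟩ := Set.mem_iInter₂.1 hx p hp
      refine ⟨f p.2⁻¹ x, ?_, ?_⟩
      · -- f p.2⁻¹ x is δ-close to y ∈ C p.1
        have hbinv : b p.2⁻¹ x = y := by
          rw [← hby, ← hb_mul, inv_mul_cancel, hb_one]
        have hd : dist (f p.2⁻¹ x) y < ε := by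
          rw [← hbinv]
          exact hρ p.2⁻¹ (hmemW'inv p.2 (h1 p hp)) x
        exact Metric.mem_cthickening_of_dist_le _ y δ _ hy (le_trans hd.le hεδ)
      · -- f p.2 (f p.2⁻¹ x) = x
        have hfx := hfinv p.2⁻¹ x
        rwa [inv_inv] at hfx
end

section
/- Let Γ be a countable group, let 𝒞 be Cantor space with a fixed compatible metric d, and let a, b be actions of Γ on 𝒞 by homeomorphisms. Then the following are equivalent: (i) b lies in the closure of the conjugacy class of a, i.e. for every finite W ⊆ Γ and ε > 0 there is a homeomorphism ρ of 𝒞 with d(ρ(γ·_a ρ⁻¹(x)), γ·_b x) < ε for all γ ∈ W and x ∈ 𝒞; (ii) a weakly contains b. -/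
section CantorAux

local notation "𝔻" => (ℕ → Bool)



theorem continuous_of_discrete_fst {S Z Z' : Type*} [TopologicalSpace S] [DiscreteTopology S]
    [TopologicalSpace Z] [TopologicalSpace Z'] (h : S × Z → Z')
    (H : ∀ s, Continuous fun z => h (s, z)) : Continuous h := by
  rw [continuous_iff_continuousAt]
  rintro ⟨s, z⟩
  have hopen : IsOpen {q : S × Z | q.1 = s} :=
    (isOpen_discrete {s}).preimage continuous_fst
  have hev : ∀ᶠ q : S × Z in nhds (s, z), h (s, q.2) = h q := by
    filter_upwards [hopen.mem_nhds rfl] with q hq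
    rw [show q = (s, q.2) from Prod.ext hq rfl]
  exact ContinuousAt.congr (((H s).comp continuous_snd).continuousAt) hev

/-- An equiv between discrete spaces is a homeomorphism. -/
def discHomeo {α β : Type*} [TopologicalSpace α] [TopologicalSpace β] [DiscreteTopology α]
    [DiscreteTopology β] (e : α ≃ β) : α ≃ₜ β :=
  ⟨e, continuous_of_discreteTopology, continuous_of_discreteTopology⟩

/-- Cons homeomorphism. -/
def consHomeo : Bool × 𝔻 ≃ₜ 𝔻 where
  toFun := fun p => fun n => Nat.casesOn n p.1 (fun m => p.2 m)
  invFun := fun y => (y 0, fun n => y (n + 1))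
  left_inv := by rintro ⟨b, y⟩; rfl
  right_inv := by intro y; funext n; cases n <;> rfl
  continuous_toFun := by
    apply continuous_pi
    intro n
    cases n with
    | zero => exact continuous_fst
    | succ m => exact (continuous_apply m).comp continuous_snd
  continuous_invFun :=
    Continuous.prodMk (continuous_apply 0) (continuous_pi fun n => continuous_apply (n + 1))

/-- Sum of two copies of Cantor space. -/
def sumD : 𝔻 ⊕ 𝔻 ≃ₜ 𝔻 := by
  refine Homeomorph.trans (Homeomorph.mk ?_ ?_ ?_) consHomeo
  · exact { toFun := Sum.elim (fun y => (false, y)) (fun y => (true, y))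
            invFun := fun p => if p.1 then Sum.inr p.2 else Sum.inl p.2
            left_inv := by rintro (y | y) <;> simp
            right_inv := by rintro ⟨b, y⟩; cases b <;> simp }
  · exact Continuous.sumElim (Continuous.prodMk continuous_const continuous_id)
      (Continuous.prodMk continuous_const continuous_id)
  · apply continuous_of_discrete_fst
    intro b
    cases b <;> simp <;> [exact continuous_inl; exact continuous_inr]

/-- Fin 1 case. -/
def finOneD : Fin 1 × 𝔻 ≃ₜ 𝔻 where
  toFun := fun p => p.2
  invFun := fun y => (0, y)
  left_inv := by rintro ⟨j, y⟩; ext <;> simp [Subsingleton.elim (0 : Fin 1) j]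
  right_inv := fun y => rfl
  continuous_toFun := continuous_snd
  continuous_invFun := Continuous.prodMk continuous_const continuous_id

/-- `Fin (m+1)` many copies of Cantor space is Cantor space. -/
def finProd : ∀ m : ℕ, (Fin (m + 1) × 𝔻 ≃ₜ 𝔻)
  | 0 => finOneD
  | (m + 1) =>
    (Homeomorph.prodCongr (discHomeo (finSumFinEquiv (m := m + 1) (n := 1)).symm)
        (Homeomorph.refl 𝔻)).trans <|
      (Homeomorph.sumProdDistrib).trans <|
        (Homeomorph.sumCongr (finProd m) finOneD).trans sumD

def finPos : ∀ (m : ℕ), 0 < m → (Fin m × 𝔻 ≃ₜ 𝔻)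
  | (m + 1), _ => finProd m


/-- Splitting off the first `n` coordinates. -/
def splitHomeo (n : ℕ) : 𝔻 ≃ₜ (Fin n → Bool) × 𝔻 where
  toFun := fun x => (fun i => x i.1, fun j => x (n + j))
  invFun := fun p => fun i => if h : i < n then p.1 ⟨i, h⟩ else p.2 (i - n)
  left_inv := by
    intro x; funext i
    by_cases h : i < n
    · simp [h]
    · simp only [h, dif_neg, not_false_iff]
      congr 1
      omega
  right_inv := by
    rintro ⟨s, y⟩
    refine Prod.ext ?_ ?_
    · funext i
      simp [i.2]
    · funext j
      have h : ¬ (n + j < n) := by omega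
      simp only [h, dif_neg, not_false_iff]
      congr 1
      omega
  continuous_toFun :=
    Continuous.prodMk (continuous_pi fun i => continuous_apply i.1)
      (continuous_pi fun j => continuous_apply (n + j))
  continuous_invFun := by
    apply continuous_pi
    intro i
    by_cases h : i < n
    · simp only [h, dif_pos]
      exact (continuous_apply _).comp continuous_fst
    · simp only [h, dif_neg, not_false_iff]
      exact (continuous_apply _).comp continuous_snd

theorem interLemma {X : Type*} [TopologicalSpace X] [CompactSpace X] (K : ℕ → Set X)
    (hd : ∀ n, K (n + 1) ⊆ K n) (hcl : ∀ n, IsClosed (K n)) (hne : ∀ n, (K n).Nonempty) :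
    (⋂ n, K n).Nonempty :=
  IsCompact.nonempty_iInter_of_sequence_nonempty_isCompact_isClosed K hd hne
    ((hcl 0).isCompact) hcl

theorem exists_eps {C : Type*} [MetricSpace C] [CompactSpace C] {P : Type*} [TopologicalSpace P]
    [DiscreteTopology P] (f : C → P) (hf : Continuous f) :
    ∃ ε > (0 : ℝ), ∀ x y, dist x y < ε → f x = f y := by
  by_contra h
  push_neg at h
  set K : ℕ → Set (C × C) := fun n => {q | dist q.1 q.2 ≤ 1 / (n + 1) ∧ f q.1 ≠ f q.2} with hK
  have hd : ∀ n, K (n + 1) ⊆ K n := by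
    rintro n ⟨x, y⟩ ⟨h1, h2⟩
    refine ⟨le_trans h1 ?_, h2⟩
    have h1 : (0:ℝ) < n + 1 := by positivity
    have h2 : (n:ℝ) + 1 ≤ (n:ℝ) + 1 + 1 := by linarith
    calc (1:ℝ) / (↑(n+1) + 1) = 1 / ((n:ℝ) + 1 + 1) := by push_cast; ring_nf
      _ ≤ 1 / ((n:ℝ) + 1) := by
          apply one_div_le_one_div_of_le h1 h2
  have hcl : ∀ n, IsClosed (K n) := by
    intro n
    apply IsClosed.inter
    · exact isClosed_le (Continuous.dist continuous_fst continuous_snd) continuous_const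
    · have : IsClosed {p : P × P | p.1 ≠ p.2} := isClosed_discrete _
      exact this.preimage ((hf.comp continuous_fst).prodMk (hf.comp continuous_snd))
  have hne : ∀ n, (K n).Nonempty := by
    intro n
    obtain ⟨x, y, hxy, hne⟩ := h (1 / (n + 1)) (by positivity)
    exact ⟨(x, y), le_of_lt hxy, hne⟩
  obtain ⟨⟨x, y⟩, hxy⟩ := interLemma K hd hcl hne
  simp only [Set.mem_iInter] at hxy
  have hxy0 : dist x y ≤ 0 := by
    by_contra h0
    push_neg at h0
    obtain ⟨n, hn⟩ := exists_nat_one_div_lt h0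
    exact absurd (hxy n).1 (not_le.mpr (by exact_mod_cast hn))
  have : x = y := by
    rw [← dist_le_zero]; exact hxy0
  exact (hxy 0).2 (by rw [this])

theorem diamLemma {C : Type*} [MetricSpace C] [CompactSpace C] (e : C ≃ₜ 𝔻) {ε : ℝ}
    (hε : 0 < ε) : ∃ n, ∀ x y : C, (∀ i < n, e x i = e y i) → dist x y < ε := by
  by_contra h
  push_neg at h
  set K : ℕ → Set (C × C) :=
    fun n => {q | (∀ i < n, e q.1 i = e q.2 i) ∧ ε ≤ dist q.1 q.2} with hK
  have hd : ∀ n, K (n + 1) ⊆ K n := by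
    rintro n ⟨x, y⟩ ⟨h1, h2⟩
    exact ⟨fun i hi => h1 i (by omega), h2⟩
  have hcl : ∀ n, IsClosed (K n) := by
    intro n
    apply IsClosed.inter
    · show IsClosed {q : C × C | ∀ i < n, e q.1 i = e q.2 i}
      have : {q : C × C | ∀ i < n, e q.1 i = e q.2 i} =
        ⋂ i, ⋂ (_ : i < n), {q : C × C | e q.1 i = e q.2 i} := by
        ext q; simp
      rw [this]
      refine isClosed_iInter fun i => isClosed_iInter fun _ => ?_
      have hdc : IsClosed {p : Bool × Bool | p.1 = p.2} := isClosed_discrete _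
      exact hdc.preimage
        ((((continuous_apply i).comp (e.continuous.comp continuous_fst))).prodMk
          ((continuous_apply i).comp (e.continuous.comp continuous_snd)))
    · exact isClosed_le continuous_const (Continuous.dist continuous_fst continuous_snd)
  have hne : ∀ n, (K n).Nonempty := by
    intro n
    obtain ⟨x, y, h1, h2⟩ := h n
    exact ⟨(x, y), h1, h2⟩
  obtain ⟨⟨x, y⟩, hxy⟩ := interLemma K hd hcl hne
  simp only [Set.mem_iInter] at hxy
  have hxyeq : x = y := by
    apply e.injective
    funext i
    exact (hxy (i + 1)).1 i (by omega)
  have := (hxy 0).2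
  rw [hxyeq, dist_self] at this
  linarith



/-- A continuous map from Cantor space into a finite discrete space factors through finitely
many coordinates. -/
theorem factorLemma {P : Type*} [TopologicalSpace P] [DiscreteTopology P]
    (F : 𝔻 → P) (hF : Continuous F) :
    ∃ n, ∀ x y : 𝔻, (∀ i < n, x i = y i) → F x = F y := by
  by_contra h
  push_neg at h
  set K : ℕ → Set (𝔻 × 𝔻) :=
    fun n => {q | (∀ i < n, q.1 i = q.2 i) ∧ F q.1 ≠ F q.2} with hK
  have hd : ∀ n, K (n + 1) ⊆ K n := by
    rintro n ⟨x, y⟩ ⟨h1, h2⟩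
    exact ⟨fun i hi => h1 i (by omega), h2⟩
  have hcl : ∀ n, IsClosed (K n) := by
    intro n
    apply IsClosed.inter
    · show IsClosed {q : 𝔻 × 𝔻 | ∀ i < n, q.1 i = q.2 i}
      have : {q : 𝔻 × 𝔻 | ∀ i < n, q.1 i = q.2 i} =
          ⋂ i, ⋂ (_ : i < n),
            (fun q : 𝔻 × 𝔻 => (q.1 i, q.2 i)) ⁻¹' {p : Bool × Bool | p.1 = p.2} := by
        ext q; simp
      have hdc : IsClosed {p : Bool × Bool | p.1 = p.2} := isClosed_discrete _
      rw [this]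
      exact isClosed_iInter fun i => isClosed_iInter fun _ =>
        hdc.preimage (((continuous_apply i).comp continuous_fst).prodMk
          ((continuous_apply i).comp continuous_snd))
    · show IsClosed {q : 𝔻 × 𝔻 | F q.1 ≠ F q.2}
      have : IsClosed {p : P × P | p.1 ≠ p.2} := isClosed_discrete _
      exact this.preimage ((hF.comp continuous_fst).prodMk (hF.comp continuous_snd))
  have hne : ∀ n, (K n).Nonempty := by
    intro n
    obtain ⟨x, y, h1, h2⟩ := h n
    exact ⟨(x, y), h1, h2⟩
  obtain ⟨⟨x, y⟩, hxy⟩ := interLemma K hd hcl hne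
  simp only [Set.mem_iInter] at hxy
  have hxyeq : x = y := by
    funext i
    exact (hxy (i + 1)).1 i (by omega)
  exact (hxy 0).2 (by rw [hxyeq])





/-- Gluing fibers over a surjection between finite discrete types. -/
theorem corecore {S Q : Type*} [Fintype S] [TopologicalSpace S] [DiscreteTopology S]
    [Fintype Q] [TopologicalSpace Q] [DiscreteTopology Q] (ι : S → Q)
    (hι : Function.Surjective ι) :
    ∃ χ : S × 𝔻 ≃ₜ Q × 𝔻, ∀ (s : S) (y : 𝔻), (χ (s, y)).1 = ι s := by
  classical
  have hpos : ∀ q : Q, 0 < Fintype.card {s // ι s = q} := fun q =>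
    Fintype.card_pos_iff.mpr ⟨⟨(hι q).choose, (hι q).choose_spec⟩⟩
  let τ : ∀ q : Q, ({s // ι s = q} × 𝔻 ≃ₜ 𝔻) := fun q =>
    (Homeomorph.prodCongr (discHomeo (Fintype.equivFin {s // ι s = q}))
      (Homeomorph.refl 𝔻)).trans (finPos _ (hpos q))
  let E : S × 𝔻 ≃ Q × 𝔻 :=
    { toFun := fun p => (ι p.1, τ (ι p.1) (⟨p.1, rfl⟩, p.2))
      invFun := fun p => (((τ p.1).symm p.2).1.1, ((τ p.1).symm p.2).2)
      left_inv := by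
        rintro ⟨s, y⟩
        simp only [Homeomorph.symm_apply_apply]
      right_inv := by
        rintro ⟨q, y⟩
        dsimp only
        have hE : (τ q) ((τ q).symm y) = y := (τ q).apply_symm_apply y
        revert hE
        generalize (τ q).symm y = p
        obtain ⟨⟨s', h⟩, y'⟩ := p
        intro hE
        dsimp only
        subst h
        exact Prod.ext rfl hE }
  refine ⟨⟨E, ?_, ?_⟩, fun s y => rfl⟩
  · apply continuous_of_discrete_fst
    intro s
    exact (Continuous.prodMk continuous_const
      ((τ (ι s)).continuous.comp (Continuous.prodMk continuous_const continuous_id :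
        Continuous fun z : 𝔻 => ((⟨s, rfl⟩ : {s' // ι s' = ι s}), z))) :
      Continuous fun z : 𝔻 => (ι s, τ (ι s) (⟨s, rfl⟩, z)))
  · apply continuous_of_discrete_fst
    intro q
    have h1 : Continuous ((τ q).symm : 𝔻 → {s // ι s = q} × 𝔻) := (τ q).symm.continuous
    exact Continuous.prodMk
      (continuous_subtype_val.comp (continuous_fst.comp h1)) (continuous_snd.comp h1)





/-- Canonical form of a continuous finite labelling of Cantor space. -/
theorem lemC {P : Type*} [TopologicalSpace P] [DiscreteTopology P]
    (F : 𝔻 → P) (hF : Continuous F) (m : ℕ) (v : Fin m → P) (hv : Function.Injective v)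
    (hr : Set.range v = Set.range F) :
    ∃ ψ : 𝔻 ≃ₜ Fin m × 𝔻, ∀ x, F x = v (ψ x).1 := by
  classical
  obtain ⟨n, hn⟩ := factorLemma F hF
  set sp := splitHomeo n with hsp
  set y₀ : 𝔻 := fun _ => false with hy₀
  set Fbar : (Fin n → Bool) → P := fun s => F (sp.symm (s, y₀)) with hFbar
  have hkey : ∀ x : 𝔻, F x = Fbar ((sp x).1) := by
    intro x
    apply hn
    intro i hi
    show x i = if h : i < n then (sp x).1 ⟨i, h⟩ else y₀ (i - n)
    rw [dif_pos hi]
    rfl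
  have hs : ∀ s : Fin n → Bool, ∃ j, v j = Fbar s := by
    intro s
    have h1 : Fbar s ∈ Set.range F := ⟨sp.symm (s, y₀), rfl⟩
    rw [← hr] at h1
    exact h1
  set ι : (Fin n → Bool) → Fin m := fun s => (hs s).choose with hι
  have hvι : ∀ s, v (ι s) = Fbar s := fun s => (hs s).choose_spec
  have hsur : Function.Surjective ι := by
    intro j
    have h1 : v j ∈ Set.range F := by rw [← hr]; exact ⟨j, rfl⟩
    obtain ⟨x, hx⟩ := h1
    refine ⟨(sp x).1, hv ?_⟩
    rw [hvι, ← hkey, hx]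
  obtain ⟨χ, hχ⟩ := corecore ι hsur
  refine ⟨sp.trans χ, fun x => ?_⟩
  have h2 : ((sp.trans χ) x).1 = ι ((sp x).1) := hχ (sp x).1 (sp x).2
  rw [h2, hvι, ← hkey]

theorem masterD {P : Type*} [TopologicalSpace P] [DiscreteTopology P] [Finite P]
    (F G : 𝔻 → P) (hF : Continuous F) (hG : Continuous G)
    (h : Set.range F = Set.range G) : ∃ ρ : 𝔻 ≃ₜ 𝔻, ∀ x, G (ρ x) = F x := by
  classical
  haveI := Fintype.ofFinite P
  set m := Fintype.card (Set.range F) with hm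
  set ev : Fin m ≃ Set.range F := (Fintype.equivFin (Set.range F)).symm with hev
  set v : Fin m → P := fun j => (ev j).1 with hv'
  have hv : Function.Injective v := fun i j hij => ev.injective (Subtype.ext hij)
  have hrF : Set.range v = Set.range F := by
    ext p
    constructor
    · rintro ⟨j, rfl⟩; exact (ev j).2
    · intro hp; exact ⟨ev.symm ⟨p, hp⟩, by simp [hv']⟩
  obtain ⟨ψF, hψF⟩ := lemC F hF m v hv hrF
  obtain ⟨ψG, hψG⟩ := lemC G hG m v hv (hrF.trans h)
  refine ⟨ψF.trans ψG.symm, fun x => ?_⟩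
  show G (ψG.symm (ψF x)) = F x
  have h1 := hψG (ψG.symm (ψF x))
  rw [ψG.apply_symm_apply] at h1
  rw [h1]
  exact (hψF x).symm

theorem masterC {C : Type*} [TopologicalSpace C] {P : Type*} [TopologicalSpace P]
    [DiscreteTopology P] [Finite P] (e : C ≃ₜ 𝔻) (F G : C → P) (hF : Continuous F)
    (hG : Continuous G) (h : Set.range F = Set.range G) :
    ∃ ρ : C ≃ₜ C, ∀ x, G (ρ x) = F x := by
  have hr : Set.range (F ∘ e.symm) = Set.range (G ∘ e.symm) := by
    rw [e.symm.surjective.range_comp, e.symm.surjective.range_comp]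
    exact h
  obtain ⟨ρ', hρ'⟩ := masterD (F ∘ e.symm) (G ∘ e.symm) (hF.comp e.symm.continuous)
    (hG.comp e.symm.continuous) hr
  refine ⟨(e.trans ρ').trans e.symm, fun x => ?_⟩
  have h1 := hρ' (e x)
  simpa using h1

end CantorAux

/-- The set of `W`-local patterns of a labelling `f : X → Fin k` with respect to an action
`a : Γ → X → X`. -/
def labelPattern {Γ : Type*} {X : Type*} (a : Γ → X → X) (W : Finset Γ) {k : ℕ}
    (f : X → Fin k) : Set ({γ // γ ∈ W} → Fin k) :=
  {p | ∃ x : X, ∀ γ : {γ // γ ∈ W}, f (a γ.1 x) = p γ}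

/-- `a` weakly contains `b` (labelled version, for zero-dimensional spaces): every `W`-local
pattern set of a continuous labelling of `b` is realized by a continuous labelling of `a`. -/
def WeaklyContainsL {Γ : Type*} {X Y : Type*} [TopologicalSpace X] [TopologicalSpace Y]
    (a : Γ → X → X) (b : Γ → Y → Y) : Prop :=
  ∀ (W : Finset Γ) (k : ℕ) (f : Y → Fin k), Continuous f →
    ∃ g : X → Fin k, Continuous g ∧ labelPattern b W f = labelPattern a W g


section Main

theorem stmt7' {Γ : Type*} [Group Γ] [Countable Γ]
    {C : Type*} [MetricSpace C] (hC : Nonempty (C ≃ₜ (ℕ → Bool)))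
    (a b : Γ → C → C)
    (ha_one : ∀ x, a 1 x = x) (ha_mul : ∀ γ δ x, a (γ * δ) x = a γ (a δ x))
    (ha_cont : ∀ γ, Continuous (a γ))
    (hb_one : ∀ x, b 1 x = x) (hb_mul : ∀ γ δ x, b (γ * δ) x = b γ (b δ x))
    (hb_cont : ∀ γ, Continuous (b γ)) :
    (∀ W : Finset Γ, ∀ ε > (0 : ℝ), ∃ ρ : C ≃ₜ C,
        ∀ γ ∈ W, ∀ x : C, dist (ρ (a γ (ρ.symm x))) (b γ x) < ε)
      ↔ WeaklyContainsL a b := by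
  obtain ⟨e⟩ := hC
  haveI : CompactSpace C := e.symm.compactSpace
  constructor
  · -- closure of conjugacy class ⇒ weak containment
    intro hcl W k f hf
    obtain ⟨ε, hε, hεf⟩ := exists_eps f hf
    obtain ⟨ρ, hρ⟩ := hcl W ε hε
    refine ⟨f ∘ ρ, hf.comp ρ.continuous, ?_⟩
    ext p
    constructor
    · rintro ⟨y, hy⟩
      refine ⟨ρ.symm y, fun γ => ?_⟩
      have hd := hρ γ.1 γ.2 y
      calc f (ρ (a γ.1 (ρ.symm y))) = f (b γ.1 y) := hεf _ _ hd
        _ = p γ := hy γ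
    · rintro ⟨x, hx⟩
      refine ⟨ρ x, fun γ => ?_⟩
      have hd := hρ γ.1 γ.2 (ρ x)
      rw [ρ.symm_apply_apply] at hd
      exact (hεf _ _ hd).symm.trans (hx γ)
  · -- weak containment ⇒ closure of conjugacy class
    intro hwc W ε hε
    classical
    obtain ⟨n, hn⟩ := diamLemma e hε
    set k := Fintype.card (Fin n → Bool) with hk
    set q : (Fin n → Bool) ≃ Fin k := Fintype.equivFin _ with hq
    set f : C → Fin k := fun x => q (fun i => e x i.1) with hf'
    have hf : Continuous f := by
      have h1 : Continuous fun x : C => (fun i : Fin n => e x i.1) :=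
        continuous_pi fun i => (continuous_apply i.1).comp e.continuous
      exact (continuous_of_discreteTopology (f := ⇑q)).comp h1
    have hff : ∀ u w : C, f u = f w → dist u w < ε := by
      intro u w h
      exact hn u w fun i hi => congrFun (q.injective h) ⟨i, hi⟩
    set W' : Finset Γ := insert (1 : Γ) W with hW'
    have mem1 : (1 : Γ) ∈ W' := Finset.mem_insert_self _ _
    obtain ⟨g, hg, hpat⟩ := hwc W' k f hf
    set F : C → ({γ // γ ∈ W'} → Fin k) := fun x γ => g (a γ.1 x) with hF'
    set G : C → ({γ // γ ∈ W'} → Fin k) := fun x γ => f (b γ.1 x) with hG'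
    have hFc : Continuous F := continuous_pi fun γ => hg.comp (ha_cont γ.1)
    have hGc : Continuous G := continuous_pi fun γ => hf.comp (hb_cont γ.1)
    have hFr : Set.range F = labelPattern a W' g := by
      ext p
      constructor
      · rintro ⟨x, rfl⟩; exact ⟨x, fun γ => rfl⟩
      · rintro ⟨x, hx⟩; exact ⟨x, funext hx⟩
    have hGr : Set.range G = labelPattern b W' f := by
      ext p
      constructor
      · rintro ⟨x, rfl⟩; exact ⟨x, fun γ => rfl⟩
      · rintro ⟨x, hx⟩; exact ⟨x, funext hx⟩
    have hrange : Set.range F = Set.range G := by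
      rw [hFr, hGr, ← hpat]
    obtain ⟨ρ, hρ⟩ := masterC e F G hFc hGc hrange
    refine ⟨ρ, fun γ hγ x => ?_⟩
    have memγ : γ ∈ W' := Finset.mem_insert_of_mem hγ
    apply hff
    have e1 : f (ρ (a γ (ρ.symm x))) = G (ρ (a γ (ρ.symm x))) ⟨1, mem1⟩ := by
      show f _ = f (b 1 _)
      rw [hb_one]
    have e2 : G (ρ (a γ (ρ.symm x))) = F (a γ (ρ.symm x)) := hρ _
    have e3 : F (a γ (ρ.symm x)) ⟨1, mem1⟩ = g (a γ (ρ.symm x)) := by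
      show g (a 1 _) = _
      rw [ha_one]
    have e4 : g (a γ (ρ.symm x)) = F (ρ.symm x) ⟨γ, memγ⟩ := rfl
    have e5 : F (ρ.symm x) = G x := by
      have h1 := hρ (ρ.symm x)
      rw [ρ.apply_symm_apply] at h1
      exact h1.symm
    have e6 : G x ⟨γ, memγ⟩ = f (b γ x) := rfl
    rw [e1, e2, e3, e4, e5, e6]

end Main

/-- For actions `a`, `b` of a countable group `Γ` on a Cantor space `𝒞`, `b` lies in the
uniform closure of the conjugacy class of `a` if and only if `a` weakly contains `b`. -/
theorem stmt7 {Γ : Type*} [Group Γ] [Countable Γ]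
    {C : Type*} [MetricSpace C] (hC : Nonempty (C ≃ₜ (ℕ → Bool)))
    (a b : Γ → C → C)
    (ha_one : ∀ x, a 1 x = x) (ha_mul : ∀ γ δ x, a (γ * δ) x = a γ (a δ x))
    (ha_cont : ∀ γ, Continuous (a γ))
    (hb_one : ∀ x, b 1 x = x) (hb_mul : ∀ γ δ x, b (γ * δ) x = b γ (b δ x))
    (hb_cont : ∀ γ, Continuous (b γ)) :
    (∀ W : Finset Γ, ∀ ε > (0 : ℝ), ∃ ρ : C ≃ₜ C,
        ∀ γ ∈ W, ∀ x : C, dist (ρ (a γ (ρ.symm x))) (b γ x) < ε)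
      ↔ WeaklyContainsL a b := by
  exact stmt7' hC a b ha_one ha_mul ha_cont hb_one hb_mul hb_cont
end

section
/- Let Γ be a countable group and let a be a Γ-flow on a nonempty compact Hausdorff space X. Then there exists a Γ-flow a' on a nonempty compact metrizable space which is weakly equivalent to a. -/
open Set

section Swell
variable {X : Type*} [TopologicalSpace X] [CompactSpace X] [T2Space X]
variable {ι : Type*} [Finite ι] [DecidableEq ι]

lemma one_step (K : ι → Set X) (hK : ∀ p, IsClosed (K p)) (q : ι) :
    ∃ g : X → ℝ, Continuous g ∧ K q ⊆ g ⁻¹' {1} ∧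
      ∀ t : Set ι, (⋂ p ∈ t, K p) = ∅ →
        (⋂ p ∈ t, Function.update K q (g ⁻¹' {1}) p) = ∅ := by
  set Bad : Set (Set ι) := {t | q ∈ t ∧ (⋂ p ∈ t, K p) = ∅} with hBad
  set L : Set X := ⋃ t ∈ Bad, ⋂ p ∈ t \ {q}, K p with hL
  have hLclosed : IsClosed L := by
    refine Set.Finite.isClosed_biUnion (Set.toFinite _) fun t _ => ?_
    exact isClosed_biInter fun p _ => hK p
  have hdisj : Disjoint (K q) L := by
    rw [Set.disjoint_left]
    rintro x hxq hxL
    simp only [hL, Set.mem_iUnion] at hxL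
    obtain ⟨t, ⟨hqt, hempty⟩, hx⟩ := hxL
    have hmem : x ∈ ⋂ p ∈ t, K p := by
      refine Set.mem_biInter fun p hp => ?_
      by_cases hpq : p = q
      · exact hpq ▸ hxq
      · exact Set.mem_iInter₂.mp hx p ⟨hp, hpq⟩
    rw [hempty] at hmem
    exact hmem
  obtain ⟨g, hg0, hg1, -⟩ :=
    exists_continuous_zero_one_of_isClosed hLclosed (hK q) hdisj.symm
  refine ⟨g, g.continuous, fun x hx => hg1 hx, fun t ht => ?_⟩
  by_cases hqt : q ∈ t
  · refine Set.eq_empty_iff_forall_notMem.mpr fun x hx0 => ?_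
    have hx : ∀ p ∈ t, x ∈ Function.update K q (⇑g ⁻¹' {1}) p := Set.mem_iInter₂.mp hx0
    have hx1 : g x = 1 := by
      have := hx q hqt
      rwa [Function.update_self, Set.mem_preimage, Set.mem_singleton_iff] at this
    have hxL : x ∈ L := by
      refine Set.mem_biUnion (show t ∈ Bad from ⟨hqt, ht⟩) ?_
      refine Set.mem_biInter fun p hp => ?_
      have := hx p hp.1
      rwa [Function.update_of_ne hp.2] at this
    have h0 := hg0 hxL
    simp only [Pi.zero_apply] at h0
    rw [h0] at hx1
    exact one_ne_zero hx1.symm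
  · rw [← ht]
    exact Set.iInter₂_congr fun p hp =>
      by rw [Function.update_of_ne (fun h => hqt (by rw [← h]; exact hp))]

lemma swell_aux (s : Finset ι) (K : ι → Set X) (hK : ∀ p, IsClosed (K p)) :
    ∃ K' : ι → Set X, (∀ p, IsClosed (K' p)) ∧ (∀ p, K p ⊆ K' p) ∧
      (∀ p ∈ s, ∃ g : X → ℝ, Continuous g ∧ K' p = g ⁻¹' {1}) ∧
      (∀ p ∉ s, K' p = K p) ∧
      (∀ t : Set ι, (⋂ p ∈ t, K p) = ∅ → (⋂ p ∈ t, K' p) = ∅) := by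
  induction s using Finset.induction_on generalizing K with
  | empty => exact ⟨K, hK, fun p => le_refl _, by simp, fun p _ => rfl, fun t ht => ht⟩
  | @insert q s hqs ih =>
    obtain ⟨g, hgc, hgsub, hgpres⟩ := one_step K hK q
    set K1 := Function.update K q (g ⁻¹' {1}) with hK1
    have hK1closed : ∀ p, IsClosed (K1 p) := by
      intro p
      by_cases hpq : p = q
      · subst hpq; rw [hK1, Function.update_self]
        exact isClosed_singleton.preimage hgc
      · rw [hK1, Function.update_of_ne hpq]; exact hK p
    obtain ⟨K', hK'closed, hK'sub, hK'g, hK'eq, hK'pres⟩ := ih K1 hK1closed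
    refine ⟨K', hK'closed, ?_, ?_, ?_, fun t ht => hK'pres t (hgpres t ht)⟩
    · intro p
      refine subset_trans ?_ (hK'sub p)
      by_cases hpq : p = q
      · subst hpq; rw [hK1, Function.update_self]; exact hgsub
      · rw [hK1, Function.update_of_ne hpq]
    · intro p hp
      rcases Finset.mem_insert.mp hp with h | h
      · subst h
        refine ⟨g, hgc, ?_⟩
        rw [hK'eq p hqs, hK1, Function.update_self]
      · exact hK'g p h
    · intro p hp
      rw [hK'eq p (fun h => hp (Finset.mem_insert_of_mem h)), hK1,
        Function.update_of_ne (fun h => hp (by rw [h]; exact Finset.mem_insert_self q s))]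

lemma swell [Fintype ι] (K : ι → Set X) (hK : ∀ p, IsClosed (K p)) :
    ∃ K' : ι → Set X, (∀ p, K p ⊆ K' p) ∧
      (∀ p, ∃ g : X → ℝ, Continuous g ∧ K' p = g ⁻¹' {1}) ∧
      (∀ t : Set ι, (⋂ p ∈ t, K p) = ∅ → (⋂ p ∈ t, K' p) = ∅) := by
  obtain ⟨K', _, hsub, hg, _, hpres⟩ := swell_aux Finset.univ K hK
  exact ⟨K', hsub, fun p => hg p (Finset.mem_univ p), hpres⟩

end Swell

section CoverSwell

variable {Γ : Type*} [Group Γ] {X : Type*} [TopologicalSpace X] [CompactSpace X] [T2Space X]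

/-- The swollen cover associated to a family of functions. -/
def swCov (a : Γ → X → X) (W : Finset Γ) {k : ℕ}
    (g : Fin k × {γ // γ ∈ W} → X → ℝ) (i : Fin k) : Set X :=
  {x | ∀ p : {γ // γ ∈ W}, g (i, p) (a p.1 x) = 1}

lemma cover_swell (a : Γ → X → X)
    (ha_cont : ∀ γ, Continuous (a γ)) (W : Finset Γ) {k : ℕ}
    (C : Fin k → Set X) (hC : ∀ i, IsClosed (C i)) :
    ∃ g : Fin k × {γ // γ ∈ W} → X → ℝ, (∀ p, Continuous (g p)) ∧
      (∀ i, C i ⊆ swCov a W g i) ∧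
      localPattern a W (swCov a W g) = localPattern a W C := by
  classical
  have hKcl : ∀ (p : Fin k × {γ // γ ∈ W}), IsClosed (a p.2.1 '' C p.1) := by
    intro p
    exact (((hC p.1).isCompact).image (ha_cont p.2.1)).isClosed
  obtain ⟨K', hsub, hg, hpres⟩ := swell (fun p : Fin k × {γ // γ ∈ W} => a p.2.1 '' C p.1) hKcl
  choose g hgc hgeq using hg
  refine ⟨g, hgc, ?_, ?_⟩
  · intro i x hx p
    have : a p.1 x ∈ K' (i, p) := hsub (i, p) (Set.mem_image_of_mem _ hx)
    rw [hgeq (i, p)] at this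
    exact this
  · have hkey : ∀ (p : Fin k × {γ // γ ∈ W}), a p.2.1 '' swCov a W g p.1 ⊆ K' p := by
      rintro ⟨i, p⟩ y ⟨x, hx, rfl⟩
      rw [hgeq (i, p)]
      exact hx p
    ext σ
    constructor
    · rintro ⟨hσW, hne⟩
      refine ⟨hσW, ?_⟩
      by_contra hempty
      rw [Set.not_nonempty_iff_eq_empty] at hempty
      set t : Set (Fin k × {γ // γ ∈ W}) := {p | (p.1, p.2.1) ∈ σ} with hts
      have ht : (⋂ p ∈ t, a p.2.1 '' C p.1) = ∅ := by
        rw [Set.eq_empty_iff_forall_notMem]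
        intro y hy
        have : y ∈ ⋂ q ∈ σ, a q.2 '' C q.1 := by
          refine Set.mem_iInter₂.mpr fun q hq => ?_
          exact Set.mem_iInter₂.mp hy (q.1, ⟨q.2, hσW q hq⟩) hq
        rw [hempty] at this
        exact this
      have ht' := hpres t ht
      obtain ⟨y, hy⟩ := hne
      have : y ∈ ⋂ p ∈ t, K' p := by
        refine Set.mem_iInter₂.mpr fun p hp => ?_
        exact hkey p (Set.mem_iInter₂.mp hy (p.1, p.2.1) hp)
      rw [ht'] at this
      exact this
    · rintro ⟨hσW, hne⟩
      refine ⟨hσW, hne.mono ?_⟩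
      refine Set.iInter₂_mono fun q hq => Set.image_mono ?_
      intro x hx p
      have : a p.1 x ∈ K' (q.1, p) := hsub (q.1, p) (Set.mem_image_of_mem _ hx)
      rw [hgeq (q.1, p)] at this
      exact this

end CoverSwell

section Factor

variable {Γ : Type*} [Group Γ] {X Z : Type*} [TopologicalSpace X] [TopologicalSpace Z]

omit [TopologicalSpace X] [TopologicalSpace Z] in
lemma localPattern_factor (a : Γ → X → X) (b : Γ → Z → Z) (π : X → Z)
    (hsurj : Function.Surjective π)
    (hequi : ∀ γ x, π (a γ x) = b γ (π x))
    (ha_one : ∀ x, a 1 x = x) (ha_mul : ∀ γ δ x, a (γ * δ) x = a γ (a δ x))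
    (hb_one : ∀ z, b 1 z = z) (hb_mul : ∀ γ δ z, b (γ * δ) z = b γ (b δ z))
    (W : Finset Γ) {k : ℕ} (D : Fin k → Set Z) :
    localPattern a W (fun i => π ⁻¹' D i) = localPattern b W D := by
  have key : ∀ (γ : Γ) (S : Set Z), a γ '' (π ⁻¹' S) = π ⁻¹' (b γ '' S) := by
    intro γ S
    ext x
    constructor
    · rintro ⟨z, hz, rfl⟩
      exact ⟨π z, hz, (hequi γ z).symm⟩
    · rintro ⟨y, hy, hyx⟩
      refine ⟨a γ⁻¹ x, ?_, ?_⟩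
      · show π (a γ⁻¹ x) ∈ S
        have : π (a γ⁻¹ x) = b γ⁻¹ (π x) := hequi γ⁻¹ x
        rw [this, ← hyx, ← hb_mul, inv_mul_cancel, hb_one]
        exact hy
      · rw [← ha_mul, mul_inv_cancel, ha_one]
  ext σ
  simp only [localPattern, Set.mem_setOf_eq, and_congr_right_iff]
  intro hσW
  have heq : (⋂ q ∈ σ, a q.2 '' (π ⁻¹' D q.1)) = π ⁻¹' (⋂ q ∈ σ, b q.2 '' D q.1) := by
    rw [Set.preimage_iInter₂]
    exact Set.iInter₂_congr fun q _ => key q.2 (D q.1)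
  rw [heq]
  constructor
  · rintro ⟨x, hx⟩; exact ⟨π x, hx⟩
  · rintro ⟨y, hy⟩
    obtain ⟨x, rfl⟩ := hsurj y
    exact ⟨x, hy⟩

lemma weaklyContains_of_factor (a : Γ → X → X) (b : Γ → Z → Z) (π : X → Z)
    (hπ : Continuous π) (hsurj : Function.Surjective π)
    (hequi : ∀ γ x, π (a γ x) = b γ (π x))
    (ha_one : ∀ x, a 1 x = x) (ha_mul : ∀ γ δ x, a (γ * δ) x = a γ (a δ x))
    (hb_one : ∀ z, b 1 z = z) (hb_mul : ∀ γ δ z, b (γ * δ) z = b γ (b δ z)) :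
    WeaklyContains a b := by
  rintro W k P ⟨D, hDcl, hDcov, hDlp⟩
  refine ⟨fun i => π ⁻¹' D i, fun i => (hDcl i).preimage hπ, ?_, ?_⟩
  · rw [← Set.preimage_iUnion, hDcov, Set.preimage_univ]
  · rw [localPattern_factor a b π hsurj hequi ha_one ha_mul hb_one hb_mul W D, hDlp]

end Factor

lemma coverPatterns_finite {Γ : Type*} {X : Type*} [TopologicalSpace X]
    (a : Γ → X → X) (W : Finset Γ) (k : ℕ) : (coverPatterns a W k).Finite := by
  have hS : ({p : Fin k × Γ | p.2 ∈ W}).Finite := by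
    have : {p : Fin k × Γ | p.2 ∈ W} = (Set.univ : Set (Fin k)) ×ˢ (W : Set Γ) := by
      ext p; simp [Set.mem_prod]
    rw [this]
    exact Set.finite_univ.prod W.finite_toSet
  refine (hS.finite_subsets.finite_subsets).subset ?_
  rintro P ⟨C, -, -, rfl⟩
  intro σ hσ p hp
  exact hσ.1 p hp

/-- Every Γ-flow on a nonempty compact Hausdorff space is weakly equivalent to a flow on a
nonempty compact metrizable space. -/
theorem stmt9 {Γ : Type*} [Group Γ] [Countable Γ]
    {X : Type*} [TopologicalSpace X] [CompactSpace X] [T2Space X] [Nonempty X]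
    (a : Γ → X → X)
    (ha_one : ∀ x, a 1 x = x) (ha_mul : ∀ γ δ x, a (γ * δ) x = a γ (a δ x))
    (ha_cont : ∀ γ, Continuous (a γ)) :
    ∃ (X' : Type) (t' : TopologicalSpace X') (a' : Γ → X' → X'),
      @CompactSpace X' t' ∧ @TopologicalSpace.MetrizableSpace X' t' ∧ Nonempty X' ∧
      (∀ x, a' 1 x = x) ∧ (∀ γ δ x, a' (γ * δ) x = a' γ (a' δ x)) ∧
      (∀ γ, @Continuous X' X' t' t' (a' γ)) ∧
      @WeaklyContains Γ X X' _ t' a a' ∧ @WeaklyContains Γ X' X t' _ a' a := by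
  classical
  -- the countable index of all realized patterns
  let J := Σ W : Finset Γ, Σ k : ℕ, {P : Set (Set (Fin k × Γ)) // P ∈ coverPatterns a W k}
  haveI hfin : ∀ (W : Finset Γ) (k : ℕ),
      Finite {P : Set (Set (Fin k × Γ)) // P ∈ coverPatterns a W k} :=
    fun W k => (coverPatterns_finite a W k).to_subtype
  haveI : Countable J := by
    haveI : ∀ (W : Finset Γ) (k : ℕ),
        Countable {P : Set (Set (Fin k × Γ)) // P ∈ coverPatterns a W k} :=
      fun W k => Finite.to_countable
    infer_instance
  -- choose a cover realizing each pattern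
  have hchoice : ∀ j : J, ∃ C : Fin j.2.1 → Set X, (∀ i, IsClosed (C i)) ∧
      (⋃ i, C i) = Set.univ ∧ localPattern a j.1 C = j.2.2.1 := fun j => j.2.2.2
  choose C0 hC0cl hC0cov hC0lp using hchoice
  -- swell each cover
  have hsw : ∀ j : J, ∃ g : Fin j.2.1 × {γ // γ ∈ j.1} → X → ℝ, (∀ p, Continuous (g p)) ∧
      (∀ i, C0 j i ⊆ swCov a j.1 g i) ∧
      localPattern a j.1 (swCov a j.1 g) = localPattern a j.1 (C0 j) :=
    fun j => cover_swell a ha_cont j.1 (C0 j) (hC0cl j)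
  choose g hgc hgsub hglp using hsw
  -- countable family of functions (with a dummy)
  let N := Option (Σ j : J, Fin j.2.1 × {γ // γ ∈ j.1})
  let F : N → X → ℝ := fun n => n.elim (fun _ => (0 : ℝ)) (fun m => g m.1 m.2)
  have hFc : ∀ n, Continuous (F n) := by
    rintro (_ | m)
    · exact continuous_const
    · exact hgc m.1 m.2
  haveI : Countable N := by
    haveI : ∀ j : J, Countable (Fin j.2.1 × {γ // γ ∈ j.1}) := fun j => inferInstance
    infer_instance
  haveI : Nonempty (Γ × N) := ⟨(1, none)⟩
  obtain ⟨u, hu⟩ := exists_surjective_nat (Γ × N)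
  choose sec hsec using hu
  -- the factor map
  let π : X → (ℕ → ℝ) := fun x m => F (u m).2 (a (u m).1 x)
  have hπc : Continuous π := continuous_pi fun m => (hFc _).comp (ha_cont _)
  let X' := {y : ℕ → ℝ // y ∈ Set.range π}
  let πs : X → X' := fun x => ⟨π x, ⟨x, rfl⟩⟩
  have hsurj : Function.Surjective πs := by
    rintro ⟨y, x, hx⟩
    exact ⟨x, Subtype.ext hx⟩
  -- key computation
  have hπval : ∀ (q : Γ × N) (x : X), π x (sec q) = F q.2 (a q.1 x) := by
    intro q x
    show F (u (sec q)).2 (a (u (sec q)).1 x) = F q.2 (a q.1 x)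
    rw [hsec q]
  let a' : Γ → X' → X' := fun δ y =>
    ⟨fun m => y.1 (sec ((u m).1 * δ, (u m).2)), by
      obtain ⟨x, hx⟩ := y.2
      refine ⟨a δ x, ?_⟩
      funext m
      show F (u m).2 (a (u m).1 (a δ x)) = y.1 (sec ((u m).1 * δ, (u m).2))
      rw [← hx, hπval (((u m).1 * δ, (u m).2)) x, ← ha_mul]⟩
  have hequi : ∀ δ x, πs (a δ x) = a' δ (πs x) := by
    intro δ x
    refine Subtype.ext (funext fun m => ?_)
    show F (u m).2 (a (u m).1 (a δ x)) = π x (sec ((u m).1 * δ, (u m).2))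
    rw [hπval (((u m).1 * δ, (u m).2)) x, ← ha_mul]
  have ha'_one : ∀ y, a' 1 y = y := by
    intro y
    obtain ⟨x, rfl⟩ := hsurj y
    rw [← hequi 1 x, ha_one]
  have ha'_mul : ∀ γ δ y, a' (γ * δ) y = a' γ (a' δ y) := by
    intro γ δ y
    obtain ⟨x, rfl⟩ := hsurj y
    rw [← hequi, ha_mul, ← hequi δ x, ← hequi γ (a δ x)]
  have ha'_cont : ∀ δ, Continuous (a' δ) := by
    intro δ
    refine Continuous.subtype_mk ?_ _
    exact continuous_pi fun m => (continuous_apply _).comp continuous_subtype_val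
  haveI : CompactSpace X' := isCompact_iff_compactSpace.mp (isCompact_range hπc)
  have hπsc : Continuous πs := hπc.subtype_mk _
  refine ⟨X', inferInstance, a', inferInstance, inferInstance, ⟨πs Classical.ofNonempty⟩,
    ha'_one, ha'_mul, ha'_cont, ?_, ?_⟩
  · exact weaklyContains_of_factor a a' πs hπsc hsurj hequi ha_one ha_mul ha'_one ha'_mul
  · -- patterns of a are realized in X'
    intro W k P hP
    set j : J := ⟨W, k, ⟨P, hP⟩⟩ with hj
    let D : Fin k → Set X' := fun i =>
      {y : X' | ∀ p : {γ // γ ∈ W}, y.1 (sec (p.1, some ⟨j, (i, p)⟩)) = 1}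
    have hpre : ∀ i, πs ⁻¹' D i = swCov a W (g j) i := by
      intro i
      ext x
      show (∀ p : {γ // γ ∈ W}, π x (sec (p.1, some ⟨j, (i, p)⟩)) = 1) ↔ _
      constructor
      · intro h p
        have := h p
        rwa [hπval ((p.1, some ⟨j, (i, p)⟩)) x] at this
      · intro h p
        rw [hπval ((p.1, some ⟨j, (i, p)⟩)) x]
        exact h p
    have hDcl : ∀ i, IsClosed (D i) := by
      intro i
      have : D i = ⋂ p : {γ // γ ∈ W}, {y : X' | y.1 (sec (p.1, some ⟨j, (i, p)⟩)) = 1} := by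
        ext y; simp [D, Set.mem_iInter]
      rw [this]
      exact isClosed_iInter fun p =>
        isClosed_eq ((continuous_apply _).comp continuous_subtype_val) continuous_const
    have hDcov : (⋃ i, D i) = Set.univ := by
      rw [Set.eq_univ_iff_forall]
      intro y
      obtain ⟨x, rfl⟩ := hsurj y
      have hx : x ∈ ⋃ i, C0 j i := (hC0cov j).symm ▸ Set.mem_univ x
      obtain ⟨i, hi⟩ := Set.mem_iUnion.mp hx
      have : x ∈ swCov a W (g j) i := hgsub j i hi
      rw [← hpre i] at this
      exact Set.mem_iUnion.mpr ⟨i, this⟩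
    refine ⟨D, hDcl, hDcov, ?_⟩
    have h1 : localPattern a W (fun i => πs ⁻¹' D i) = localPattern a' W D :=
      localPattern_factor a a' πs hsurj hequi ha_one ha_mul ha'_one ha'_mul W D
    have h2 : (fun i => πs ⁻¹' D i) = swCov a W (g j) := funext hpre
    rw [← h1, h2]
    have h3 : localPattern a W (swCov a W (g j)) = localPattern a W (C0 j) := hglp j
    rw [h3]
    exact hC0lp j
end

section
/- Let Γ be a finitely generated group and let a be an action of Γ on Cantor space 𝒞 which weakly contains every action of Γ on Cantor space. Then a is not topologically transitive: there exist nonempty open sets U, V ⊆ 𝒞 such that γ·U ∩ V = ∅ for every γ ∈ Γ. -/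
/-- An action of `Γ` by homeomorphisms on a Cantor space. -/
structure CantorFlow (Γ : Type*) [Group Γ] where
  X : Type
  [ts : TopologicalSpace X]
  cantor : Nonempty (X ≃ₜ (ℕ → Bool))
  act : Γ → X → X
  act_one : ∀ x, act 1 x = x
  act_mul : ∀ γ δ x, act (γ * δ) x = act γ (act δ x)
  act_cont : ∀ γ, Continuous (act γ)

attribute [instance] CantorFlow.ts

/-- `a` weakly contains `b`. -/
def CantorFlow.WeakCont {Γ : Type*} [Group Γ] (a b : CantorFlow Γ) : Prop :=
  ∀ (W : Finset Γ) (k : ℕ) (f : b.X → Fin k), Continuous f →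
    ∃ g : a.X → Fin k, Continuous g ∧ labelPattern b.act W f = labelPattern a.act W g

/-- If `Γ` is finitely generated and `a` is a Cantor `Γ`-action weakly containing every
Cantor `Γ`-action, then `a` is not topologically transitive: there are nonempty open sets
`U, V` with `γ·U ∩ V = ∅` for all `γ`. -/
theorem stmt11 (Γ : Type) [Group Γ] [Group.FG Γ] [Countable Γ]
    (a : CantorFlow Γ) (htop : ∀ b : CantorFlow Γ, a.WeakCont b) :
    ∃ U V : Set a.X, IsOpen U ∧ IsOpen V ∧ U.Nonempty ∧ V.Nonempty ∧
      ∀ γ : Γ, (a.act γ '' U) ∩ V = ∅ := by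
  classical
  -- the trivial action on Cantor space
  let b : CantorFlow Γ :=
    { X := ℕ → Bool
      cantor := ⟨Homeomorph.refl _⟩
      act := fun _ x => x
      act_one := fun _ => rfl
      act_mul := fun _ _ _ => rfl
      act_cont := fun _ => continuous_id }
  obtain ⟨S, hS⟩ := Group.FG.out (G := Γ)
  set W : Finset Γ := insert 1 S with hW
  have h1W : (1 : Γ) ∈ W := Finset.mem_insert_self 1 S
  let f : b.X → Fin 2 := fun x => if x 0 then 1 else 0
  have hfc : Continuous f := by
    have : Continuous fun v : Bool => (if v then (1 : Fin 2) else 0) :=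
      continuous_of_discreteTopology
    exact this.comp (continuous_apply 0)
  obtain ⟨g, hgc, hpat⟩ := htop b W 2 f hfc
  -- the pattern set of f consists exactly of the constant patterns
  have hfp : labelPattern b.act W f = {p | ∃ c : Fin 2, p = fun _ => c} := by
    ext p
    constructor
    · rintro ⟨x, hx⟩
      exact ⟨f x, by funext γ; exact (hx γ).symm⟩
    · rintro ⟨c, rfl⟩
      by_cases hc : c = 1
      · exact ⟨fun _ => true, fun γ => by simp [f, hc]⟩
      · have hc0 : c = 0 := by omega
        exact ⟨fun _ => false, fun γ => by simp [f, hc0]⟩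
  rw [hfp] at hpat
  -- every W-orbit pattern of g is constant
  have hconst : ∀ x : a.X, ∀ γ : {γ // γ ∈ W}, g (a.act γ.1 x) = g x := by
    intro x γ
    have : (fun γ : {γ // γ ∈ W} => g (a.act γ.1 x)) ∈ labelPattern a.act W g :=
      ⟨x, fun _ => rfl⟩
    rw [← hpat] at this
    obtain ⟨c, hc⟩ := this
    have h1 := congrFun hc ⟨1, h1W⟩
    have hγ := congrFun hc γ
    simp only at h1 hγ
    rw [hγ, ← h1, a.act_one]
  -- every constant pattern is attained
  have hattain : ∀ c : Fin 2, ∃ x : a.X, g x = c := by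
    intro c
    have : (fun _ : {γ // γ ∈ W} => c) ∈ labelPattern a.act W g := by
      rw [← hpat]; exact ⟨c, rfl⟩
    obtain ⟨x, hx⟩ := this
    refine ⟨x, ?_⟩
    have := hx ⟨1, h1W⟩
    rwa [a.act_one] at this
  -- g is Γ-invariant since S generates and g is S-invariant
  have hinv : ∀ γ : Γ, ∀ x : a.X, g (a.act γ x) = g x := by
    intro γ
    have hγ : γ ∈ Subgroup.closure (S : Set Γ) := hS ▸ Subgroup.mem_top γ
    induction hγ using Subgroup.closure_induction with
    | mem s hs => exact fun x => hconst x ⟨s, Finset.mem_insert_of_mem hs⟩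
    | one => intro x; rw [a.act_one]
    | mul s t _ _ hs ht => intro x; rw [a.act_mul, hs, ht]
    | inv s _ hs =>
        intro x
        have := hs (a.act s⁻¹ x)
        rwa [← a.act_mul, mul_inv_cancel, a.act_one, eq_comm] at this
  refine ⟨g ⁻¹' {0}, g ⁻¹' {1}, ?_, ?_, ?_, ?_, ?_⟩
  · exact IsOpen.preimage hgc (isOpen_discrete _)
  · exact IsOpen.preimage hgc (isOpen_discrete _)
  · obtain ⟨x, hx⟩ := hattain 0; exact ⟨x, hx⟩
  · obtain ⟨x, hx⟩ := hattain 1; exact ⟨x, hx⟩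
  · intro γ
    ext y
    simp only [Set.mem_inter_iff, Set.mem_image, Set.mem_preimage, Set.mem_singleton_iff,
      Set.mem_empty_iff_false, iff_false, not_and]
    rintro ⟨x, hx0, rfl⟩ h1
    rw [hinv γ x, hx0] at h1
    exact absurd h1 (by decide)
end

section
/- Let Γ be a finitely generated group and let b_⊥ = ∏_W b_W be the product flow, over all finite symmetric subsets W ⊆ Γ, of the shift actions b_W on the spaces C_W of proper colorings. Then for every free action a of Γ on Cantor space, the product flow a × b_⊥ is weakly equivalent to a. In particular, b_⊥ is weakly contained in every free action of Γ on Cantor space. -/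
/-- Proper `(|W|+1)`-colorings of the Cayley graph `Cay(Γ, W)`. -/
def properColorings {Γ : Type*} [Group Γ] (W : Finset Γ) : Set (Γ → Fin (W.card + 1)) :=
  {x | ∀ γ : Γ, ∀ δ ∈ W, δ ≠ 1 → x γ ≠ x (γ * δ)}

/-- The index type of finite symmetric subsets of `Γ`. -/
def SymFinset (Γ : Type*) [Group Γ] : Type _ := {W : Finset Γ // ∀ γ ∈ W, γ⁻¹ ∈ W}

/-- The underlying space of `b_⊥`: the product over all finite symmetric `W ⊆ Γ` of the
spaces `C_W` of proper colorings. -/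
abbrev bBotSpace (Γ : Type*) [Group Γ] : Type _ :=
  ∀ W : SymFinset Γ, ↥(properColorings (Γ := Γ) W.1)

/-- The flow `b_⊥ = ∏_W b_W`: `Γ` acting diagonally by the left shift on each coloring
space `C_W`. -/
def bBotAct (Γ : Type*) [Group Γ] : Γ → bBotSpace Γ → bBotSpace Γ :=
  fun γ x W => ⟨fun δ => (x W).1 (γ⁻¹ * δ), by
    intro α δ hδ hne
    have h := (x W).2 (γ⁻¹ * α) δ hδ hne
    simpa [mul_assoc] using h⟩

/-- The product of two actions. -/
def prodAct {Γ : Type*} {X Y : Type*} (a : Γ → X → X) (b : Γ → Y → Y) :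
    Γ → X × Y → X × Y :=
  fun γ p => (a γ p.1, b γ p.2)

section Greedy

variable {Γ X : Type} [Group Γ] [DecidableEq Γ]

noncomputable def pickCol {d : ℕ} (F : Finset (Fin (d+1))) : Fin (d+1) :=
  if h : (Fᶜ).Nonempty then Fᶜ.min' h else 0

lemma pickCol_not_mem {d : ℕ} {F : Finset (Fin (d+1))} (hF : F.card ≤ d) : pickCol F ∉ F := by
  have hcard : 0 < (Fᶜ).card := by
    rw [Finset.card_compl]
    have : Fintype.card (Fin (d+1)) = d + 1 := Fintype.card_fin _
    omega
  have hne : (Fᶜ).Nonempty := Finset.card_pos.mp hcard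
  have hm := Finset.min'_mem (Fᶜ) hne
  rw [Finset.mem_compl] at hm
  rw [pickCol, dif_pos hne]
  exact hm

noncomputable def colStage (a : Γ → X → X) (V : Finset Γ) (d : ℕ)
    (idx : X → ℕ) (fc : ℕ → Option (Fin (d+1))) : ℕ → X → Option (Fin (d+1))
  | 0, _ => none
  | (n+1), x =>
    if idx x = n then
      some (match fc n with
        | some c => c
        | none => pickCol (((V.filter (fun v => v ≠ 1)).image
            (fun v => colStage a V d idx fc n (a v x))).biUnion (fun o => o.toFinset)))
    else colStage a V d idx fc n x

noncomputable def colFun (a : Γ → X → X) (V : Finset Γ) (d : ℕ)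
    (idx : X → ℕ) (fc : ℕ → Option (Fin (d+1))) (x : X) : Fin (d+1) :=
  match fc (idx x) with
  | some c => c
  | none => pickCol (((V.filter (fun v => v ≠ 1)).image
      (fun v => colStage a V d idx fc (idx x) (a v x))).biUnion (fun o => o.toFinset))

variable {a : Γ → X → X} {V : Finset Γ} {d : ℕ} {idx : X → ℕ} {fc : ℕ → Option (Fin (d+1))}

lemma colStage_succ_self (x : X) :
    colStage a V d idx fc (idx x + 1) x = some (colFun a V d idx fc x) := by
  simp only [colStage, if_true]
  rfl

lemma colStage_of_lt : ∀ {n : ℕ} (x : X), idx x < n →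
    colStage a V d idx fc n x = some (colFun a V d idx fc x) := by
  intro n
  induction n with
  | zero => intro x hx; omega
  | succ n ih =>
    intro x hx
    by_cases h : idx x = n
    · rw [← h]; exact colStage_succ_self x
    · have h2 : idx x < n := by omega
      simp only [colStage]
      rw [if_neg h]
      exact ih x h2

lemma colFun_lt_ne (hd : (V.filter (fun v => v ≠ 1)).card ≤ d)
    (hsym : ∀ v ∈ V, v⁻¹ ∈ V)
    (ha_one : ∀ x, a 1 x = x) (ha_mul : ∀ γ δ x, a (γ * δ) x = a γ (a δ x))
    (hfc : ∀ i j, i ≤ j → fc j ≠ none → fc i ≠ none)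
    (hG2 : ∀ (x : X), ∀ v ∈ V, v ≠ 1 → ∀ c c', fc (idx x) = some c →
      fc (idx (a v x)) = some c' → c ≠ c')
    {x : X} {v : Γ} (hv : v ∈ V) (hv1 : v ≠ 1) (hlt : idx x < idx (a v x)) :
    colFun a V d idx fc (a v x) ≠ colFun a V d idx fc x := by
  have hinvx : a v⁻¹ (a v x) = x := by
    rw [← ha_mul, inv_mul_cancel, ha_one]
  rcases hy : fc (idx (a v x)) with _ | c'
  · -- greedy at a v x
    have hstep : colFun a V d idx fc (a v x) =
        pickCol (((V.filter (fun v' => v' ≠ 1)).image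
          (fun v' => colStage a V d idx fc (idx (a v x)) (a v' (a v x)))).biUnion
          (fun o => o.toFinset)) := by
      rw [colFun, hy]
    set F := ((V.filter (fun v' => v' ≠ 1)).image
          (fun v' => colStage a V d idx fc (idx (a v x)) (a v' (a v x)))).biUnion
          (fun o => o.toFinset) with hF
    have hmem : colFun a V d idx fc x ∈ F := by
      apply Finset.mem_biUnion.mpr
      refine ⟨some (colFun a V d idx fc x), ?_, by simp⟩
      apply Finset.mem_image.mpr
      refine ⟨v⁻¹, Finset.mem_filter.mpr ⟨hsym v hv, inv_ne_one.mpr hv1⟩, ?_⟩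
      rw [hinvx]
      exact colStage_of_lt x hlt
    have hcard : F.card ≤ d := by
      set img := (V.filter (fun v' => v' ≠ 1)).image
          (fun v' => colStage a V d idx fc (idx (a v x)) (a v' (a v x))) with himg
      calc F.card ≤ ∑ o ∈ img, o.toFinset.card := Finset.card_biUnion_le
        _ ≤ ∑ _o ∈ img, 1 := by
            apply Finset.sum_le_sum
            rintro (_ | o) _ <;> simp
        _ ≤ (V.filter (fun v' => v' ≠ 1)).card := by
            rw [Finset.sum_const, smul_eq_mul, mul_one]
            exact Finset.card_image_le
        _ ≤ d := hd
    rw [hstep]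
    exact fun h => (pickCol_not_mem hcard) (h ▸ hmem)
  · -- fixed at a v x
    have hx : fc (idx x) ≠ none := hfc _ _ (le_of_lt hlt) (by rw [hy]; simp)
    rcases hx' : fc (idx x) with _ | c
    · exact absurd hx' hx
    · have hne := hG2 x v hv hv1 c c' hx' hy
      have e1 : colFun a V d idx fc x = c := by rw [colFun, hx']
      have e2 : colFun a V d idx fc (a v x) = c' := by rw [colFun, hy]
      rw [e1, e2]
      exact hne.symm

lemma colFun_proper (hd : (V.filter (fun v => v ≠ 1)).card ≤ d)
    (hsym : ∀ v ∈ V, v⁻¹ ∈ V)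
    (ha_one : ∀ x, a 1 x = x) (ha_mul : ∀ γ δ x, a (γ * δ) x = a γ (a δ x))
    (hfc : ∀ i j, i ≤ j → fc j ≠ none → fc i ≠ none)
    (hG1 : ∀ (x : X), ∀ v ∈ V, v ≠ 1 → idx (a v x) ≠ idx x)
    (hG2 : ∀ (x : X), ∀ v ∈ V, v ≠ 1 → ∀ c c', fc (idx x) = some c →
      fc (idx (a v x)) = some c' → c ≠ c') :
    ∀ (x : X), ∀ v ∈ V, v ≠ 1 → colFun a V d idx fc x ≠ colFun a V d idx fc (a v x) := by
  intro x v hv hv1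
  rcases Ne.lt_or_gt (hG1 x v hv hv1) with h | h
  · -- idx (a v x) < idx x : apply lemma at point (a v x) with v⁻¹
    have hinvx : a v⁻¹ (a v x) = x := by rw [← ha_mul, inv_mul_cancel, ha_one]
    have := colFun_lt_ne hd hsym ha_one ha_mul hfc hG2 (hsym v hv) (inv_ne_one.mpr hv1)
      (x := a v x) (by rw [hinvx]; exact h)
    rw [hinvx] at this
    exact this
  · exact (colFun_lt_ne hd hsym ha_one ha_mul hfc hG2 hv hv1 h).symm

lemma colStage_locConst [TopologicalSpace X] (ha_cont : ∀ γ, Continuous (a γ))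
    (hidx : ∀ x : X, ∃ U, IsClopen U ∧ x ∈ U ∧ ∀ z ∈ U, idx z = idx x) :
    ∀ (n : ℕ) (x : X), ∃ U, IsClopen U ∧ x ∈ U ∧
      ∀ z ∈ U, colStage a V d idx fc n z = colStage a V d idx fc n x := by
  intro n
  induction n with
  | zero => exact fun x => ⟨Set.univ, isClopen_univ, trivial, fun z _ => rfl⟩
  | succ n ih =>
    intro x
    obtain ⟨U₀, hU₀c, hU₀x, hU₀⟩ := ih x
    obtain ⟨W₀, hWc, hWx, hW⟩ := hidx x
    choose Uv hUvc hUvx hUv using fun v : Γ => ih (a v x)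
    refine ⟨W₀ ∩ U₀ ∩ ⋂ v ∈ (V : Set Γ), (a v) ⁻¹' (Uv v), ?_, ?_, ?_⟩
    · exact (hWc.inter hU₀c).inter
        (Set.Finite.isClopen_biInter V.finite_toSet (fun v _ => (hUvc v).preimage (ha_cont v)))
    · exact ⟨⟨hWx, hU₀x⟩, Set.mem_iInter₂.mpr fun v _ => hUvx v⟩
    · rintro z ⟨⟨hzW, hzU₀⟩, hzV⟩
      rw [Set.mem_iInter₂] at hzV
      have hidxz : idx z = idx x := hW z hzW
      by_cases h : idx x = n
      · simp only [colStage]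
        rw [if_pos (hidxz.trans h), if_pos h]
        congr 1
        rcases fc n with _ | c
        · simp only []
          congr 1
          congr 1
          apply Finset.image_congr
          intro v hv
          rw [Finset.coe_filter] at hv
          exact hUv v (a v z) (hzV v hv.1)
        · rfl
      · simp only [colStage]
        rw [if_neg (fun hh => h (hidxz ▸ hh)), if_neg h]
        exact hU₀ z hzU₀

lemma colFun_locConst [TopologicalSpace X] (ha_cont : ∀ γ, Continuous (a γ))
    (hidx : ∀ x : X, ∃ U, IsClopen U ∧ x ∈ U ∧ ∀ z ∈ U, idx z = idx x) :
    ∀ x : X, ∃ U, IsClopen U ∧ x ∈ U ∧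
      ∀ z ∈ U, colFun a V d idx fc z = colFun a V d idx fc x := by
  intro x
  obtain ⟨W₀, hWc, hWx, hW⟩ := hidx x
  obtain ⟨U, hUc, hUx, hU⟩ := colStage_locConst ha_cont hidx (idx x + 1) x
  refine ⟨W₀ ∩ U, hWc.inter hUc, ⟨hWx, hUx⟩, ?_⟩
  rintro z ⟨hzW, hzU⟩
  have hzi : idx z = idx x := hW z hzW
  have h1 : colStage a V d idx fc (idx x + 1) z = some (colFun a V d idx fc z) := by
    rw [show idx x + 1 = idx z + 1 by rw [hzi]]
    exact colStage_succ_self z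
  have h2 := colStage_succ_self (a := a) (V := V) (d := d) (fc := fc) (idx := idx) x
  have := h1.symm.trans ((hU z hzU).trans h2)
  exact Option.some_injective _ this

end Greedy

section Master

open Classical in
lemma exists_proper_coloring {Γ X : Type} [Group Γ] [TopologicalSpace X] [CompactSpace X]
    [Nonempty X]
    (hsep : ∀ p q : X, p ≠ q → ∃ U : Set X, IsClopen U ∧ p ∈ U ∧ q ∉ U)
    (a : Γ → X → X)
    (ha_one : ∀ x, a 1 x = x) (ha_mul : ∀ γ δ x, a (γ * δ) x = a γ (a δ x))
    (ha_cont : ∀ γ, Continuous (a γ))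
    (ha_free : ∀ (γ : Γ) (x : X), a γ x = x → γ = 1)
    (V : Finset Γ) (hVsym : ∀ v ∈ V, v⁻¹ ∈ V)
    (Z : Finset X) (κ : X → Fin (V.card + 1))
    (hκ : ∀ z ∈ Z, ∀ z' ∈ Z, ∀ v ∈ V, v ≠ 1 → a v z = z' → κ z ≠ κ z') :
    ∃ c : X → Fin (V.card + 1), Continuous c ∧
      (∀ x, ∀ v ∈ V, v ≠ 1 → c x ≠ c (a v x)) ∧ (∀ z ∈ Z, c z = κ z) := by
  classical
  -- separating clopen sets
  obtain ⟨sep, hsep'⟩ : ∃ sep : X → X → Set X, ∀ p q,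
      IsClopen (sep p q) ∧ p ∈ sep p q ∧ (p ≠ q → q ∉ sep p q) := by
    refine ⟨fun p q => if h : p ≠ q then Classical.choose (hsep p q h) else Set.univ, ?_⟩
    intro p q
    dsimp only
    by_cases h : p ≠ q
    · rw [dif_pos h]
      obtain ⟨h1, h2, h3⟩ := Classical.choose_spec (hsep p q h)
      exact ⟨h1, h2, fun _ => h3⟩
    · rw [dif_neg h]
      exact ⟨isClopen_univ, trivial, fun h' => absurd h' h⟩
  -- the prescribed clopen sets around Z
  set A : X → Set X := fun z =>
    (⋂ z' ∈ (Z : Set X), sep z z') ∩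
    ((⋂ z' ∈ (Z : Set X), ⋂ v ∈ (V : Set Γ),
        if a v z ≠ z' then (a v) ⁻¹' (sep (a v z) z') else Set.univ) ∩
     (⋂ w ∈ (Z : Set X), ⋂ v ∈ (V : Set Γ),
        if a v w ≠ z then (sep (a v w) z)ᶜ else Set.univ)) with hA
  have hAcl : ∀ z, IsClopen (A z) := by
    intro z
    refine IsClopen.inter ?_ (IsClopen.inter ?_ ?_)
    · exact Set.Finite.isClopen_biInter Z.finite_toSet (fun z' _ => (hsep' z z').1)
    · refine Set.Finite.isClopen_biInter Z.finite_toSet (fun z' _ => ?_)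
      refine Set.Finite.isClopen_biInter V.finite_toSet (fun v _ => ?_)
      split_ifs
      · exact (hsep' (a v z) z').1.preimage (ha_cont v)
      · exact isClopen_univ
    · refine Set.Finite.isClopen_biInter Z.finite_toSet (fun w _ => ?_)
      refine Set.Finite.isClopen_biInter V.finite_toSet (fun v _ => ?_)
      split_ifs
      · exact (hsep' (a v w) z).1.compl
      · exact isClopen_univ
  have hAmem : ∀ z, z ∈ A z := by
    intro z
    refine ⟨Set.mem_iInter₂.mpr fun z' _ => (hsep' z z').2.1,
            Set.mem_iInter₂.mpr fun z' _ => Set.mem_iInter₂.mpr fun v _ => ?_,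
            Set.mem_iInter₂.mpr fun w _ => Set.mem_iInter₂.mpr fun v _ => ?_⟩
    · split_ifs with h
      · exact (hsep' (a v z) z').2.1
      · trivial
    · split_ifs with h
      · exact (hsep' (a v w) z).2.2 h
      · trivial
  have hAz' : ∀ z, ∀ z' ∈ Z, z' ≠ z → z' ∉ A z := by
    intro z z' hz' hne hmem
    have h1 := hmem.1
    rw [Set.mem_iInter₂] at h1
    exact (hsep' z z').2.2 (fun h => hne h.symm) (h1 z' hz')
  have hAdisj : ∀ z ∈ Z, ∀ z' ∈ Z, ∀ v ∈ V, a v z ≠ z' → ∀ x ∈ A z, a v x ∉ A z' := by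
    intro z hz z' hz' v hv hne x hx hvx
    have h2 := hx.2.1
    rw [Set.mem_iInter₂] at h2
    have h2' := h2 z' hz'
    rw [Set.mem_iInter₂] at h2'
    have hin : a v x ∈ sep (a v z) z' := by
      have := h2' v hv
      rwa [if_pos hne] at this
    have h3 := hvx.2.2
    rw [Set.mem_iInter₂] at h3
    have h3' := h3 z hz
    rw [Set.mem_iInter₂] at h3'
    have hout : a v x ∈ (sep (a v z) z')ᶜ := by
      have := h3' v hv
      rwa [if_pos hne] at this
    exact hout hin
  -- the covering independent sets
  have hcov : ∀ x : X, ∃ U : Set X, IsClopen U ∧ x ∈ U ∧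
      ∀ v ∈ V, v ≠ 1 → ∀ y ∈ U, a v y ∉ U := by
    intro x
    refine ⟨⋂ v ∈ (V : Set Γ), if v ≠ 1 then sep x (a v x) ∩ (a v) ⁻¹' (sep x (a v x))ᶜ
        else Set.univ, ?_, ?_, ?_⟩
    · refine Set.Finite.isClopen_biInter V.finite_toSet (fun v _ => ?_)
      split_ifs
      · exact ((hsep' x (a v x)).1).inter (((hsep' x (a v x)).1.compl).preimage (ha_cont v))
      · exact isClopen_univ
    · refine Set.mem_iInter₂.mpr fun v _ => ?_
      split_ifs with h
      · have hne : x ≠ a v x := fun heq => h (ha_free v x heq.symm)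
        exact ⟨(hsep' x (a v x)).2.1, (hsep' x (a v x)).2.2 hne⟩
      · trivial
    · intro v hv hv1 y hy hvy
      rw [Set.mem_iInter₂] at hy hvy
      have hy' := hy v hv
      have hvy' := hvy v hv
      rw [if_pos hv1] at hy' hvy'
      exact hy'.2 hvy'.1
  choose Ucov hUcov using hcov
  obtain ⟨t, ht⟩ := IsCompact.elim_finite_subcover isCompact_univ Ucov
    (fun x => (hUcov x).1.isOpen) (fun x _ => Set.mem_iUnion.mpr ⟨x, (hUcov x).2.1⟩)
  set x₀ : X := Classical.arbitrary X with hx₀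
  set zl : List X := Z.toList with hzl
  set tl : List X := t.toList with htl
  set r : ℕ := zl.length with hr
  set S : ℕ → Set X := fun i => if i < r then A (zl.getD i x₀) else Ucov (tl.getD (i - r) x₀)
    with hS
  set fc : ℕ → Option (Fin (V.card+1)) := fun i => if i < r then some (κ (zl.getD i x₀)) else none
    with hfc
  have hexists : ∀ x : X, ∃ i, x ∈ S i := by
    intro x
    have hx := ht (Set.mem_univ x)
    rw [Set.mem_iUnion₂] at hx
    obtain ⟨w, hw, hxw⟩ := hx
    obtain ⟨j, hj, hjw⟩ := List.mem_iff_getElem.mp (Finset.mem_toList.mpr hw)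
    refine ⟨r + j, ?_⟩
    have h1 : ¬ (r + j < r) := by omega
    have h2 : r + j - r = j := by omega
    rw [hS]
    simp only [h1, if_false, h2]
    rw [List.getD_eq_getElem _ _ hj, hjw]
    exact hxw
  set idx : X → ℕ := fun x => Nat.find (hexists x) with hidx
  have hidx_mem : ∀ x, x ∈ S (idx x) := fun x => Nat.find_spec (hexists x)
  have hidx_min : ∀ x, ∀ j, j < idx x → x ∉ S j := fun x j hj => Nat.find_min (hexists x) hj
  have hidx_le : ∀ x i, x ∈ S i → idx x ≤ i := fun x i h => Nat.find_le h
  have hzl_mem : ∀ i, i < r → zl.getD i x₀ ∈ Z := by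
    intro i hi
    rw [List.getD_eq_getElem _ _ hi]
    exact Finset.mem_toList.mp (List.getElem_mem hi)
  have hSclopen : ∀ i, IsClopen (S i) := by
    intro i
    rw [hS]
    dsimp only
    split_ifs
    · exact hAcl _
    · exact (hUcov _).1
  have hidx_lc : ∀ x, ∃ U, IsClopen U ∧ x ∈ U ∧ ∀ z ∈ U, idx z = idx x := by
    intro x
    refine ⟨S (idx x) ∩ ⋂ j ∈ Finset.range (idx x), (S j)ᶜ, ?_, ?_, ?_⟩
    · exact (hSclopen _).inter (isClopen_biInter_finset fun j _ => (hSclopen j).compl)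
    · exact ⟨hidx_mem x, Set.mem_iInter₂.mpr fun j hj =>
        hidx_min x j (Finset.mem_range.mp hj)⟩
    · rintro z ⟨hz1, hz2⟩
      rw [Set.mem_iInter₂] at hz2
      have h1 : idx z ≤ idx x := hidx_le z _ hz1
      rcases Nat.lt_or_ge (idx z) (idx x) with h | h
      · exact absurd (hidx_mem z) (hz2 (idx z) (Finset.mem_range.mpr h))
      · omega
  -- hypotheses for the greedy lemmas
  have hG1 : ∀ (x : X), ∀ v ∈ V, v ≠ 1 → idx (a v x) ≠ idx x := by
    intro x v hv hv1 heq
    have hx : x ∈ S (idx x) := hidx_mem x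
    have hy : a v x ∈ S (idx x) := heq ▸ hidx_mem (a v x)
    rw [hS] at hx hy
    dsimp only at hx hy
    by_cases hir : idx x < r
    · rw [if_pos hir] at hx hy
      have hz := hzl_mem _ hir
      have hne : a v (zl.getD (idx x) x₀) ≠ zl.getD (idx x) x₀ :=
        fun h => hv1 (ha_free v _ h)
      exact hAdisj _ hz _ hz v hv hne x hx hy
    · rw [if_neg hir] at hx hy
      exact (hUcov _).2.2 v hv hv1 x hx hy
  have hG2 : ∀ (x : X), ∀ v ∈ V, v ≠ 1 → ∀ c c', fc (idx x) = some c →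
      fc (idx (a v x)) = some c' → c ≠ c' := by
    intro x v hv hv1 c c' hcx hcy
    have hxr : idx x < r := by
      by_contra h
      rw [hfc] at hcx
      simp only [if_neg h] at hcx
      cases hcx
    have hyr : idx (a v x) < r := by
      by_contra h
      rw [hfc] at hcy
      simp only [if_neg h] at hcy
      cases hcy
    rw [hfc] at hcx hcy
    simp only [if_pos hxr] at hcx
    simp only [if_pos hyr] at hcy
    have hcx' : κ (zl.getD (idx x) x₀) = c := Option.some_injective _ hcx
    have hcy' : κ (zl.getD (idx (a v x)) x₀) = c' := Option.some_injective _ hcy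
    have hx : x ∈ A (zl.getD (idx x) x₀) := by
      have := hidx_mem x
      rw [hS] at this
      dsimp only at this
      rwa [if_pos hxr] at this
    have hy : a v x ∈ A (zl.getD (idx (a v x)) x₀) := by
      have := hidx_mem (a v x)
      rw [hS] at this
      dsimp only at this
      rwa [if_pos hyr] at this
    by_cases h : a v (zl.getD (idx x) x₀) = zl.getD (idx (a v x)) x₀
    · rw [← hcx', ← hcy']
      exact hκ _ (hzl_mem _ hxr) _ (hzl_mem _ hyr) v hv hv1 h
    · exact absurd hy (hAdisj _ (hzl_mem _ hxr) _ (hzl_mem _ hyr) v hv h x hx)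
  have hfc_mono : ∀ i j, i ≤ j → fc j ≠ none → fc i ≠ none := by
    intro i j hij hj
    rw [hfc] at hj ⊢
    dsimp only at hj ⊢
    by_cases h : j < r
    · rw [if_pos (lt_of_le_of_lt hij h)]
      simp
    · rw [if_neg h] at hj
      exact absurd rfl hj
  have hfc_z : ∀ z ∈ Z, fc (idx z) = some (κ z) := by
    intro z hz
    obtain ⟨i₀, hi₀, hzi₀⟩ := List.mem_iff_getElem.mp (Finset.mem_toList.mpr hz)
    have hi₀r : i₀ < r := by rw [hr]; exact hi₀
    have hzS : z ∈ S i₀ := by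
      rw [hS]
      dsimp only
      rw [if_pos hi₀r, List.getD_eq_getElem _ _ hi₀, hzi₀]
      exact hAmem z
    have hlt : idx z < r := lt_of_le_of_lt (hidx_le _ _ hzS) hi₀r
    have hmem := hidx_mem z
    rw [hS] at hmem
    dsimp only at hmem
    rw [if_pos hlt] at hmem
    have hz₁ : zl.getD (idx z) x₀ ∈ Z := hzl_mem _ hlt
    have heq : zl.getD (idx z) x₀ = z := by
      by_contra h
      exact hAz' _ z hz (fun h' => h h'.symm) hmem
    rw [hfc]
    dsimp only
    rw [if_pos hlt, heq]
  have hd : (V.filter (fun v => v ≠ 1)).card ≤ V.card := Finset.card_filter_le _ _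
  refine ⟨colFun a V V.card idx fc, ?_, ?_, ?_⟩
  · apply IsLocallyConstant.continuous
    rw [IsLocallyConstant.iff_exists_open]
    intro x
    obtain ⟨U, hUc, hUx, hU⟩ := colFun_locConst ha_cont hidx_lc x
    exact ⟨U, hUc.isOpen, hUx, hU⟩
  · exact colFun_proper hd hVsym ha_one ha_mul hfc_mono hG1 hG2
  · intro z hz
    rw [colFun, hfc_z z hz]

end Master


section Topo

lemma pi_discrete_cylinder {ι : Type*} {α : ι → Type*} [∀ i, TopologicalSpace (α i)]
    [∀ i, DiscreteTopology (α i)] {g : ∀ i, α i} {s : Set (∀ i, α i)} (hs : s ∈ nhds g) :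
    ∃ I : Finset ι, {h : ∀ i, α i | ∀ i ∈ I, h i = g i} ⊆ s := by
  classical
  rw [nhds_pi, Filter.mem_pi] at hs
  obtain ⟨I, hIf, t, ht, hsub⟩ := hs
  refine ⟨hIf.toFinset, fun h hh => hsub (Set.mem_pi.mpr fun i hi => ?_)⟩
  have : h i = g i := hh i (hIf.mem_toFinset.mpr hi)
  rw [this]
  exact mem_of_mem_nhds (ht i)

lemma isClosed_properColorings {Γ : Type} [Group Γ] (W : Finset Γ) :
    IsClosed (properColorings (Γ := Γ) W) := by
  have : properColorings (Γ := Γ) W =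
      ⋂ (γ : Γ), ⋂ (δ : Γ), ⋂ (_ : δ ∈ W), ⋂ (_ : δ ≠ 1),
        {x : Γ → Fin (W.card + 1) | x γ ≠ x (γ * δ)} := by
    ext x
    simp only [properColorings, Set.mem_setOf_eq, Set.mem_iInter]
  rw [this]
  refine isClosed_iInter fun γ => isClosed_iInter fun δ =>
    isClosed_iInter fun _ => isClosed_iInter fun _ => ?_
  have hc : Continuous (fun x : Γ → Fin (W.card + 1) => (x γ, x (γ * δ))) :=
    (continuous_apply γ).prodMk (continuous_apply (γ * δ))
  exact IsClosed.preimage hc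
    (isClosed_discrete {p : Fin (W.card + 1) × Fin (W.card + 1) | p.1 ≠ p.2})

lemma bBot_cylinder {Γ : Type} [Group Γ] {y : bBotSpace Γ} {s : Set (bBotSpace Γ)}
    (hs : s ∈ nhds y) :
    ∃ (SS : Finset (SymFinset Γ)) (D : Finset Γ),
      {y' : bBotSpace Γ | ∀ V ∈ SS, ∀ δ ∈ D,
        ((y' V : Γ → Fin (V.1.card+1)) δ) = ((y V : Γ → Fin (V.1.card+1)) δ)} ⊆ s := by
  classical
  rw [nhds_pi, Filter.mem_pi] at hs
  obtain ⟨I, hIf, t, ht, hsub⟩ := hs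
  have key : ∀ V : SymFinset Γ, ∃ D : Finset Γ, V ∈ I →
      ∀ y' : ↥(properColorings (Γ := Γ) V.1),
        (∀ δ ∈ D, (y' : Γ → Fin (V.1.card+1)) δ = (y V : Γ → Fin (V.1.card+1)) δ) →
          y' ∈ t V := by
    intro V
    by_cases hV : V ∈ I
    · have htV : t V ∈ nhds (y V) := ht V
      rw [nhds_subtype, Filter.mem_comap] at htV
      obtain ⟨u, hu, husub⟩ := htV
      obtain ⟨D, hD⟩ := pi_discrete_cylinder (g := ((y V : Γ → Fin (V.1.card+1)))) hu
      exact ⟨D, fun _ y' hy' => husub (hD hy')⟩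
    · exact ⟨∅, fun h => absurd h hV⟩
  choose D hD using key
  refine ⟨hIf.toFinset, hIf.toFinset.biUnion D,
    fun y' hy' => hsub (Set.mem_pi.mpr fun V hV => ?_)⟩
  exact hD V hV (y' V) (fun δ hδ => hy' V (hIf.mem_toFinset.mpr hV) δ
    (Finset.mem_biUnion.mpr ⟨V, hIf.mem_toFinset.mpr hV, hδ⟩))

lemma not_countable_nat_bool : ¬ Countable (ℕ → Bool) := by
  intro h
  obtain ⟨f, hf⟩ := (countable_iff_exists_injective (ℕ → Bool)).mp h
  classical
  have hinj : Function.Injective (fun s : Set ℕ => f (fun n => if n ∈ s then true else false)) := by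
    intro s s' h'
    have h2 := hf h'
    ext n
    have h3 := congrFun h2 n
    by_cases hn : n ∈ s <;> by_cases hn' : n ∈ s' <;> simp [hn, hn'] at h3 ⊢ <;> tauto
  exact Function.cantor_injective _ hinj

lemma countable_of_fg {Γ : Type} [Group Γ] [Group.FG Γ] : Countable Γ := by
  obtain ⟨S, hclos, hfin⟩ := Monoid.fg_iff.mp (Group.fg_iff_monoid_fg.mp ‹Group.FG Γ›)
  haveI : Countable S := hfin.countable.to_subtype
  apply Function.Surjective.countable (f := fun l : List S => (l.map Subtype.val).prod)
  intro x
  have hx : x ∈ Submonoid.closure S := hclos ▸ Submonoid.mem_top x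
  obtain ⟨l, hl, hp⟩ := Submonoid.exists_list_of_mem_closure hx
  refine ⟨l.attach.map (fun y => (⟨y.1, hl y.1 y.2⟩ : S)), ?_⟩
  dsimp only
  rw [List.map_map]
  have hmap : (Subtype.val ∘ fun y : {x // x ∈ l} => (⟨y.1, hl y.1 y.2⟩ : S)) =
      fun y : {x // x ∈ l} => y.1 := rfl
  rw [hmap]
  simpa using hp

lemma exists_avoid {X : Type} [TopologicalSpace X] (e : X ≃ₜ (ℕ → Bool)) {Q : Set X}
    (hQ : IsOpen Q) {z₀ : X} (hz₀ : z₀ ∈ Q) {S : Set X} (hS : S.Countable) :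
    ∃ x ∈ Q, x ∉ S := by
  classical
  by_contra hcon
  push_neg at hcon
  have hQS : Q ⊆ S := fun x hx => hcon x hx
  have hmem : e.symm ⁻¹' Q ∈ nhds (e z₀) := by
    have : IsOpen (e.symm ⁻¹' Q) := hQ.preimage e.symm.continuous
    exact this.mem_nhds (by simp [hz₀])
  obtain ⟨I, hI⟩ := pi_discrete_cylinder hmem
  set N := (I.sup id) + 1 with hN
  set j : (ℕ → Bool) → (ℕ → Bool) := fun g i => if i < N then e z₀ i else g (i - N) with hj
  have hjinj : Function.Injective j := by
    intro g g' hgg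
    funext i
    have h1 := congrFun hgg (i + N)
    have h2 : ¬ (i + N < N) := by omega
    simpa [hj, h2] using h1
  have hjm : ∀ g, j g ∈ {h : ℕ → Bool | ∀ i ∈ I, h i = e z₀ i} := by
    intro g i hi
    have : i < N := by
      have h1 : i ≤ I.sup id := Finset.le_sup (f := id) hi
      omega
    simp [hj, this]
  have hcnt : Countable (ℕ → Bool) := by
    haveI hSc : Countable ↥S := hS.to_subtype
    have hinj : Function.Injective (fun g : ℕ → Bool =>
        (⟨e.symm (j g), hQS (hI (hjm g))⟩ : ↥S)) := by
      intro g g' hgg'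
      have : e.symm (j g) = e.symm (j g') := congrArg Subtype.val hgg'
      exact hjinj (e.symm.injective this)
    exact hinj.countable
  exact not_countable_nat_bool hcnt

end Topo

section FD

lemma prod_cylinder {Γ X : Type} [Group Γ] [TopologicalSpace X]
    (e : X ≃ₜ (ℕ → Bool)) {O : Set (X × bBotSpace Γ)} (hO : IsOpen O)
    {p : X × bBotSpace Γ} (hp : p ∈ O) :
    ∃ (I : Finset ℕ) (SS : Finset (SymFinset Γ)) (D : Finset Γ),
      ∀ q : X × bBotSpace Γ, (∀ i ∈ I, e q.1 i = e p.1 i) →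
        (∀ V ∈ SS, ∀ δ ∈ D, (q.2 V : Γ → Fin (V.1.card+1)) δ
          = (p.2 V : Γ → Fin (V.1.card+1)) δ) →
        q ∈ O := by
  rw [isOpen_prod_iff] at hO
  obtain ⟨u, v, hu, hv, hpu, hpv, huv⟩ := hO p.1 p.2 hp
  have hu' : e.symm ⁻¹' u ∈ nhds (e p.1) :=
    (hu.preimage e.symm.continuous).mem_nhds (by simp [hpu])
  obtain ⟨I, hI⟩ := pi_discrete_cylinder hu'
  obtain ⟨SS, D, hSD⟩ := bBot_cylinder (hv.mem_nhds hpv)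
  refine ⟨I, SS, D, fun q hq1 hq2 => huv ?_⟩
  have h1 : q.1 ∈ u := by
    have := hI (show e q.1 ∈ {h : ℕ → Bool | ∀ i ∈ I, h i = e p.1 i} from fun i hi => hq1 i hi)
    simpa using this
  have h2 : q.2 ∈ v := hSD (fun V hV δ hδ => hq2 V hV δ hδ)
  exact Set.mem_prod.mpr ⟨h1, h2⟩

lemma finite_dep {Γ X : Type} [Group Γ] [TopologicalSpace X] [CompactSpace X]
    [∀ W : SymFinset Γ, CompactSpace (properColorings (Γ := Γ) W.1)]
    (e : X ≃ₜ (ℕ → Bool)) {k : ℕ} (f : X × bBotSpace Γ → Fin k) (hf : Continuous f) :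
    ∃ (I : Finset ℕ) (SS : Finset (SymFinset Γ)) (D : Finset Γ),
      ∀ p q : X × bBotSpace Γ, (∀ i ∈ I, e p.1 i = e q.1 i) →
        (∀ V ∈ SS, ∀ δ ∈ D, (p.2 V : Γ → Fin (V.1.card+1)) δ
          = (q.2 V : Γ → Fin (V.1.card+1)) δ) →
        f p = f q := by
  classical
  have hdata : ∀ p : X × bBotSpace Γ,
      ∃ (I : Finset ℕ) (SS : Finset (SymFinset Γ)) (D : Finset Γ),
      ∀ q, (∀ i ∈ I, e q.1 i = e p.1 i) →
        (∀ V ∈ SS, ∀ δ ∈ D, (q.2 V : Γ → Fin (V.1.card+1)) δ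
          = (p.2 V : Γ → Fin (V.1.card+1)) δ) → f q = f p := by
    intro p
    have hO : IsOpen (f ⁻¹' {f p}) := (isOpen_discrete _).preimage hf
    obtain ⟨I, SS, D, h⟩ := prod_cylinder e hO (show p ∈ f ⁻¹' {f p} from rfl)
    exact ⟨I, SS, D, fun q h1 h2 => h q h1 h2⟩
  choose If Sf Df hIf using hdata
  set U : X × bBotSpace Γ → Set (X × bBotSpace Γ) := fun p =>
    (⋂ i ∈ If p, {q : X × bBotSpace Γ | e q.1 i = e p.1 i}) ∩
    (⋂ V ∈ Sf p, ⋂ δ ∈ Df p, {q : X × bBotSpace Γ |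
      (q.2 V : Γ → Fin (V.1.card+1)) δ = (p.2 V : Γ → Fin (V.1.card+1)) δ}) with hU
  have hUopen : ∀ p, IsOpen (U p) := by
    intro p
    apply IsOpen.inter
    · apply isOpen_biInter_finset
      intro i _
      have hc : Continuous (fun q : X × bBotSpace Γ => e q.1 i) :=
        (continuous_apply i).comp (e.continuous.comp continuous_fst)
      exact IsOpen.preimage hc (isOpen_discrete {e p.1 i})
    · apply isOpen_biInter_finset
      intro V _
      apply isOpen_biInter_finset
      intro δ _
      have hc : Continuous (fun q : X × bBotSpace Γ => (q.2 V : Γ → Fin (V.1.card+1)) δ) :=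
        (continuous_apply δ).comp (continuous_subtype_val.comp
          ((continuous_apply V).comp continuous_snd))
      exact IsOpen.preimage hc (isOpen_discrete {((p.2 V : Γ → Fin (V.1.card+1)) δ)})
  have hUmem : ∀ p, p ∈ U p := fun p =>
    ⟨Set.mem_iInter₂.mpr fun i _ => rfl,
     Set.mem_iInter₂.mpr fun V _ => Set.mem_iInter₂.mpr fun δ _ => rfl⟩
  obtain ⟨t, ht⟩ := IsCompact.elim_finite_subcover isCompact_univ U hUopen
    (fun q _ => Set.mem_iUnion.mpr ⟨q, hUmem q⟩)
  refine ⟨t.biUnion If, t.biUnion Sf, t.biUnion Df, ?_⟩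
  intro p q hI hSD
  have hp := ht (Set.mem_univ p)
  rw [Set.mem_iUnion₂] at hp
  obtain ⟨w, hw, hpw⟩ := hp
  have key : ∀ s : X × bBotSpace Γ, s ∈ U w → f s = f w := by
    intro s hs
    obtain ⟨h1, h2⟩ := hs
    rw [Set.mem_iInter₂] at h1 h2
    refine hIf w s (fun i hi => h1 i hi) (fun V hV δ hδ => ?_)
    have h3 := h2 V hV
    rw [Set.mem_iInter₂] at h3
    exact h3 δ hδ
  have hqw : q ∈ U w := by
    obtain ⟨hpw1, hpw2⟩ := hpw
    rw [Set.mem_iInter₂] at hpw1 hpw2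
    constructor
    · refine Set.mem_iInter₂.mpr fun i hi => ?_
      have h1 : e p.1 i = e q.1 i := hI i (Finset.mem_biUnion.mpr ⟨w, hw, hi⟩)
      have h2 : e p.1 i = e w.1 i := hpw1 i hi
      show e q.1 i = e w.1 i
      rw [← h1, h2]
    · refine Set.mem_iInter₂.mpr fun V hV => Set.mem_iInter₂.mpr fun δ hδ => ?_
      have h1 := hSD V (Finset.mem_biUnion.mpr ⟨w, hw, hV⟩) δ (Finset.mem_biUnion.mpr ⟨w, hw, hδ⟩)
      have h2' := hpw2 V hV
      rw [Set.mem_iInter₂] at h2'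
      have h2 := h2' δ hδ
      show (q.2 V : Γ → Fin (V.1.card+1)) δ = (w.2 V : Γ → Fin (V.1.card+1)) δ
      rw [← h1]
      exact h2
  rw [key p hpw, key q hqw]

end FD



/-- For a finitely generated group `Γ` and any free action `a` of `Γ` on a Cantor space,
`a × b_⊥` is weakly equivalent to `a`; in particular `b_⊥` is weakly contained in every
free Cantor action of `Γ`. -/
theorem stmt12 {Γ : Type} [Group Γ] [Group.FG Γ]
    {X : Type} [TopologicalSpace X] (hX : Nonempty (X ≃ₜ (ℕ → Bool)))
    (a : Γ → X → X)
    (ha_one : ∀ x, a 1 x = x) (ha_mul : ∀ γ δ x, a (γ * δ) x = a γ (a δ x))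
    (ha_cont : ∀ γ, Continuous (a γ))
    (ha_free : ∀ (γ : Γ) (x : X), a γ x = x → γ = 1) :
    WeaklyContainsL a (prodAct a (bBotAct Γ)) ∧
    WeaklyContainsL (prodAct a (bBotAct Γ)) a ∧
    WeaklyContainsL a (bBotAct Γ) := by
  classical
  obtain ⟨e⟩ := hX
  haveI : CompactSpace X := e.symm.compactSpace
  haveI : Nonempty X := ⟨e.symm (fun _ => true)⟩
  haveI : Countable Γ := countable_of_fg
  haveI hCW : ∀ W : SymFinset Γ, CompactSpace (properColorings (Γ := Γ) W.1) := fun W =>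
    isCompact_iff_compactSpace.mp ((isClosed_properColorings W.1).isCompact)
  have hsep : ∀ p q : X, p ≠ q → ∃ U : Set X, IsClopen U ∧ p ∈ U ∧ q ∉ U := by
    intro p q hpq
    have hne : e p ≠ e q := fun h => hpq (e.injective h)
    have hex : ∃ i, e p i ≠ e q i := by
      by_contra h
      push_neg at h
      exact hne (funext h)
    obtain ⟨i, hi⟩ := hex
    refine ⟨e ⁻¹' {g | g i = e p i}, ?_, by simp, ?_⟩
    · have hcl : IsClopen {g : ℕ → Bool | g i = e p i} :=
        (isClopen_discrete {e p i}).preimage (continuous_apply i)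
      exact hcl.preimage e.continuous
    · intro h
      exact hi ((h : e q i = e p i).symm)
  -- action helper lemmas
  have hfree2 : ∀ (γ δ : Γ) (x : X), a γ x = a δ x → γ = δ := by
    intro γ δ x h
    have h1 : a (δ⁻¹ * γ) x = x := by
      rw [ha_mul, h, ← ha_mul, inv_mul_cancel, ha_one]
    exact (inv_mul_eq_one.mp (ha_free _ _ h1)).symm
  -- master lemma, specialised
  have hMall : ∀ (V : SymFinset Γ) (Z : Finset X) (κ : X → Fin (V.1.card + 1)),
      (∀ z ∈ Z, ∀ z' ∈ Z, ∀ v ∈ V.1, v ≠ 1 → a v z = z' → κ z ≠ κ z') →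
      ∃ c : X → Fin (V.1.card + 1), Continuous c ∧
        (∀ x, ∀ v ∈ V.1, v ≠ 1 → c x ≠ c (a v x)) ∧ (∀ z ∈ Z, c z = κ z) :=
    fun V Z κ hκ =>
      exists_proper_coloring hsep a ha_one ha_mul ha_cont ha_free V.1 V.2 Z κ hκ
  -- building equivariant maps into bBotSpace from coloring families
  have mkPhi : ∀ c : (∀ V : SymFinset Γ, X → Fin (V.1.card + 1)),
      (∀ V, Continuous (c V)) → (∀ V, ∀ x, ∀ v ∈ V.1, v ≠ 1 → c V x ≠ c V (a v x)) →
      ∃ Φ : X → bBotSpace Γ, Continuous Φ ∧ (∀ γ x, Φ (a γ x) = bBotAct Γ γ (Φ x)) ∧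
        (∀ x (V : SymFinset Γ) (δ : Γ),
          (Φ x V : Γ → Fin (V.1.card+1)) δ = c V (a δ⁻¹ x)) := by
    intro c hc1 hc2
    refine ⟨fun x V => ⟨fun δ => c V (a δ⁻¹ x), ?_⟩, ?_, ?_, fun x V δ => rfl⟩
    · intro γ δ hδ hδ1
      have h1 : a (γ * δ)⁻¹ x = a δ⁻¹ (a γ⁻¹ x) := by rw [← ha_mul, mul_inv_rev]
      show c V (a γ⁻¹ x) ≠ c V (a (γ * δ)⁻¹ x)
      rw [h1]
      exact hc2 V (a γ⁻¹ x) δ⁻¹ (V.2 δ hδ) (inv_ne_one.mpr hδ1)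
    · apply continuous_pi
      intro V
      apply Continuous.subtype_mk
      exact continuous_pi fun δ => (hc1 V).comp (ha_cont δ⁻¹)
    · intro γ x
      funext V
      apply Subtype.ext
      funext δ
      show c V (a δ⁻¹ (a γ x)) = c V (a (γ⁻¹ * δ)⁻¹ x)
      rw [← ha_mul]
      congr 2
      rw [mul_inv_rev, inv_inv]
  -- a base point of bBotSpace
  have hbase : ∀ V : SymFinset Γ, ∃ c : X → Fin (V.1.card + 1), Continuous c ∧
      (∀ x, ∀ v ∈ V.1, v ≠ 1 → c x ≠ c (a v x)) ∧
      (∀ z ∈ (∅ : Finset X), c z = (fun _ : X => (0 : Fin (V.1.card + 1))) z) :=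
    fun V => hMall V ∅ (fun _ => 0) (by simp)
  choose c₀ hc₀1 hc₀2 _hc₀3 using hbase
  obtain ⟨Φ₀, hΦ₀c, hΦ₀e, hΦ₀v⟩ := mkPhi c₀ hc₀1 hc₀2
  have y₀ : bBotSpace Γ := Φ₀ (Classical.arbitrary X)
  -- Part 1
  have part1 : WeaklyContainsL a (prodAct a (bBotAct Γ)) := by
    intro W k f hf
    obtain ⟨I, SS, D, hFD⟩ := finite_dep e f hf
    set P : Set ({γ // γ ∈ W} → Fin k) := labelPattern (prodAct a (bBotAct Γ)) W f with hP
    have hPfin : P.Finite := Set.toFinite P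
    set Pfin : Finset ({γ // γ ∈ W} → Fin k) := hPfin.toFinset with hPfindef
    have hwit : ∀ p ∈ Pfin, ∃ q : X × bBotSpace Γ,
        ∀ γ : {γ // γ ∈ W}, f (prodAct a (bBotAct Γ) γ.1 q) = p γ := by
      intro p hp
      exact hPfin.mem_toFinset.mp hp
    set xw : ({γ // γ ∈ W} → Fin k) → X := fun p =>
      if h : p ∈ Pfin then (Classical.choose (hwit p h)).1 else Classical.arbitrary X with hxw
    set yw : ({γ // γ ∈ W} → Fin k) → bBotSpace Γ := fun p =>
      if h : p ∈ Pfin then (Classical.choose (hwit p h)).2 else y₀ with hyw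
    have hwitspec : ∀ p (hp : p ∈ Pfin), ∀ γ : {γ // γ ∈ W},
        f (a γ.1 (xw p), bBotAct Γ γ.1 (yw p)) = p γ := by
      intro p hp γ
      have hspec := Classical.choose_spec (hwit p hp) γ
      rw [hxw, hyw]
      dsimp only
      rw [dif_pos hp, dif_pos hp]
      exact hspec
    set Qs : ({γ // γ ∈ W} → Fin k) → Set X := fun p =>
      ⋂ γ ∈ (W : Set Γ), ⋂ i ∈ (I : Set ℕ),
        {x' : X | e (a γ x') i = e (a γ (xw p)) i} with hQs
    have hQsopen : ∀ p, IsOpen (Qs p) := by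
      intro p
      refine Set.Finite.isOpen_biInter W.finite_toSet (fun γ _ => ?_)
      refine Set.Finite.isOpen_biInter I.finite_toSet (fun i _ => ?_)
      have hc : Continuous (fun x' : X => e (a γ x') i) :=
        (continuous_apply i).comp (e.continuous.comp (ha_cont γ))
      exact IsOpen.preimage hc (isOpen_discrete {e (a γ (xw p)) i})
    have hQsmem : ∀ p, xw p ∈ Qs p := fun p =>
      Set.mem_iInter₂.mpr fun γ _ => Set.mem_iInter₂.mpr fun i _ => rfl
    have hchoice : ∀ L : Finset ({γ // γ ∈ W} → Fin k), ∃ w : ({γ // γ ∈ W} → Fin k) → X,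
        (∀ p ∈ L, w p ∈ Qs p) ∧
        (∀ p ∈ L, ∀ q ∈ L, p ≠ q → ∀ γ : Γ, a γ (w p) ≠ w q) := by
      intro L
      induction L using Finset.induction_on with
      | empty => exact ⟨fun _ => Classical.arbitrary X, by simp, by simp⟩
      | @insert p L hpL ih =>
        obtain ⟨w, hw1, hw2⟩ := ih
        have hSct : (⋃ q ∈ (L : Set ({γ // γ ∈ W} → Fin k)),
            Set.range (fun γ : Γ => a γ (w q))).Countable :=
          Set.Countable.biUnion L.countable_toSet (fun q _ => Set.countable_range _)
        obtain ⟨x', hx'Q, hx'S⟩ := exists_avoid e (hQsopen p) (hQsmem p) hSct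
        refine ⟨Function.update w p x', ?_, ?_⟩
        · intro q hq
          rcases Finset.mem_insert.mp hq with h | h
          · subst h
            rw [Function.update_self]
            exact hx'Q
          · rw [Function.update_of_ne (fun hh => hpL (by rwa [hh] at h))]
            exact hw1 q h
        · intro q hq q' hq' hne γ
          rcases Finset.mem_insert.mp hq with h | h <;>
            rcases Finset.mem_insert.mp hq' with h' | h'
          · exact absurd (h.trans h'.symm) hne
          · subst h
            rw [Function.update_self, Function.update_of_ne (fun hh => hpL (by rwa [hh] at h'))]
            intro heq
            apply hx'S
            refine Set.mem_biUnion h' ⟨γ⁻¹, ?_⟩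
            show a γ⁻¹ (w q') = x'
            rw [← heq, ← ha_mul, inv_mul_cancel, ha_one]
          · subst h'
            rw [Function.update_self, Function.update_of_ne (fun hh => hpL (by rwa [hh] at h))]
            intro heq
            apply hx'S
            exact Set.mem_biUnion h ⟨γ, heq⟩
          · rw [Function.update_of_ne (fun hh => hpL (by rwa [hh] at h)),
              Function.update_of_ne (fun hh => hpL (by rwa [hh] at h'))]
            exact hw2 q h q' h' hne γ
    obtain ⟨w, hwQ, hwOrb⟩ := hchoice Pfin
    set D' : Finset Γ := (W ×ˢ D).image (fun q => q.1⁻¹ * q.2) with hD'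
    set Zf : ∀ _V : SymFinset Γ, Finset X := fun V =>
      if V ∈ SS then (Pfin ×ˢ D').image (fun pe => a pe.2⁻¹ (w pe.1)) else ∅ with hZf
    have hwd : ∀ p ∈ Pfin, ∀ p' ∈ Pfin, ∀ ε ∈ D', ∀ ε' ∈ D',
        a ε⁻¹ (w p) = a ε'⁻¹ (w p') → p = p' ∧ ε = ε' := by
      intro p hp p' hp' ε hε ε' hε' heq
      by_cases hpp : p = p'
      · subst hpp
        refine ⟨rfl, ?_⟩
        have h1 := hfree2 _ _ _ heq
        exact inv_injective h1
      · exfalso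
        have h1 : a (ε' * ε⁻¹) (w p) = w p' := by
          rw [ha_mul, heq, ← ha_mul, mul_inv_cancel, ha_one]
        exact hwOrb p hp p' hp' hpp _ h1
    set κf : ∀ V : SymFinset Γ, X → Fin (V.1.card + 1) := fun V z =>
      if h : ∃ pe : ({γ // γ ∈ W} → Fin k) × Γ,
          (pe ∈ Pfin ×ˢ D') ∧ a pe.2⁻¹ (w pe.1) = z
      then ((yw h.choose.1) V : Γ → Fin (V.1.card+1)) h.choose.2 else 0 with hκf
    have hκval : ∀ V : SymFinset Γ, ∀ p ∈ Pfin, ∀ ε ∈ D',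
        κf V (a ε⁻¹ (w p)) = ((yw p) V : Γ → Fin (V.1.card+1)) ε := by
      intro V p hp ε hε
      have hex : ∃ pe : ({γ // γ ∈ W} → Fin k) × Γ,
          (pe ∈ Pfin ×ˢ D') ∧ a pe.2⁻¹ (w pe.1) = a ε⁻¹ (w p) :=
        ⟨(p, ε), Finset.mem_product.mpr ⟨hp, hε⟩, rfl⟩
      rw [hκf]
      dsimp only
      rw [dif_pos hex]
      obtain ⟨hmem, heq⟩ := hex.choose_spec
      obtain ⟨hp', hε'⟩ := Finset.mem_product.mp hmem
      obtain ⟨h1, h2⟩ := hwd _ hp' _ hp _ hε' _ hε heq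
      rw [h1, h2]
    have hκprop : ∀ V : SymFinset Γ, ∀ z ∈ Zf V, ∀ z' ∈ Zf V, ∀ v ∈ V.1, v ≠ 1 →
        a v z = z' → κf V z ≠ κf V z' := by
      intro V z hz z' hz' v hv hv1 heq
      by_cases hVS : V ∈ SS
      · rw [hZf] at hz hz'
        dsimp only at hz hz'
        rw [if_pos hVS] at hz hz'
        obtain ⟨⟨p, ε⟩, hmem, hze⟩ := Finset.mem_image.mp hz
        obtain ⟨⟨p', ε'⟩, hmem', hze'⟩ := Finset.mem_image.mp hz'
        obtain ⟨hp, hε⟩ := Finset.mem_product.mp hmem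
        obtain ⟨hp', hε'⟩ := Finset.mem_product.mp hmem'
        subst hze hze'
        have h1 : a (v * ε⁻¹) (w p) = a ε'⁻¹ (w p') := by
          rw [ha_mul]
          exact heq
        have hpp : p = p' := by
          by_contra hne
          have h2 : a (ε' * (v * ε⁻¹)) (w p) = w p' := by
            rw [ha_mul, h1, ← ha_mul, mul_inv_cancel, ha_one]
          exact hwOrb p hp p' hp' hne _ h2
        subst hpp
        have hvε : v * ε⁻¹ = ε'⁻¹ := hfree2 _ _ _ h1
        have hε'eq : ε' = ε * v⁻¹ := by
          have : (v * ε⁻¹)⁻¹ = ε * v⁻¹ := by rw [mul_inv_rev, inv_inv]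
          rw [← inv_inv ε', ← hvε, this]
        rw [hκval V p hp ε hε, hκval V p hp ε' hε', hε'eq]
        have hprop := ((yw p) V).2 (ε * v⁻¹) v hv hv1
        have heq2 : ε * v⁻¹ * v = ε := by group
        rw [heq2] at hprop
        exact hprop.symm
      · rw [hZf] at hz
        dsimp only at hz
        rw [if_neg hVS] at hz
        simp at hz
    have hcV : ∀ V : SymFinset Γ, ∃ c : X → Fin (V.1.card + 1), Continuous c ∧
        (∀ x, ∀ v ∈ V.1, v ≠ 1 → c x ≠ c (a v x)) ∧ (∀ z ∈ Zf V, c z = κf V z) :=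
      fun V => hMall V (Zf V) (κf V) (hκprop V)
    choose cV hcV1 hcV2 hcV3 using hcV
    obtain ⟨Φ, hΦc, hΦe, hΦv⟩ := mkPhi cV hcV1 hcV2
    refine ⟨fun x => f (x, Φ x), hf.comp (continuous_id.prodMk hΦc), ?_⟩
    apply Set.Subset.antisymm
    · -- P ⊆ patterns of g
      intro p hp
      have hpF : p ∈ Pfin := hPfin.mem_toFinset.mpr hp
      refine ⟨w p, fun γ => ?_⟩
      have h0 : f (a γ.1 (w p), bBotAct Γ γ.1 (Φ (w p)))
          = f (a γ.1 (xw p), bBotAct Γ γ.1 (yw p)) := by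
        apply hFD
        · intro i hi
          have hq := hwQ p hpF
          rw [hQs] at hq
          dsimp only at hq
          rw [Set.mem_iInter₂] at hq
          have h1 := hq γ.1 γ.2
          rw [Set.mem_iInter₂] at h1
          exact h1 i hi
        · intro V hV δ hδ
          show (Φ (w p) V : Γ → Fin (V.1.card+1)) (γ.1⁻¹ * δ)
            = ((yw p) V : Γ → Fin (V.1.card+1)) (γ.1⁻¹ * δ)
          rw [hΦv]
          have hε : γ.1⁻¹ * δ ∈ D' :=
            Finset.mem_image.mpr ⟨(γ.1, δ), Finset.mem_product.mpr ⟨γ.2, hδ⟩, rfl⟩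
          have hz : a (γ.1⁻¹ * δ)⁻¹ (w p) ∈ Zf V := by
            rw [hZf]
            dsimp only
            rw [if_pos hV]
            exact Finset.mem_image.mpr
              ⟨(p, γ.1⁻¹ * δ), Finset.mem_product.mpr ⟨hpF, hε⟩, rfl⟩
          rw [hcV3 V _ hz]
          exact hκval V p hpF _ hε
      show f (a γ.1 (w p), Φ (a γ.1 (w p))) = p γ
      rw [hΦe]
      exact h0.trans (hwitspec p hpF γ)
    · -- patterns of g ⊆ P
      rintro p ⟨x, hx⟩
      refine ⟨(x, Φ x), fun γ => ?_⟩
      show f (a γ.1 x, bBotAct Γ γ.1 (Φ x)) = p γ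
      rw [← hΦe]
      exact hx γ
  -- Part 2
  have part2 : WeaklyContainsL (prodAct a (bBotAct Γ)) a := by
    intro W k f hf
    refine ⟨fun q => f q.1, hf.comp continuous_fst, ?_⟩
    apply Set.Subset.antisymm
    · rintro p ⟨x, hx⟩
      exact ⟨(x, y₀), fun γ => hx γ⟩
    · rintro p ⟨q, hq⟩
      exact ⟨q.1, fun γ => hq γ⟩
  -- Part 3
  refine ⟨part1, part2, ?_⟩
  intro W k f hf
  obtain ⟨g, hg, hpat⟩ := part1 W k (fun q => f q.2) (hf.comp continuous_snd)
  refine ⟨g, hg, ?_⟩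
  rw [← hpat]
  apply Set.Subset.antisymm
  · rintro p ⟨y, hy⟩
    exact ⟨(Classical.arbitrary X, y), fun γ => hy γ⟩
  · rintro p ⟨q, hq⟩
    exact ⟨q.2, fun γ => hq γ⟩
end

section
/- Let Γ be a countable group, W ⊆ Γ a finite symmetric subset, C_W the space of proper (|W|+1)-colorings of the Cayley graph Cay(Γ, W) with its shift action b_W, and let a be a free action of Γ on Cantor space 𝒞 by homeomorphisms. Then for any m ∈ ℕ and any nonempty open sets A_1, …, A_m ⊆ 𝒞 and nonempty open sets B_1, …, B_m ⊆ C_W, there exists a continuous Γ-equivariant map F : 𝒞 → C_W such that F(A_i) ∩ B_i ≠ ∅ for each i ∈ {1,…,m}. -/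
open Pointwise


/-- The shift action `b_W` of `Γ` on the space `C_W` of proper colorings:
`(γ·x)(δ) = x(γ⁻¹δ)`. -/
def colAct {Γ : Type*} [Group Γ] (W : Finset Γ) :
    Γ → ↥(properColorings (Γ := Γ) W) → ↥(properColorings (Γ := Γ) W) :=
  fun γ x => ⟨fun δ => x.1 (γ⁻¹ * δ), by
    intro α δ hδ hne
    have h := x.2 (γ⁻¹ * α) δ hδ hne
    simpa [mul_assoc] using h⟩

section Aux

variable {Γ : Type*} [Group Γ] {C : Type*} [TopologicalSpace C]

/-- A nonempty open subset of Cantor space is uncountable. -/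
lemma aux_not_countable (O : Set (ℕ → Bool)) (hO : IsOpen O) (hne : O.Nonempty) :
    ¬ O.Countable := by
  obtain ⟨f, hf⟩ := hne
  obtain ⟨I, u, hu, hsub⟩ := isOpen_pi_iff.mp hO f hf
  set Nn : ℕ := I.sup id + 1 with hNn
  set j : (ℕ → Bool) → (ℕ → Bool) := fun g n => if n < Nn then f n else g (n - Nn) with hj
  have hinj : Function.Injective j := by
    intro g g' hgg
    funext n
    have := congrFun hgg (n + Nn)
    simpa [hj, Nat.not_lt.mpr (Nat.le_add_left Nn n)] using this
  have hrange : Set.range j ⊆ O := by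
    rintro _ ⟨g, rfl⟩
    apply hsub
    intro s hs
    have hsI : s ∈ I := hs
    have : s < Nn := Nat.lt_succ_of_le (Finset.le_sup (f := id) hsI)
    simpa [hj, this] using (hu s hsI).2
  intro hcount
  have : (Set.range j).Countable := hcount.mono hrange
  have : (j ⁻¹' (Set.range j)).Countable := this.preimage hinj
  have hcu : (Set.univ : Set (ℕ → Bool)).Countable := by
    simpa [Set.preimage_range] using this
  haveI : Countable (ℕ → Bool) := Set.countable_univ_iff.mp hcu
  obtain ⟨F, hF⟩ := exists_surjective_nat (ℕ → Bool)
  obtain ⟨n₀, hn₀⟩ := hF (fun n => !(F n n))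
  have := congrFun hn₀ n₀
  simp at this

/-- Choice of points in the `A i` lying in pairwise distinct orbits. -/
lemma aux_points [Countable Γ] (a : Γ → C → C)
    (ha_one : ∀ x, a 1 x = x) (ha_mul : ∀ γ δ x, a (γ * δ) x = a γ (a δ x))
    (huncount : ∀ A : Set C, IsOpen A → A.Nonempty → ¬ A.Countable) :
    ∀ (m : ℕ) (A : Fin m → Set C), (∀ i, IsOpen (A i)) → (∀ i, (A i).Nonempty) →
      ∃ p : Fin m → C, (∀ i, p i ∈ A i) ∧ ∀ i j, i ≠ j → ∀ γ, a γ (p i) ≠ p j := by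
  have hact : ∀ (γ : Γ) (x : C), a γ⁻¹ (a γ x) = x := by
    intro γ x
    rw [← ha_mul, inv_mul_cancel, ha_one]
  intro m
  induction m with
  | zero => exact fun A _ _ => ⟨Fin.elim0, fun i => i.elim0, fun i => i.elim0⟩
  | succ n ih =>
    intro A hA hAne
    obtain ⟨p', hp1, hp2⟩ := ih (fun i => A i.castSucc) (fun i => hA _) (fun i => hAne _)
    set S : Set C := ⋃ i : Fin n, Set.range fun γ => a γ (p' i) with hS
    have hScnt : S.Countable := Set.countable_iUnion fun i => Set.countable_range _
    have hdiff : (A (Fin.last n) \ S).Nonempty := by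
      rw [Set.nonempty_iff_ne_empty]
      intro hcon
      exact huncount _ (hA _) (hAne _) (hScnt.mono (Set.diff_eq_empty.mp hcon))
    obtain ⟨q, hqA, hqS⟩ := hdiff
    refine ⟨Fin.snoc p' q, ?_, ?_⟩
    · intro i
      refine Fin.lastCases ?_ ?_ i
      · simpa using hqA
      · intro j; simpa using hp1 j
    · intro i j hij γ
      rcases Fin.eq_castSucc_or_eq_last i with ⟨i', rfl⟩ | rfl <;>
        rcases Fin.eq_castSucc_or_eq_last j with ⟨j', rfl⟩ | rfl
      · intro hcon
        simp only [Fin.snoc_castSucc] at hcon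
        exact hp2 i' j' (fun h => hij (by rw [h])) γ hcon
      · intro hcon
        simp only [Fin.snoc_last, Fin.snoc_castSucc] at hcon
        exact hqS (Set.mem_iUnion.mpr ⟨i', ⟨γ, hcon⟩⟩)
      · intro hcon
        simp only [Fin.snoc_last, Fin.snoc_castSucc] at hcon
        apply hqS
        have : q = a γ⁻¹ (p' j') := by rw [← hcon, hact]
        exact Set.mem_iUnion.mpr ⟨j', ⟨γ⁻¹, this.symm⟩⟩
      · exact absurd rfl hij

end Aux

section Eng

variable {Γ : Type*} [Group Γ] {C : Type*} [TopologicalSpace C]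

/-- Layering constant colors on pairwise disjoint clopen pieces. -/
lemma engineC (a : Γ → C → C) (W : Finset Γ) {ι : Type*}
    (Q : ι → Set C) (col : ι → Fin (W.card + 1)) :
    ∀ F : Finset ι,
      (∀ i ∈ F, IsClopen (Q i)) →
      (∀ i ∈ F, ∀ j ∈ F, i ≠ j → ∀ x, x ∈ Q i → x ∉ Q j) →
      (∀ i ∈ F, ∀ j ∈ F, ∀ x ∈ Q i, ∀ δ ∈ W, δ ≠ 1 → a δ x ∈ Q j → col i ≠ col j) →
      ∃ c : C → Fin (W.card + 1), Continuous c ∧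
        (∀ i ∈ F, ∀ x ∈ Q i, c x = col i) ∧
        (∀ x ∈ ⋃ i ∈ (F : Set ι), Q i, ∀ δ ∈ W, δ ≠ 1 →
          a δ x ∈ ⋃ i ∈ (F : Set ι), Q i → c x ≠ c (a δ x)) := by
  classical
  intro F
  induction F using Finset.induction_on with
  | empty =>
    intro _ _ _
    exact ⟨fun _ => ⟨0, Nat.succ_pos _⟩, continuous_const, by simp, by simp⟩
  | @insert i F hiF IH =>
    intro hQ hdisj hcompat
    obtain ⟨c, hccont, hcval, hcprop⟩ := IH
      (fun j hj => hQ j (Finset.mem_insert_of_mem hj))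
      (fun j hj k hk => hdisj j (Finset.mem_insert_of_mem hj) k (Finset.mem_insert_of_mem hk))
      (fun j hj k hk => hcompat j (Finset.mem_insert_of_mem hj) k (Finset.mem_insert_of_mem hk))
    have hQi : IsClopen (Q i) := hQ i (Finset.mem_insert_self _ _)
    set c' : C → Fin (W.card + 1) := (Q i).piecewise (fun _ => col i) c with hc'
    have hfront : frontier (Q i) = ∅ := by
      rw [frontier, hQi.isClosed.closure_eq, hQi.isOpen.interior_eq, Set.diff_self]
    have hc'cont : Continuous c' :=
      Continuous.piecewise (by simp [hfront]) continuous_const hccont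
    have hmemi : ∀ x ∈ Q i, c' x = col i := fun x hx => Set.piecewise_eq_of_mem _ _ _ hx
    have hmemo : ∀ x ∉ Q i, c' x = c x := fun x hx => Set.piecewise_eq_of_notMem _ _ _ hx
    have hnotin : ∀ j ∈ F, ∀ x ∈ Q j, x ∉ Q i := by
      intro j hj x hx
      exact hdisj j (Finset.mem_insert_of_mem hj) i (Finset.mem_insert_self _ _)
        (fun h => hiF (h ▸ hj)) x hx
    refine ⟨c', hc'cont, ?_, ?_⟩
    · intro j hj x hx
      rcases Finset.mem_insert.mp hj with rfl | hj'
      · exact hmemi x hx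
      · rw [hmemo x (hnotin j hj' x hx)]; exact hcval j hj' x hx
    · intro x hx δ hδ hδ1 hax
      simp only [Finset.coe_insert, Set.biUnion_insert] at hx hax
      have hsplit : ∀ y, y ∈ Q i ∪ ⋃ j ∈ (F : Set ι), Q j →
          y ∈ Q i ∨ (y ∈ ⋃ j ∈ (F : Set ι), Q j ∧ y ∉ Q i) := by
        intro y hy
        rcases hy with hy | hy
        · exact Or.inl hy
        · simp only [Set.mem_iUnion] at hy
          obtain ⟨j, hj, hyj⟩ := hy
          exact Or.inr ⟨Set.mem_iUnion.mpr ⟨j, Set.mem_iUnion.mpr ⟨hj, hyj⟩⟩, hnotin j hj y hyj⟩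
      rcases hsplit x hx with hx1 | ⟨hx2, hx2'⟩ <;> rcases hsplit _ hax with ha1 | ⟨ha2, ha2'⟩
      · -- both in Q i : impossible via hcompat i i
        exact absurd rfl (hcompat i (Finset.mem_insert_self _ _) i (Finset.mem_insert_self _ _)
          x hx1 δ hδ hδ1 ha1)
      · -- x ∈ Q i, a δ x ∈ old union
        rw [hmemi x hx1, hmemo _ ha2']
        simp only [Set.mem_iUnion] at ha2
        obtain ⟨j, hj, haj⟩ := ha2
        rw [hcval j hj _ haj]
        exact hcompat i (Finset.mem_insert_self _ _) j (Finset.mem_insert_of_mem hj) x hx1 δ hδ hδ1 haj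
      · -- x ∈ old union, a δ x ∈ Q i
        rw [hmemo x hx2', hmemi _ ha1]
        simp only [Set.mem_iUnion] at hx2
        obtain ⟨j, hj, hxj⟩ := hx2
        rw [hcval j hj x hxj]
        exact hcompat j (Finset.mem_insert_of_mem hj) i (Finset.mem_insert_self _ _) x hxj δ hδ hδ1 ha1
      · rw [hmemo x hx2', hmemo _ ha2']
        exact hcprop x hx2 δ hδ hδ1 ha2

end Eng

section Eng2

variable {Γ : Type*} [Group Γ] {C : Type*} [TopologicalSpace C]

/-- One greedy recoloring step on an independent clopen piece. -/
lemma stepG (a : Γ → C → C) (W : Finset Γ)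
    (ha_one : ∀ x, a 1 x = x) (ha_mul : ∀ γ δ x, a (γ * δ) x = a γ (a δ x))
    (ha_cont : ∀ γ, Continuous (a γ)) (hW : ∀ γ ∈ W, γ⁻¹ ∈ W)
    (D Q : Set C) (c : C → Fin (W.card + 1))
    (hD : IsClopen D) (hQ : IsClopen Q) (hc : Continuous c)
    (hind : ∀ δ ∈ W, δ ≠ 1 → ∀ y ∈ Q, a δ y ∉ Q)
    (hproper : ∀ x ∈ D, ∀ δ ∈ W, δ ≠ 1 → a δ x ∈ D → c x ≠ c (a δ x)) :
    ∃ c' : C → Fin (W.card + 1), Continuous c' ∧ (∀ x ∈ D, c' x = c x) ∧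
      (∀ x ∈ D ∪ Q, ∀ δ ∈ W, δ ≠ 1 → a δ x ∈ D ∪ Q → c' x ≠ c' (a δ x)) := by
  classical
  have hact : ∀ (γ : Γ) (x : C), a γ⁻¹ (a γ x) = x := by
    intro γ x; rw [← ha_mul, inv_mul_cancel, ha_one]
  set E := W.erase (1 : Γ) with hE
  set forb : (↥E → Bool × Fin (W.card + 1)) → Finset (Fin (W.card + 1)) := fun t =>
    Finset.univ.biUnion fun δ => if (t δ).1 = true then {(t δ).2} else ∅ with hforb
  have hforbne : ∀ t, ((forb t)ᶜ : Finset (Fin (W.card + 1))).Nonempty := by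
    intro t
    have hsub : forb t ⊆ Finset.univ.image fun δ => (t δ).2 := by
      intro k hk
      simp only [hforb, Finset.mem_biUnion] at hk
      obtain ⟨δ, _, hδ⟩ := hk
      by_cases h : (t δ).1 = true
      · simp [h] at hδ; exact Finset.mem_image.mpr ⟨δ, Finset.mem_univ _, hδ.symm⟩
      · simp [h] at hδ
    have hcard : (forb t).card < W.card + 1 := by
      calc (forb t).card ≤ (Finset.univ.image fun δ => (t δ).2).card := Finset.card_le_card hsub
        _ ≤ (Finset.univ : Finset ↥E).card := Finset.card_image_le
        _ = E.card := by simp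
        _ ≤ W.card := Finset.card_erase_le
        _ < W.card + 1 := Nat.lt_succ_self _
    rw [← Finset.card_pos, Finset.card_compl]
    have hcf : Fintype.card (Fin (W.card + 1)) = W.card + 1 := Fintype.card_fin _
    omega
  set φ : (↥E → Bool × Fin (W.card + 1)) → Fin (W.card + 1) := fun t => ((forb t)ᶜ).min' (hforbne t) with hφ
  set data : C → (↥E → Bool × Fin (W.card + 1)) := fun x δ =>
    (D.boolIndicator (a δ.1 x), c (a δ.1 x)) with hdata
  set g : C → Fin (W.card + 1) := fun x => φ (data x) with hg
  have hgcont : Continuous g := by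
    have hdcont : Continuous data := by
      apply continuous_pi
      intro δ
      exact Continuous.prodMk
        (((continuous_boolIndicator_iff_isClopen D).mpr hD).comp (ha_cont δ.1))
        (hc.comp (ha_cont δ.1))
    exact (continuous_of_discreteTopology (f := φ)).comp hdcont
  have hgmain : ∀ x, ∀ δ ∈ W, δ ≠ 1 → a δ x ∈ D → g x ≠ c (a δ x) := by
    intro x δ hδ hδ1 haD
    have hmem : c (a δ x) ∈ forb (data x) := by
      apply Finset.mem_biUnion.mpr
      refine ⟨⟨δ, Finset.mem_erase.mpr ⟨hδ1, hδ⟩⟩, Finset.mem_univ _, ?_⟩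
      have hbi : D.boolIndicator (a δ x) = true := (D.mem_iff_boolIndicator _).mp haD
      simp [hdata, hbi]
    have : g x ∈ (forb (data x))ᶜ := Finset.min'_mem _ _
    exact fun hcon => (Finset.mem_compl.mp this) (hcon ▸ hmem)
  set Q' := Q \ D with hQ'
  have hQ'c : IsClopen Q' := hQ.diff hD
  set c' : C → Fin (W.card + 1) := Q'.piecewise g c with hc'
  have hfront : frontier Q' = ∅ := by
    rw [frontier, hQ'c.isClosed.closure_eq, hQ'c.isOpen.interior_eq, Set.diff_self]
  have hc'cont : Continuous c' := Continuous.piecewise (by simp [hfront]) hgcont hc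
  have hin : ∀ x ∈ Q', c' x = g x := fun x hx => Set.piecewise_eq_of_mem _ _ _ hx
  have hout : ∀ x ∉ Q', c' x = c x := fun x hx => Set.piecewise_eq_of_notMem _ _ _ hx
  have hDout : ∀ x ∈ D, c' x = c x := fun x hx => hout x (fun h => h.2 hx)
  refine ⟨c', hc'cont, hDout, ?_⟩
  have hcases : ∀ y, y ∈ D ∪ Q → y ∈ D ∨ y ∈ Q' := by
    intro y hy
    by_cases h : y ∈ D
    · exact Or.inl h
    · rcases hy with hy | hy
      · exact absurd hy h
      · exact Or.inr ⟨hy, h⟩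
  intro x hx δ hδ hδ1 hax
  rcases hcases x hx with hx1 | hx1 <;> rcases hcases _ hax with ha1 | ha1
  · rw [hDout x hx1, hDout _ ha1]; exact hproper x hx1 δ hδ hδ1 ha1
  · -- x ∈ D, a δ x ∈ Q'
    rw [hDout x hx1, hin _ ha1]
    have h2 : a δ⁻¹ (a δ x) = x := hact δ x
    have := hgmain (a δ x) δ⁻¹ (hW δ hδ) (fun h => hδ1 (by rwa [inv_eq_one] at h))
      (by rw [h2]; exact hx1)
    rw [h2] at this
    exact fun hcon => this (by rw [hcon])
  · -- x ∈ Q', a δ x ∈ D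
    rw [hin x hx1, hDout _ ha1]
    exact hgmain x δ hδ hδ1 ha1
  · exact absurd ha1.1 (hind δ hδ hδ1 x hx1.1)

/-- Greedy extension over a finite family of independent clopen pieces. -/
lemma engineG (a : Γ → C → C) (W : Finset Γ)
    (ha_one : ∀ x, a 1 x = x) (ha_mul : ∀ γ δ x, a (γ * δ) x = a γ (a δ x))
    (ha_cont : ∀ γ, Continuous (a γ)) (hW : ∀ γ ∈ W, γ⁻¹ ∈ W)
    {ι : Type*} (Q : ι → Set C) :
    ∀ F : Finset ι,
      (∀ i ∈ F, IsClopen (Q i)) →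
      (∀ i ∈ F, ∀ δ ∈ W, δ ≠ 1 → ∀ y ∈ Q i, a δ y ∉ Q i) →
      ∀ (D : Set C) (c : C → Fin (W.card + 1)), IsClopen D → Continuous c →
      (∀ x ∈ D, ∀ δ ∈ W, δ ≠ 1 → a δ x ∈ D → c x ≠ c (a δ x)) →
      ∃ c' : C → Fin (W.card + 1), Continuous c' ∧ (∀ x ∈ D, c' x = c x) ∧
        (∀ x ∈ D ∪ ⋃ i ∈ (F : Set ι), Q i, ∀ δ ∈ W, δ ≠ 1 →
          a δ x ∈ D ∪ ⋃ i ∈ (F : Set ι), Q i → c' x ≠ c' (a δ x)) := by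
  classical
  intro F
  induction F using Finset.induction_on with
  | empty =>
    intro _ _ D c hD hc hprop
    exact ⟨c, hc, fun x _ => rfl, by simpa using hprop⟩
  | @insert i F hiF IH =>
    intro hQ hind D c hD hc hprop
    obtain ⟨c₁, hc₁cont, hc₁eq, hc₁prop⟩ := stepG a W ha_one ha_mul ha_cont hW D (Q i) c hD
      (hQ i (Finset.mem_insert_self _ _)) hc
      (hind i (Finset.mem_insert_self _ _)) hprop
    obtain ⟨c', hcont, heq, hpr⟩ := IH
      (fun j hj => hQ j (Finset.mem_insert_of_mem hj))
      (fun j hj => hind j (Finset.mem_insert_of_mem hj))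
      (D ∪ Q i) c₁ (hD.union (hQ i (Finset.mem_insert_self _ _))) hc₁cont hc₁prop
    refine ⟨c', hcont, ?_, ?_⟩
    · intro x hx
      rw [heq x (Or.inl hx), hc₁eq x hx]
    · intro x hx δ hδ hδ1 hax
      have hset : D ∪ ⋃ j ∈ (↑(insert i F) : Set ι), Q j
          = (D ∪ Q i) ∪ ⋃ j ∈ (F : Set ι), Q j := by
        simp only [Finset.coe_insert, Set.biUnion_insert]
        rw [Set.union_assoc]
      rw [hset] at hx hax
      exact hpr x hx δ hδ hδ1 hax

end Eng2
open Pointwise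


/-- For a free Cantor `Γ`-action `a`, a finite symmetric `W ⊆ Γ`, and finite lists of
nonempty open sets `A_i ⊆ 𝒞` and `B_i ⊆ C_W`, there is a continuous equivariant map
`F : 𝒞 → C_W` with `F(A_i) ∩ B_i ≠ ∅` for each `i`. -/

theorem stmt13 {Γ : Type*} [Group Γ] [Countable Γ]
    {C : Type*} [TopologicalSpace C] (hC : Nonempty (C ≃ₜ (ℕ → Bool)))
    (a : Γ → C → C)
    (ha_one : ∀ x, a 1 x = x) (ha_mul : ∀ γ δ x, a (γ * δ) x = a γ (a δ x))
    (ha_cont : ∀ γ, Continuous (a γ))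
    (ha_free : ∀ (γ : Γ) (x : C), a γ x = x → γ = 1)
    (W : Finset Γ) (hW : ∀ γ ∈ W, γ⁻¹ ∈ W)
    (m : ℕ) (A : Fin m → Set C) (B : Fin m → Set ↥(properColorings (Γ := Γ) W))
    (hA : ∀ i, IsOpen (A i)) (hAne : ∀ i, (A i).Nonempty)
    (hB : ∀ i, IsOpen (B i)) (hBne : ∀ i, (B i).Nonempty) :
    ∃ F : C → ↥(properColorings (Γ := Γ) W), Continuous F ∧
      (∀ (γ : Γ) (x : C), F (a γ x) = colAct W γ (F x)) ∧
      ∀ i, ((F '' A i) ∩ B i).Nonempty := by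
  classical
  obtain ⟨h⟩ := hC
  haveI : CompactSpace C := h.symm.compactSpace
  haveI : T2Space C := h.isEmbedding.t2Space
  haveI : TotallyDisconnectedSpace C := by
    refine (h.isEmbedding.isTotallyDisconnected_range).mp ?_
    rw [h.surjective.range_eq]
    exact isTotallyDisconnected_of_totallyDisconnectedSpace _
  have hact1 : ∀ (γ : Γ) (x : C), a γ⁻¹ (a γ x) = x := by
    intro γ x; rw [← ha_mul, inv_mul_cancel, ha_one]
  have hact2 : ∀ (γ : Γ) (x : C), a γ (a γ⁻¹ x) = x := by
    intro γ x; rw [← ha_mul, mul_inv_cancel, ha_one]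
  have hclopennbhd : ∀ (x : C) (O : Set C), IsOpen O → x ∈ O →
      ∃ U, IsClopen U ∧ x ∈ U ∧ U ⊆ O :=
    fun _ _ hO hx => compact_exists_isClopen_in_isOpen hO hx
  have huncount : ∀ A' : Set C, IsOpen A' → A'.Nonempty → ¬ A'.Countable := by
    intro A' hA' hne hcnt
    exact aux_not_countable (h '' A') (h.isOpen_image.mpr hA') (hne.image h) (hcnt.image h)
  obtain ⟨p, hpA, hporb⟩ := aux_points a ha_one ha_mul huncount m A hA hAne
  -- cylinders around chosen points of the B i
  have hBex : ∀ i, ∃ (b : ↥(properColorings (Γ := Γ) W)) (S : Finset Γ), b ∈ B i ∧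
      ∀ y : ↥(properColorings (Γ := Γ) W), (∀ s ∈ S, y.1 s = b.1 s) → y ∈ B i := by
    intro i
    obtain ⟨b, hb⟩ := hBne i
    obtain ⟨t, ht, htb⟩ := isOpen_induced_iff.mp (hB i)
    have hbt : (b : Γ → Fin (W.card + 1)) ∈ t := by rw [← htb] at hb; exact hb
    obtain ⟨I, u, hu, hsub⟩ := isOpen_pi_iff.mp ht _ hbt
    refine ⟨b, I, hb, fun y hy => ?_⟩
    rw [← htb]
    exact hsub (fun s hs => by rw [hy s hs]; exact (hu s hs).2)
  choose b S hbB hcyl using hBex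
  set T : Fin m → Finset Γ := fun i => S i ∪ S i * W with hT
  set G0 : Finset Γ := Finset.univ.biUnion T with hG0
  set Egrp : Finset Γ := G0 * G0⁻¹ with hEgrp
  have hTG0 : ∀ i, ∀ g ∈ T i, g ∈ G0 := by
    intro i g hg; exact Finset.mem_biUnion.mpr ⟨i, Finset.mem_univ _, hg⟩
  have hST : ∀ i, ∀ s ∈ S i, s ∈ T i := fun i s hs => Finset.mem_union_left _ hs
  have hSWT : ∀ i, ∀ s ∈ S i, ∀ δ ∈ W, s * δ ∈ T i :=
    fun i s hs δ hδ => Finset.mem_union_right _ (Finset.mul_mem_mul hs hδ)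
  -- distinct points fact
  have hpts : ∀ (i j : Fin m) (k : Γ), (i ≠ j ∨ k ≠ 1) → a k (p i) ≠ p j := by
    intro i j k hk
    by_cases hij : i = j
    · subst hij
      rcases hk with hcc | hcc
      · exact absurd rfl hcc
      · exact fun hcon => hcc (ha_free k (p i) hcon)
    · exact hporb i j hij k
  -- separating opens
  have hsep : ∀ (i j : Fin m) (k : Γ), ∃ V V' : Set C, IsOpen V ∧ IsOpen V' ∧
      a k (p i) ∈ V ∧ p j ∈ V' ∧ ((i ≠ j ∨ k ≠ 1) → ∀ z ∈ V, z ∉ V') := by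
    intro i j k
    by_cases hc : i ≠ j ∨ k ≠ 1
    · obtain ⟨Vx, Vy, hVx, hVy, hmx, hmy, hd⟩ := t2_separation (hpts i j k hc)
      exact ⟨Vx, Vy, hVx, hVy, hmx, hmy,
        fun _ z hz hz' => Set.disjoint_left.mp hd hz hz'⟩
    · exact ⟨Set.univ, Set.univ, isOpen_univ, isOpen_univ, trivial, trivial,
        fun hcc => absurd hcc hc⟩
  choose V V' hVo hV'o hVm hV'm hVd using hsep
  set O : Fin m → Set C := fun i =>
    ⋂ (j : Fin m), ⋂ (k : ↥Egrp), ((a k.1) ⁻¹' (V i j k.1) ∩ V' j i k.1) with hO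
  have hOopen : ∀ i, IsOpen (O i) := fun i =>
    isOpen_iInter_of_finite fun j => isOpen_iInter_of_finite fun k =>
      ((hVo i j k.1).preimage (ha_cont k.1)).inter (hV'o j i k.1)
  have hOm : ∀ i, p i ∈ O i := by
    intro i
    refine Set.mem_iInter.mpr fun j => Set.mem_iInter.mpr fun k => ⟨?_, hV'm j i k.1⟩
    exact Set.mem_preimage.mpr (hVm i j k.1)
  have hUex : ∀ i, ∃ U : Set C, IsClopen U ∧ p i ∈ U ∧ U ⊆ O i :=
    fun i => hclopennbhd _ _ (hOopen i) (hOm i)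
  choose U hUclop hUm hUsub using hUex
  -- key disjointness of translated regions
  have hdisjR : ∀ (i j : Fin m) (g g' : Γ), g ∈ T i → g' ∈ T j → (i ≠ j ∨ g ≠ g') →
      ∀ x, a g x ∈ U i → a g' x ∉ U j := by
    intro i j g g' hg hg' hne x hxg hxg'
    have hk : g' * g⁻¹ ∈ Egrp :=
      Finset.mul_mem_mul (hTG0 j g' hg') (Finset.inv_mem_inv (hTG0 i g hg))
    have hcond : i ≠ j ∨ g' * g⁻¹ ≠ 1 := by
      rcases hne with hcc | hcc
      · exact Or.inl hcc
      · right
        intro h1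
        exact hcc (mul_inv_eq_one.mp h1).symm
    have hrew : a g' x = a (g' * g⁻¹) (a g x) := by
      rw [← ha_mul, inv_mul_cancel_right]
    have h1 : a (g' * g⁻¹) (a g x) ∈ V i j (g' * g⁻¹) := by
      have h0 := hUsub i hxg
      have h0' := Set.mem_iInter.mp (Set.mem_iInter.mp h0 j) ⟨g' * g⁻¹, hk⟩
      exact h0'.1
    have h2 : a g' x ∈ V' i j (g' * g⁻¹) := by
      have h0 := hUsub j hxg'
      have h0' := Set.mem_iInter.mp (Set.mem_iInter.mp h0 i) ⟨g' * g⁻¹, hk⟩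
      exact h0'.2
    rw [← hrew] at h1
    exact hVd i j (g' * g⁻¹) hcond _ h1 h2
  -- regions
  set R : Fin m → Γ → Set C := fun i g => (a g) ⁻¹' (U i) with hR
  have hRclop : ∀ i g, IsClopen (R i g) := fun i g => (hUclop i).preimage (ha_cont g)
  -- constant pieces
  set FF : Finset (Fin m × Γ) := Finset.univ.biUnion (fun i => (S i).image (fun s => (i, s)))
    with hFF
  have hFFmem : ∀ q : Fin m × Γ, q ∈ FF ↔ q.2 ∈ S q.1 := by
    intro q
    simp only [hFF, Finset.mem_biUnion, Finset.mem_univ, true_and, Finset.mem_image]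
    constructor
    · rintro ⟨i, s, hs, rfl⟩; exact hs
    · intro hq; exact ⟨q.1, q.2, hq, rfl⟩
  set Qc : Fin m × Γ → Set C := fun q => R q.1 q.2 with hQcdef
  set colc : Fin m × Γ → Fin (W.card + 1) := fun q => (b q.1).1 q.2 with hcolc
  have hQcl : ∀ q ∈ FF, IsClopen (Qc q) := fun q _ => hRclop q.1 q.2
  have hdisjQ : ∀ q ∈ FF, ∀ q' ∈ FF, q ≠ q' → ∀ x, x ∈ Qc q → x ∉ Qc q' := by
    intro q hq q' hq' hne x hxq
    have h1 : a q.2 x ∈ U q.1 := hxq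
    exact hdisjR q.1 q'.1 q.2 q'.2 (hST _ _ ((hFFmem q).mp hq))
      (hST _ _ ((hFFmem q').mp hq'))
      (by by_cases hc1 : q.1 = q'.1
          · exact Or.inr (fun hc2 => hne (Prod.ext hc1 hc2))
          · exact Or.inl hc1)
      x h1
  have hcompat : ∀ q ∈ FF, ∀ q' ∈ FF, ∀ x ∈ Qc q, ∀ δ ∈ W, δ ≠ 1 →
      a δ x ∈ Qc q' → colc q ≠ colc q' := by
    intro q hq q' hq' x hxq δ hδ hδ1 haxq'
    obtain ⟨i, s⟩ := q
    obtain ⟨j, t⟩ := q'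
    have hs : s ∈ S i := (hFFmem _).mp hq
    have ht : t ∈ S j := (hFFmem _).mp hq'
    have hkey : a (s * δ⁻¹) (a δ x) ∈ U i := by
      have : a (s * δ⁻¹) (a δ x) = a s x := by
        rw [← ha_mul, inv_mul_cancel_right]
      rw [this]; exact hxq
    have haxt : a t (a δ x) ∈ U j := haxq'
    have heq : i = j ∧ s * δ⁻¹ = t := by
      by_contra hcc
      have hcond : i ≠ j ∨ s * δ⁻¹ ≠ t := by
        by_cases h1 : i = j
        · exact Or.inr (fun h2 => hcc ⟨h1, h2⟩)
        · exact Or.inl h1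
      exact hdisjR i j (s * δ⁻¹) t (hSWT i s hs δ⁻¹ (hW δ hδ)) (hST j t ht) hcond
        (a δ x) hkey haxt
    obtain ⟨rfl, rfl⟩ := heq
    have hprop := (b i).2 (s * δ⁻¹) δ hδ hδ1
    rw [inv_mul_cancel_right] at hprop
    exact fun hcc => hprop (by simpa [hcolc] using hcc.symm)
  obtain ⟨c₁, hc₁cont, hc₁val, hc₁prop⟩ := engineC a W Qc colc FF hQcl hdisjQ hcompat
  set D₁ : Set C := ⋃ q ∈ (FF : Set (Fin m × Γ)), Qc q with hD₁def
  have hD₁ : IsClopen D₁ := by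
    apply Set.Finite.isClopen_biUnion FF.finite_toSet
    intro q hq; exact hQcl q hq
  -- independent clopen cover
  have hcov : ∀ x : C, ∃ Ux : Set C, IsClopen Ux ∧ x ∈ Ux ∧
      ∀ δ ∈ W, δ ≠ 1 → ∀ y ∈ Ux, a δ y ∉ Ux := by
    intro x
    have hsep2 : ∀ δ : ↥(W.erase 1), ∃ V1 V2 : Set C, IsOpen V1 ∧ IsOpen V2 ∧
        x ∈ V1 ∧ a δ.1 x ∈ V2 ∧ ∀ z ∈ V1, z ∉ V2 := by
      intro δ
      have hne : a δ.1 x ≠ x := fun hcc => (Finset.mem_erase.mp δ.2).1 (ha_free _ _ hcc)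
      obtain ⟨V2, V1, hV2, hV1, hm2, hm1, hd⟩ := t2_separation hne
      exact ⟨V1, V2, hV1, hV2, hm1, hm2, fun z hz hz2 => Set.disjoint_left.mp hd hz2 hz⟩
    choose V1 V2 h1o h2o hm1 hm2 hdd using hsep2
    have hOop : IsOpen (⋂ δ : ↥(W.erase 1), (V1 δ ∩ (a δ.1) ⁻¹' (V2 δ))) :=
      isOpen_iInter_of_finite fun δ => (h1o δ).inter ((h2o δ).preimage (ha_cont _))
    have hxO : x ∈ ⋂ δ : ↥(W.erase 1), (V1 δ ∩ (a δ.1) ⁻¹' (V2 δ)) :=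
      Set.mem_iInter.mpr fun δ => ⟨hm1 δ, hm2 δ⟩
    obtain ⟨Ux, hUx, hxU, hUsub'⟩ := hclopennbhd x _ hOop hxO
    refine ⟨Ux, hUx, hxU, ?_⟩
    intro δ hδ hδ1 y hy hay
    have hyO := hUsub' hy
    have hayO := hUsub' hay
    set δ' : ↥(W.erase 1) := ⟨δ, Finset.mem_erase.mpr ⟨hδ1, hδ⟩⟩
    have hyV1 : y ∈ V1 δ' := (Set.mem_iInter.mp hyO δ').1
    have hayV2 : a δ y ∈ V2 δ' := (Set.mem_iInter.mp hyO δ').2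
    have hayV1 : a δ y ∈ V1 δ' := (Set.mem_iInter.mp hayO δ').1
    exact hdd δ' _ hayV1 hayV2
  choose Ucov hUcov1 hUcov2 hUcov3 using hcov
  obtain ⟨tc, htc⟩ := isCompact_univ.elim_finite_subcover Ucov
    (fun x => (hUcov1 x).isOpen) (fun y _ => Set.mem_iUnion.mpr ⟨y, hUcov2 y⟩)
  obtain ⟨c₂, hc₂cont, hc₂eq, hc₂prop⟩ := engineG a W ha_one ha_mul ha_cont hW Ucov tc
    (fun x _ => hUcov1 x) (fun x _ => hUcov3 x) D₁ c₁ hD₁ hc₁cont hc₁prop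
  have hfull : ∀ x : C, x ∈ D₁ ∪ ⋃ x' ∈ (tc : Set C), Ucov x' :=
    fun x => Or.inr (htc (Set.mem_univ x))
  have hprop : ∀ x, ∀ δ ∈ W, δ ≠ 1 → c₂ x ≠ c₂ (a δ x) :=
    fun x δ hδ hδ1 => hc₂prop x (hfull x) δ hδ hδ1 (hfull _)
  -- the factor map
  have hFmem : ∀ x : C, (fun γ : Γ => c₂ (a γ⁻¹ x)) ∈ properColorings (Γ := Γ) W := by
    intro x γ δ hδ hδ1
    have hrw : a (γ * δ)⁻¹ x = a δ⁻¹ (a γ⁻¹ x) := by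
      rw [← ha_mul, mul_inv_rev]
    simp only [hrw]
    exact hprop _ δ⁻¹ (hW δ hδ) (fun hcc => hδ1 (inv_eq_one.mp hcc))
  refine ⟨fun x => ⟨fun γ => c₂ (a γ⁻¹ x), hFmem x⟩, ?_, ?_, ?_⟩
  · exact Continuous.subtype_mk
      (continuous_pi fun γ => hc₂cont.comp (ha_cont γ⁻¹)) _
  · intro γ x
    apply Subtype.ext
    funext δ
    show c₂ (a δ⁻¹ (a γ x)) = c₂ (a (γ⁻¹ * δ)⁻¹ x)
    rw [← ha_mul, mul_inv_rev, inv_inv]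
  · intro i
    refine ⟨⟨fun γ => c₂ (a γ⁻¹ (p i)), hFmem (p i)⟩, ⟨p i, hpA i, rfl⟩, ?_⟩
    apply hcyl i
    intro s hs
    show c₂ (a s⁻¹ (p i)) = (b i).1 s
    have hmem : a s⁻¹ (p i) ∈ Qc (i, s) := by
      show a s (a s⁻¹ (p i)) ∈ U i
      rw [hact2]
      exact hUm i
    have hFFi : (i, s) ∈ FF := (hFFmem (i, s)).mpr hs
    have hD : a s⁻¹ (p i) ∈ D₁ := Set.mem_biUnion hFFi hmem
    rw [hc₂eq _ hD, hc₁val (i, s) hFFi _ hmem]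
end

section
/- Let b_⊥ be the product flow, over all finite symmetric subsets W ⊆ ℤ², of the shift actions b_W on the spaces C_W of proper colorings (for the group ℤ²). Suppose A is a finite set, X ⊆ A^{ℤ²} is a shift of finite type, and there is a continuous ℤ²-equivariant map from b_⊥ into X. Then there exist M, N ∈ ℕ such that for all m > M and n > N, there is a ℤ²-equivariant map from the translation action c_{m,n} of ℤ² on ℤ²/(mℤ × nℤ) into X. -/
/-- The left shift action of `ℤ²` on `A^{ℤ²}` (additive notation): `(γ·x)(δ) = x(δ − γ)`. -/
def shift2 {A : Type*} (γ : ℤ × ℤ) (x : ℤ × ℤ → A) : ℤ × ℤ → A :=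
  fun δ => x (δ - γ)

/-- A shift of finite type in `A^{ℤ²}`: a nonempty subset cut out by a set of allowed
patterns on a finite window. -/
def IsSFT2 {A : Type*} (Y : Set (ℤ × ℤ → A)) : Prop :=
  Y.Nonempty ∧ ∃ (W : Finset (ℤ × ℤ)) (P : Set ({δ // δ ∈ W} → A)),
    Y = {x | ∀ γ : ℤ × ℤ, (fun w : {δ // δ ∈ W} => shift2 γ x w.1) ∈ P}

/-- Proper `(|W|+1)`-colorings of the Cayley graph of `ℤ²` with respect to `W`. -/
def properColorings2 (W : Finset (ℤ × ℤ)) : Set (ℤ × ℤ → Fin (W.card + 1)) :=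
  {x | ∀ γ : ℤ × ℤ, ∀ δ ∈ W, δ ≠ 0 → x γ ≠ x (γ + δ)}

/-- Finite symmetric subsets of `ℤ²`. -/
def SymFinset2 : Type := {W : Finset (ℤ × ℤ) // ∀ δ ∈ W, -δ ∈ W}

/-- The underlying space of `b_⊥` for `ℤ²`. -/
abbrev bBotSpace2 : Type := ∀ W : SymFinset2, ↥(properColorings2 W.1)

/-- The flow `b_⊥ = ∏_W b_W` for `ℤ²`. -/
def bBotAct2 : ℤ × ℤ → bBotSpace2 → bBotSpace2 :=
  fun γ x W => ⟨shift2 γ (x W).1, by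
    intro α δ hδ h0
    have h := (x W).2 (α - γ) δ hδ h0
    simpa [shift2, sub_add_eq_add_sub] using h⟩

/-- The translation action `c_{m,n}` of `ℤ²` on the finite torus `ℤ²/(mℤ × nℤ)`. -/
def torusAct (m n : ℕ) : ℤ × ℤ → ZMod m × ZMod n → ZMod m × ZMod n :=
  fun γ v => (v.1 + (γ.1 : ZMod m), v.2 + (γ.2 : ZMod n))

/-- Greedy coloring: a finite graph with neighbourhoods of size at most `d` is
`(d+1)`-colorable. -/
lemma greedy_coloring {V : Type*} [Fintype V] [DecidableEq V] (d : ℕ)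
    (G : V → Finset V)
    (hsym : ∀ u v, u ∈ G v → v ∈ G u)
    (hcard : ∀ v, (G v).card ≤ d) :
    ∃ c : V → Fin (d + 1), ∀ v, ∀ u ∈ G v, u ≠ v → c u ≠ c v := by
  classical
  set n := Fintype.card V with hn
  set e := Fintype.equivFin V with he
  have key : ∀ k : ℕ, ∃ c : V → Fin (d + 1),
      ∀ v, (e v : ℕ) < k → ∀ u ∈ G v, u ≠ v → (e u : ℕ) < k → c u ≠ c v := by
    intro k
    induction k with
    | zero => exact ⟨fun _ => 0, by omega⟩
    | succ k ih =>
      obtain ⟨c, hc⟩ := ih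
      by_cases hk : k < n
      · set w := e.symm ⟨k, hk⟩ with hw
        have hew : (e w : ℕ) = k := by simp [hw]
        set S := ((G w).filter (fun u => (e u : ℕ) < k)).image c with hS
        have hScard : S.card ≤ d := le_trans (Finset.card_image_le.trans
          (Finset.card_filter_le _ _)) (hcard w)
        have : ∃ a : Fin (d+1), a ∉ S := by
          by_contra h
          push_neg at h
          have : (Finset.univ : Finset (Fin (d+1))) ⊆ S := fun a _ => h a
          have := Finset.card_le_card this
          simp at this
          omega
        obtain ⟨a, ha⟩ := this
        refine ⟨Function.update c w a, ?_⟩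
        intro v hv u hu hne heu
        by_cases hvw : v = w
        · have hunew : u ≠ w := fun h => hne (h.trans hvw.symm)
          have heuk : (e u : ℕ) < k := by
            rcases Nat.lt_succ_iff_lt_or_eq.mp heu with h | h
            · exact h
            · exfalso; exact hunew (e.injective (Fin.ext (by rw [h, hew])))
          have hcu : c u ∈ S := Finset.mem_image_of_mem c
            (Finset.mem_filter.mpr ⟨hvw ▸ hu, heuk⟩)
          rw [hvw, Function.update_self, Function.update_of_ne hunew]
          intro hcontra; rw [hcontra] at hcu; exact ha hcu
        · by_cases huw : u = w
          · have hvk : (e v : ℕ) < k := by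
              rcases Nat.lt_succ_iff_lt_or_eq.mp hv with h | h
              · exact h
              · exfalso; exact hvw (e.injective (Fin.ext (by rw [h, hew])))
            have hvG : v ∈ G w := huw ▸ hsym u v hu
            have hcv : c v ∈ S := Finset.mem_image_of_mem c
              (Finset.mem_filter.mpr ⟨hvG, hvk⟩)
            rw [huw, Function.update_self, Function.update_of_ne hvw]
            intro hcontra; rw [← hcontra] at hcv; exact ha hcv
          · have hvk : (e v : ℕ) < k := by
              rcases Nat.lt_succ_iff_lt_or_eq.mp hv with h | h
              · exact h
              · exfalso; exact hvw (e.injective (Fin.ext (by rw [h, hew])))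
            have huk : (e u : ℕ) < k := by
              rcases Nat.lt_succ_iff_lt_or_eq.mp heu with h | h
              · exact h
              · exfalso; exact huw (e.injective (Fin.ext (by rw [h, hew])))
            rw [Function.update_of_ne huw, Function.update_of_ne hvw]
            exact hc v hvk u hu hne huk
      · refine ⟨c, ?_⟩
        intro v hv u hu hne heu
        exact hc v (lt_of_lt_of_le (e v).isLt (by omega)) u hu hne
          (lt_of_lt_of_le (e u).isLt (by omega))
  obtain ⟨c, hc⟩ := key n
  exact ⟨c, fun v u hu hne => hc v (e v).isLt u hu hne (e u).isLt⟩

/-- For any finite symmetric `W` and moduli `m, n` such that no nonzero element of `W`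
vanishes mod `(m, n)`, there is a proper coloring that factors through `ℤ²/(mℤ × nℤ)`. -/
lemma exists_periodic_coloring (W : Finset (ℤ × ℤ)) (hW : ∀ δ ∈ W, -δ ∈ W)
    (m n : ℕ) [NeZero m] [NeZero n]
    (hmn : ∀ δ ∈ W, δ ≠ 0 → ¬(((δ.1 : ZMod m) = 0) ∧ ((δ.2 : ZMod n) = 0))) :
    ∃ x ∈ properColorings2 W, ∀ γ γ' : ℤ × ℤ,
      (γ.1 : ZMod m) = (γ'.1 : ZMod m) → (γ.2 : ZMod n) = (γ'.2 : ZMod n) → x γ = x γ' := by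
  classical
  set ι : ℤ × ℤ → ZMod m × ZMod n := fun γ => ((γ.1 : ZMod m), (γ.2 : ZMod n)) with hι
  have hadd : ∀ γ δ : ℤ × ℤ, ι (γ + δ) = ι γ + ι δ := by
    intro γ δ; simp [hι, Prod.ext_iff]
  have hneg : ∀ δ : ℤ × ℤ, ι (-δ) = -ι δ := by
    intro δ; simp [hι, Prod.ext_iff]
  set G : ZMod m × ZMod n → Finset (ZMod m × ZMod n) :=
    fun v => (W.image (fun δ => v + ι δ)).erase v with hG
  have hsym : ∀ u v, u ∈ G v → v ∈ G u := by
    intro u v hu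
    rw [hG, Finset.mem_erase, Finset.mem_image] at hu ⊢
    obtain ⟨hne, δ, hδ, hδ2⟩ := hu
    exact ⟨hne.symm, -δ, hW δ hδ, by rw [hneg, ← hδ2]; abel⟩
  have hcard : ∀ v, (G v).card ≤ W.card :=
    fun v => le_trans (Finset.card_erase_le) Finset.card_image_le
  obtain ⟨c, hc⟩ := greedy_coloring W.card G hsym hcard
  refine ⟨fun γ => c (ι γ), ?_, ?_⟩
  · intro γ δ hδ hδ0
    have hιδ : ι δ ≠ 0 := by
      intro h
      exact hmn δ hδ hδ0 ⟨congrArg Prod.fst h, congrArg Prod.snd h⟩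
    have hmem : ι (γ + δ) ∈ G (ι γ) := by
      rw [hG, Finset.mem_erase, Finset.mem_image]
      refine ⟨?_, δ, hδ, (hadd γ δ).symm⟩
      rw [hadd]; intro h; exact hιδ (by simpa using h)
    have hne : ι (γ + δ) ≠ ι γ := (Finset.mem_erase.mp hmem).1
    exact (hc (ι γ) (ι (γ + δ)) hmem hne).symm
  · intro γ γ' h1 h2
    have : ι γ = ι γ' := Prod.ext h1 h2
    simp only []; rw [this]

/-- Every space of proper colorings is nonempty. -/
lemma properColorings2_nonempty (W : Finset (ℤ × ℤ)) (hW : ∀ δ ∈ W, -δ ∈ W) :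
    ∃ x, x ∈ properColorings2 W := by
  classical
  set B := W.sup (fun δ => δ.1.natAbs ⊔ δ.2.natAbs) with hB
  haveI : NeZero (B + 1) := ⟨Nat.succ_ne_zero B⟩
  have hcond : ∀ δ ∈ W, δ ≠ 0 → ¬(((δ.1 : ZMod (B+1)) = 0) ∧ ((δ.2 : ZMod (B+1)) = 0)) := by
    rintro δ hδ hδ0 ⟨h1, h2⟩
    have hb : δ.1.natAbs ⊔ δ.2.natAbs ≤ B := hB ▸ Finset.le_sup (f := fun δ : ℤ × ℤ => δ.1.natAbs ⊔ δ.2.natAbs) hδ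
    have d1 : ((B + 1 : ℕ) : ℤ) ∣ δ.1 := (ZMod.intCast_zmod_eq_zero_iff_dvd δ.1 (B + 1)).mp h1
    have d2 : ((B + 1 : ℕ) : ℤ) ∣ δ.2 := (ZMod.intCast_zmod_eq_zero_iff_dvd δ.2 (B + 1)).mp h2
    have d1' : (B + 1) ∣ δ.1.natAbs := Int.natCast_dvd_natCast.mp (by
      simpa [Int.dvd_natAbs] using d1)
    have d2' : (B + 1) ∣ δ.2.natAbs := Int.natCast_dvd_natCast.mp (by
      simpa [Int.dvd_natAbs] using d2)
    have e1 : δ.1.natAbs = 0 := by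
      rcases Nat.eq_zero_or_pos δ.1.natAbs with h | h
      · exact h
      · exact absurd (Nat.le_of_dvd h d1') (by omega)
    have e2 : δ.2.natAbs = 0 := by
      rcases Nat.eq_zero_or_pos δ.2.natAbs with h | h
      · exact h
      · exact absurd (Nat.le_of_dvd h d2') (by omega)
    exact hδ0 (Prod.ext (Int.natAbs_eq_zero.mp e1) (Int.natAbs_eq_zero.mp e2))
  obtain ⟨x, hx, -⟩ := exists_periodic_coloring W hW (B + 1) (B + 1) hcond
  exact ⟨x, hx⟩

/-- Each `properColorings2 W` is a compact space. -/
instance instCompactPC (W : SymFinset2) : CompactSpace ↥(properColorings2 W.1) := by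
  rw [← isCompact_iff_compactSpace]
  apply IsClosed.isCompact
  have : properColorings2 W.1 = ⋂ (γ : ℤ × ℤ), ⋂ (δ : ℤ × ℤ), ⋂ (_ : δ ∈ W.1),
      ⋂ (_ : δ ≠ 0), {x : ℤ × ℤ → Fin (W.1.card + 1) | x γ ≠ x (γ + δ)} := by
    ext x; simp [properColorings2]
  rw [this]
  refine isClosed_iInter fun γ => isClosed_iInter fun δ => isClosed_iInter fun _ =>
    isClosed_iInter fun _ => ?_
  have : {x : ℤ × ℤ → Fin (W.1.card + 1) | x γ ≠ x (γ + δ)} =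
      (fun x : ℤ × ℤ → Fin (W.1.card + 1) => (x γ, x (γ + δ))) ⁻¹' {p | p.1 = p.2}ᶜ := rfl
  rw [this]
  exact (IsOpen.isClosed_compl (isOpen_discrete _)).preimage
    ((continuous_apply γ).prodMk (continuous_apply (γ + δ)))

/-- If `b_⊥` (for `ℤ²`) admits a continuous equivariant map into a shift of finite type `X`,
then all sufficiently large finite tori admit equivariant maps into `X`. -/
theorem stmt14 {A : Type} [Finite A] [TopologicalSpace A] [DiscreteTopology A]
    (X : Set (ℤ × ℤ → A)) (hX : IsSFT2 X)
    (g : bBotSpace2 → (ℤ × ℤ → A)) (hg_cont : Continuous g)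
    (hg_mem : ∀ y, g y ∈ X)
    (hg_equi : ∀ (γ : ℤ × ℤ) (y : bBotSpace2), g (bBotAct2 γ y) = shift2 γ (g y)) :
    ∃ M N : ℕ, ∀ m > M, ∀ n > N,
      ∃ f : ZMod m × ZMod n → (ℤ × ℤ → A),
        (∀ v, f v ∈ X) ∧
        ∀ (γ : ℤ × ℤ) (v : ZMod m × ZMod n), f (torusAct m n γ v) = shift2 γ (f v) := by
  classical
  -- Step 1: a finite set of coordinates determining `g · 0`.
  have hdep : ∃ D : Finset SymFinset2, ∀ y y' : bBotSpace2,
      (∀ W ∈ D, y W = y' W) → g y 0 = g y' 0 := by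
    have hcont0 : Continuous (fun y : bBotSpace2 => g y 0) :=
      (continuous_apply (0 : ℤ × ℤ)).comp hg_cont
    have hopen : ∀ y : bBotSpace2, IsOpen {y' : bBotSpace2 | g y' 0 = g y 0} := by
      intro y
      exact (isOpen_discrete ({g y 0} : Set A)).preimage hcont0
    have hbasic : ∀ y : bBotSpace2, ∃ (I : Finset SymFinset2)
        (u : ∀ W : SymFinset2, Set ↥(properColorings2 W.1)),
        (∀ W ∈ I, IsOpen (u W) ∧ y W ∈ u W) ∧
        (I : Set SymFinset2).pi u ⊆ {y' : bBotSpace2 | g y' 0 = g y 0} :=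
      fun y => isOpen_pi_iff.mp (hopen y) y rfl
    choose I u hu hsub using hbasic
    have hcover : (Set.univ : Set bBotSpace2) ⊆
        ⋃ y : bBotSpace2, (I y : Set SymFinset2).pi (u y) := by
      intro y _
      exact Set.mem_iUnion.mpr ⟨y, fun W hW => (hu y W hW).2⟩
    obtain ⟨T, hT⟩ := isCompact_univ.elim_finite_subcover
      (fun y : bBotSpace2 => (I y : Set SymFinset2).pi (u y))
      (fun y => isOpen_set_pi (I y).finite_toSet (fun W hW => (hu y W hW).1)) hcover
    refine ⟨T.biUnion I, ?_⟩
    intro y y' h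
    obtain ⟨z, hz, hyz⟩ := Set.mem_iUnion₂.mp (hT (Set.mem_univ y))
    have hy'z : y' ∈ (I z : Set SymFinset2).pi (u z) := by
      intro W hW
      rw [← h W (Finset.mem_biUnion.mpr ⟨z, hz, hW⟩)]
      exact hyz W hW
    have e1 : g y 0 = g z 0 := hsub z hyz
    have e2 : g y' 0 = g z 0 := hsub z hy'z
    rw [e1, e2]
  obtain ⟨D, hD⟩ := hdep
  -- Step 2: agreement on `D` implies equal image under `g`.
  have hdep' : ∀ y y' : bBotSpace2, (∀ W ∈ D, y W = y' W) → g y = g y' := by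
    intro y y' h
    funext δ
    have e1 : g (bBotAct2 (-δ) y) 0 = g y δ := by
      rw [hg_equi]; simp [shift2]
    have e2 : g (bBotAct2 (-δ) y') 0 = g y' δ := by
      rw [hg_equi]; simp [shift2]
    rw [← e1, ← e2]
    apply hD
    intro W hW
    apply Subtype.ext
    exact congrArg (shift2 (-δ)) (congrArg Subtype.val (h W hW))
  -- Step 3: the bound.
  set B := D.sup (fun W => W.1.sup (fun δ : ℤ × ℤ => δ.1.natAbs ⊔ δ.2.natAbs)) with hB
  refine ⟨B, B, ?_⟩
  intro m hm n hn
  haveI : NeZero m := ⟨by omega⟩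
  haveI : NeZero n := ⟨by omega⟩
  -- Step 4: choose the base point `y₀`.
  have hchoice : ∀ W : SymFinset2, ∃ x, x ∈ properColorings2 W.1 ∧ (W ∈ D →
      ∀ γ γ' : ℤ × ℤ, (γ.1 : ZMod m) = (γ'.1 : ZMod m) →
        (γ.2 : ZMod n) = (γ'.2 : ZMod n) → x γ = x γ') := by
    intro W
    by_cases hW : W ∈ D
    · have hcond : ∀ δ ∈ W.1, δ ≠ 0 →
          ¬(((δ.1 : ZMod m) = 0) ∧ ((δ.2 : ZMod n) = 0)) := by
        rintro δ hδ hδ0 ⟨h1, h2⟩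
        have hb : δ.1.natAbs ⊔ δ.2.natAbs ≤ B := by
          calc δ.1.natAbs ⊔ δ.2.natAbs
              ≤ W.1.sup (fun δ : ℤ × ℤ => δ.1.natAbs ⊔ δ.2.natAbs) :=
                Finset.le_sup (f := fun δ : ℤ × ℤ => δ.1.natAbs ⊔ δ.2.natAbs) hδ
            _ ≤ B := hB ▸ Finset.le_sup
                (f := fun W : SymFinset2 => W.1.sup
                  (fun δ : ℤ × ℤ => δ.1.natAbs ⊔ δ.2.natAbs)) hW
        have d1 : ((m : ℕ) : ℤ) ∣ δ.1 := (ZMod.intCast_zmod_eq_zero_iff_dvd δ.1 m).mp h1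
        have d2 : ((n : ℕ) : ℤ) ∣ δ.2 := (ZMod.intCast_zmod_eq_zero_iff_dvd δ.2 n).mp h2
        have d1' : m ∣ δ.1.natAbs := Int.natCast_dvd_natCast.mp (by
          simpa [Int.dvd_natAbs] using d1)
        have d2' : n ∣ δ.2.natAbs := Int.natCast_dvd_natCast.mp (by
          simpa [Int.dvd_natAbs] using d2)
        have e1 : δ.1.natAbs = 0 := by
          rcases Nat.eq_zero_or_pos δ.1.natAbs with h | h
          · exact h
          · exact absurd (Nat.le_of_dvd h d1') (by omega)
        have e2 : δ.2.natAbs = 0 := by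
          rcases Nat.eq_zero_or_pos δ.2.natAbs with h | h
          · exact h
          · exact absurd (Nat.le_of_dvd h d2') (by omega)
        exact hδ0 (Prod.ext (Int.natAbs_eq_zero.mp e1) (Int.natAbs_eq_zero.mp e2))
      obtain ⟨x, hx, hp⟩ := exists_periodic_coloring W.1 W.2 m n hcond
      exact ⟨x, hx, fun _ => hp⟩
    · obtain ⟨x, hx⟩ := properColorings2_nonempty W.1 W.2
      exact ⟨x, hx, fun h => absurd h hW⟩
  choose x0 hx0 hx0per using hchoice
  set y₀ : bBotSpace2 := fun W => ⟨x0 W, hx0 W⟩ with hy₀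
  set lift : ZMod m × ZMod n → ℤ × ℤ := fun v => ((v.1.val : ℤ), (v.2.val : ℤ)) with hlift
  refine ⟨fun v => g (bBotAct2 (lift v) y₀), fun v => hg_mem _, ?_⟩
  intro γ v
  rw [← hg_equi]
  have hact : ∀ (a b : ℤ × ℤ) (y : bBotSpace2),
      bBotAct2 a (bBotAct2 b y) = bBotAct2 (a + b) y := by
    intro a b y
    funext W
    apply Subtype.ext
    funext δ
    show (y W).1 (δ - a - b) = (y W).1 (δ - (a + b))
    rw [sub_sub]
  rw [hact]
  apply hdep'
  intro W hW
  apply Subtype.ext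
  funext δ
  show x0 W (δ - lift (torusAct m n γ v)) = x0 W (δ - (γ + lift v))
  apply hx0per W hW
  · show ((δ.1 - ((v.1 + (γ.1 : ZMod m)).val : ℤ) : ℤ) : ZMod m)
        = ((δ.1 - (γ.1 + (v.1.val : ℤ)) : ℤ) : ZMod m)
    push_cast [ZMod.natCast_val, ZMod.cast_id]
    ring
  · show ((δ.2 - ((v.2 + (γ.2 : ZMod n)).val : ℤ) : ℤ) : ZMod n)
        = ((δ.2 - (γ.2 + (v.2.val : ℤ)) : ℤ) : ZMod n)
    push_cast [ZMod.natCast_val, ZMod.cast_id]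
    ring
end
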